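/- arXiv:2602.04869 — 12 statements merged into one kernel-verified Lean document; each statement's English description precedes it below -/
import Mathlib

section
/- Let X1, X2, Xb be mutually independent nonnegative real-valued random variables on a probability space, with X1 and X2 identically distributed. Fix reals v ≥ 0 and t' ≥ 0, and define D := 2·Xb − X1 − X2 if Xb ≥ max{X1, X2}, and D := Xmax − Xmin otherwise. Then E[e^{−v·D}·1_S] = 2·(E[e^{−v(X1−X2)}·1_{A_{12}^+}] + E[e^{−v(X1−Xb)}·1_{A_{1b}^+}] − E[e^{−v(X1−X2)}·1_{A_{12}^+ ∩ A_{1b}^+}]) + E[e^{−v(2Xb−X1−X2)}·1_{A_b^+}] − E[e^{−v(X1−Xb)}·1_{A_1^+ ∩ A_2^+}] − 2·E[e^{−v(X1−X2)}·1_{A_1^+ ∩ A_b^+}] + P(A_1^+ ∩ A_2^+ ∩ A_b^+). -/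
open MeasureTheory ProbabilityTheory

open scoped Classical in
/-- Pointwise indicator identity underlying Statement 3. -/
lemma key_ind {Ω : Type*} (X1 X2 Xb : Ω → ℝ) (v t' : ℝ)
    (Xmax Xmin : Ω → ℝ)
    (hXmax : Xmax = fun ω => max (max (X1 ω) (X2 ω)) (Xb ω))
    (hXmin : Xmin = fun ω => min (min (X1 ω) (X2 ω)) (Xb ω))
    (D : Ω → ℝ)
    (hD : D = fun ω => if max (X1 ω) (X2 ω) ≤ Xb ω then 2 * Xb ω - X1 ω - X2 ω
      else Xmax ω - Xmin ω)
    (S A1p A2p Abp A12p A1bp A21p A2bp : Set Ω)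
    (hS : S = {ω | Xmax ω - Xmin ω ≤ t'})
    (hA1p : A1p = {ω | X1 ω = Xmax ω} ∩ S)
    (hA2p : A2p = {ω | X2 ω = Xmax ω} ∩ S)
    (hAbp : Abp = {ω | Xb ω = Xmax ω} ∩ S)
    (hA12p : A12p = {ω | X1 ω = Xmax ω} ∩ {ω | X2 ω = Xmin ω} ∩ S)
    (hA1bp : A1bp = {ω | X1 ω = Xmax ω} ∩ {ω | Xb ω = Xmin ω} ∩ S)
    (hA21p : A21p = {ω | X2 ω = Xmax ω} ∩ {ω | X1 ω = Xmin ω} ∩ S)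
    (hA2bp : A2bp = {ω | X2 ω = Xmax ω} ∩ {ω | Xb ω = Xmin ω} ∩ S)
    (ω : Ω) :
    S.indicator (fun ω => Real.exp (-(v * D ω))) ω
      = A12p.indicator (fun ω => Real.exp (-(v * (X1 ω - X2 ω)))) ω
      + A21p.indicator (fun ω => Real.exp (-(v * (X2 ω - X1 ω)))) ω
      + A1bp.indicator (fun ω => Real.exp (-(v * (X1 ω - Xb ω)))) ω
      + A2bp.indicator (fun ω => Real.exp (-(v * (X2 ω - Xb ω)))) ω
      - (A12p ∩ A1bp).indicator (fun ω => Real.exp (-(v * (X1 ω - X2 ω)))) ω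
      - (A21p ∩ A2bp).indicator (fun ω => Real.exp (-(v * (X2 ω - X1 ω)))) ω
      + Abp.indicator (fun ω => Real.exp (-(v * (2 * Xb ω - X1 ω - X2 ω)))) ω
      - (A1p ∩ A2p).indicator (fun ω => Real.exp (-(v * (X1 ω - Xb ω)))) ω
      - (A1p ∩ Abp).indicator (fun ω => Real.exp (-(v * (X1 ω - X2 ω)))) ω
      - (A2p ∩ Abp).indicator (fun ω => Real.exp (-(v * (X2 ω - X1 ω)))) ω
      + (A1p ∩ A2p ∩ Abp).indicator (fun _ => (1:ℝ)) ω := by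
  subst hXmax hXmin hD hS hA1p hA2p hAbp hA12p hA1bp hA21p hA2bp
  simp only [Set.indicator_apply, Set.mem_inter_iff, Set.mem_setOf_eq]
  by_cases hs : max (max (X1 ω) (X2 ω)) (Xb ω) - min (min (X1 ω) (X2 ω)) (Xb ω) ≤ t'
  · simp only [hs, and_true, if_true]
    rcases le_or_gt (max (X1 ω) (X2 ω)) (Xb ω) with hc | hc
    · rw [if_pos hc]
      have h1c : X1 ω ≤ Xb ω := le_trans (le_max_left _ _) hc
      have h2c : X2 ω ≤ Xb ω := le_trans (le_max_right _ _) hc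
      have hm : max (max (X1 ω) (X2 ω)) (Xb ω) = Xb ω := max_eq_right hc
      have hn : min (min (X1 ω) (X2 ω)) (Xb ω) = min (X1 ω) (X2 ω) :=
        min_eq_left (min_le_of_left_le h1c)
      simp only [hm, hn]
      by_cases hac : X1 ω = Xb ω <;> by_cases hbc : X2 ω = Xb ω
      · simp [hac, hbc, min_self, sub_self]
        ring
      · -- X1 = Xb, X2 < Xb
        have hba : X2 ω < Xb ω := lt_of_le_of_ne h2c hbc
        simp [hac, min_eq_right hba.le, hba.ne, hba.ne']
      · -- X2 = Xb, X1 < Xb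
        have hab : X1 ω < Xb ω := lt_of_le_of_ne h1c hac
        simp [hbc, min_eq_left hab.le, hab.ne, hab.ne']
      · have h1 : X1 ω < Xb ω := lt_of_le_of_ne h1c hac
        have h2 : X2 ω < Xb ω := lt_of_le_of_ne h2c hbc
        have hminc : ¬ (Xb ω = min (X1 ω) (X2 ω)) := fun h =>
          absurd (le_trans h.le (min_le_left _ _)) (not_le.mpr h1)
        simp [hac, hbc, hminc]
    · rw [if_neg (not_le.mpr hc)]
      have hm : max (max (X1 ω) (X2 ω)) (Xb ω) = max (X1 ω) (X2 ω) := max_eq_left hc.le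
      simp only [hm] at hc ⊢
      rcases le_total (X1 ω) (X2 ω) with hab | hab
      · have hmb : max (X1 ω) (X2 ω) = X2 ω := max_eq_right hab
        have hmin : min (X1 ω) (X2 ω) = X1 ω := min_eq_left hab
        simp only [hmb] at hc ⊢
        simp only [hmin]
        by_cases hab' : X1 ω = X2 ω
        · simp [hab', min_eq_right hc.le, hc.ne, hc.ne']
        · have hab2 : X1 ω < X2 ω := lt_of_le_of_ne hab hab'
          rcases lt_trichotomy (X1 ω) (Xb ω) with h | h | h
          · simp [min_eq_left h.le, hab2.ne, hab2.ne', hc.ne, hc.ne', h.ne, h.ne']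
          · have hcb : Xb ω < X2 ω := h ▸ hab2
            simp [h, min_self, hcb.ne, hcb.ne']
          · simp [min_eq_right h.le, hab2.ne, hab2.ne', hc.ne, hc.ne', h.ne, h.ne']
      · have hmb : max (X1 ω) (X2 ω) = X1 ω := max_eq_left hab
        have hmin : min (X1 ω) (X2 ω) = X2 ω := min_eq_right hab
        simp only [hmb] at hc ⊢
        simp only [hmin]
        by_cases hab' : X2 ω = X1 ω
        · simp [hab', min_eq_right hc.le, hc.ne, hc.ne']
        · have hab2 : X2 ω < X1 ω := lt_of_le_of_ne hab hab'
          rcases lt_trichotomy (X2 ω) (Xb ω) with h | h | h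
          · simp [min_eq_left h.le, hab2.ne, hab2.ne', hc.ne, hc.ne', h.ne, h.ne']
          · have hcb : Xb ω < X1 ω := h ▸ hab2
            simp [h, min_self, hcb.ne, hcb.ne']
          · simp [min_eq_right h.le, hab2.ne, hab2.ne', hc.ne, hc.ne', h.ne, h.ne']
  · simp only [hs, and_false, false_and, if_false]
    norm_num

/-- Transport an indicator along a map. -/
lemma comp_indicator {α β : Type*} (T : α → β) (P : Set β) (G : β → ℝ) (E : Set α) (g : α → ℝ)
    (hE : ∀ x, x ∈ E ↔ T x ∈ P) (hg : ∀ x, g x = G (T x)) (x : α) :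
    E.indicator g x = P.indicator G (T x) := by
  by_cases h : x ∈ E
  · rw [Set.indicator_of_mem h, Set.indicator_of_mem ((hE x).1 h), hg]
  · rw [Set.indicator_of_notMem h, Set.indicator_of_notMem (fun hc => h ((hE x).2 hc))]

/-- Let `X1, X2, Xb` be mutually independent nonnegative real random
variables on a probability space, with `X1` and `X2` identically distributed.  Fix `v ≥ 0`
and `t' ≥ 0`, and define `D := 2·Xb − X1 − X2` if `Xb ≥ max {X1, X2}`, and
`D := Xmax − Xmin` otherwise.  With success event `S := {Xmax − Xmin ≤ t'}`,
`A_i^+ := {X_i = Xmax} ∩ S` and `A_{ij}^+ := {X_i = Xmax} ∩ {X_j = Xmin} ∩ S`, one has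
`E[e^{−vD}·1_S] = 2·(E[e^{−v(X1−X2)}·1_{A₁₂⁺}] + E[e^{−v(X1−Xb)}·1_{A₁b⁺}]
  − E[e^{−v(X1−X2)}·1_{A₁₂⁺∩A₁b⁺}]) + E[e^{−v(2Xb−X1−X2)}·1_{A_b⁺}]
  − E[e^{−v(X1−Xb)}·1_{A₁⁺∩A₂⁺}] − 2·E[e^{−v(X1−X2)}·1_{A₁⁺∩A_b⁺}] + P(A₁⁺∩A₂⁺∩A_b⁺)`. -/
theorem stmt3 {Ω : Type*} [MeasurableSpace Ω] (μ : Measure Ω) [IsProbabilityMeasure μ]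
    (X1 X2 Xb : Ω → ℝ)
    (hX1m : Measurable X1) (hX2m : Measurable X2) (hXbm : Measurable Xb)
    (hX1nn : ∀ ω, 0 ≤ X1 ω) (hX2nn : ∀ ω, 0 ≤ X2 ω) (hXbnn : ∀ ω, 0 ≤ Xb ω)
    (hindep : iIndepFun ![X1, X2, Xb] μ)
    (hid : IdentDistrib X1 X2 μ μ)
    (v t' : ℝ) (hv : 0 ≤ v) (ht' : 0 ≤ t')
    (Xmax Xmin : Ω → ℝ)
    (hXmax : Xmax = fun ω => max (max (X1 ω) (X2 ω)) (Xb ω))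
    (hXmin : Xmin = fun ω => min (min (X1 ω) (X2 ω)) (Xb ω))
    (D : Ω → ℝ)
    (hD : D = fun ω => if max (X1 ω) (X2 ω) ≤ Xb ω then 2 * Xb ω - X1 ω - X2 ω
      else Xmax ω - Xmin ω)
    (S A1p A2p Abp A12p A1bp : Set Ω)
    (hS : S = {ω | Xmax ω - Xmin ω ≤ t'})
    (hA1p : A1p = {ω | X1 ω = Xmax ω} ∩ S)
    (hA2p : A2p = {ω | X2 ω = Xmax ω} ∩ S)
    (hAbp : Abp = {ω | Xb ω = Xmax ω} ∩ S)
    (hA12p : A12p = {ω | X1 ω = Xmax ω} ∩ {ω | X2 ω = Xmin ω} ∩ S)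
    (hA1bp : A1bp = {ω | X1 ω = Xmax ω} ∩ {ω | Xb ω = Xmin ω} ∩ S) :
    ∫ ω in S, Real.exp (-(v * D ω)) ∂μ
      = 2 * (∫ ω in A12p, Real.exp (-(v * (X1 ω - X2 ω))) ∂μ
            + ∫ ω in A1bp, Real.exp (-(v * (X1 ω - Xb ω))) ∂μ
            - ∫ ω in A12p ∩ A1bp, Real.exp (-(v * (X1 ω - X2 ω))) ∂μ)
        + ∫ ω in Abp, Real.exp (-(v * (2 * Xb ω - X1 ω - X2 ω))) ∂μ
        - ∫ ω in A1p ∩ A2p, Real.exp (-(v * (X1 ω - Xb ω))) ∂μ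
        - 2 * ∫ ω in A1p ∩ Abp, Real.exp (-(v * (X1 ω - X2 ω))) ∂μ
        + (μ (A1p ∩ A2p ∩ Abp)).toReal := by
  classical
  set A21p : Set Ω := {ω | X2 ω = Xmax ω} ∩ {ω | X1 ω = Xmin ω} ∩ S with hA21p
  set A2bp : Set Ω := {ω | X2 ω = Xmax ω} ∩ {ω | Xb ω = Xmin ω} ∩ S with hA2bp
  -- measurability
  have hXmaxm : Measurable Xmax := by rw [hXmax]; exact (hX1m.max hX2m).max hXbm
  have hXminm : Measurable Xmin := by rw [hXmin]; exact (hX1m.min hX2m).min hXbm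
  have hSm : MeasurableSet S := by
    rw [hS]; exact measurableSet_le (hXmaxm.sub hXminm) measurable_const
  have e1max : MeasurableSet {ω | X1 ω = Xmax ω} :=
    measurableSet_eq_fun hX1m hXmaxm
  have e2max : MeasurableSet {ω | X2 ω = Xmax ω} :=
    measurableSet_eq_fun hX2m hXmaxm
  have ebmax : MeasurableSet {ω | Xb ω = Xmax ω} :=
    measurableSet_eq_fun hXbm hXmaxm
  have e1min : MeasurableSet {ω | X1 ω = Xmin ω} :=
    measurableSet_eq_fun hX1m hXminm
  have e2min : MeasurableSet {ω | X2 ω = Xmin ω} :=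
    measurableSet_eq_fun hX2m hXminm
  have ebmin : MeasurableSet {ω | Xb ω = Xmin ω} :=
    measurableSet_eq_fun hXbm hXminm
  have hE1 : MeasurableSet A12p := by rw [hA12p]; exact (e1max.inter e2min).inter hSm
  have hE2 : MeasurableSet A21p := by rw [hA21p]; exact (e2max.inter e1min).inter hSm
  have hE3 : MeasurableSet A1bp := by rw [hA1bp]; exact (e1max.inter ebmin).inter hSm
  have hE4 : MeasurableSet A2bp := by rw [hA2bp]; exact (e2max.inter ebmin).inter hSm
  have hA1 : MeasurableSet A1p := by rw [hA1p]; exact e1max.inter hSm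
  have hA2 : MeasurableSet A2p := by rw [hA2p]; exact e2max.inter hSm
  have hAb : MeasurableSet Abp := by rw [hAbp]; exact ebmax.inter hSm
  have hE11 : MeasurableSet (A1p ∩ A2p ∩ Abp) := (hA1.inter hA2).inter hAb
  -- order facts
  have hle1 : ∀ ω, X1 ω ≤ Xmax ω := fun ω => by
    rw [hXmax]; exact le_trans (le_max_left _ _) (le_max_left _ _)
  have hle2 : ∀ ω, X2 ω ≤ Xmax ω := fun ω => by
    rw [hXmax]; exact le_trans (le_max_right _ _) (le_max_left _ _)
  have hleb : ∀ ω, Xb ω ≤ Xmax ω := fun ω => by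
    rw [hXmax]; exact le_max_right _ _
  -- integrability helper
  have hInt : ∀ (E : Set Ω), MeasurableSet E → ∀ (g : Ω → ℝ), Measurable g →
      (∀ ω, ω ∈ E → g ω ≤ 1) → (∀ ω, 0 ≤ g ω) → Integrable (E.indicator g) μ := by
    intro E hE g hg hb h0
    refine (integrable_const (1:ℝ)).mono' ((hg.indicator hE).aestronglyMeasurable)
      (Filter.Eventually.of_forall fun ω => ?_)
    by_cases h : ω ∈ E
    · rw [Set.indicator_of_mem h, Real.norm_eq_abs, abs_of_nonneg (h0 ω)]
      exact hb ω h
    · rw [Set.indicator_of_notMem h]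
      simp
  -- bound helper
  have bexp : ∀ x y : ℝ, y ≤ x → Real.exp (-(v * (x - y))) ≤ 1 := fun x y h =>
    Real.exp_le_one_iff.mpr (neg_nonpos.mpr (mul_nonneg hv (sub_nonneg.mpr h)))
  -- measurable integrands
  have mg12 : Measurable fun ω => Real.exp (-(v * (X1 ω - X2 ω))) :=
    (((hX1m.sub hX2m).const_mul v).neg).exp
  have mg21 : Measurable fun ω => Real.exp (-(v * (X2 ω - X1 ω))) :=
    (((hX2m.sub hX1m).const_mul v).neg).exp
  have mg1b : Measurable fun ω => Real.exp (-(v * (X1 ω - Xb ω))) :=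
    (((hX1m.sub hXbm).const_mul v).neg).exp
  have mg2b : Measurable fun ω => Real.exp (-(v * (X2 ω - Xb ω))) :=
    (((hX2m.sub hXbm).const_mul v).neg).exp
  have mgb : Measurable fun ω => Real.exp (-(v * (2 * Xb ω - X1 ω - X2 ω))) :=
    (((((hXbm.const_mul 2).sub hX1m).sub hX2m).const_mul v).neg).exp
  -- the eleven indicator functions
  set h1 : Ω → ℝ := A12p.indicator (fun ω => Real.exp (-(v * (X1 ω - X2 ω)))) with hh1
  set h2 : Ω → ℝ := A21p.indicator (fun ω => Real.exp (-(v * (X2 ω - X1 ω)))) with hh2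
  set h3 : Ω → ℝ := A1bp.indicator (fun ω => Real.exp (-(v * (X1 ω - Xb ω)))) with hh3
  set h4 : Ω → ℝ := A2bp.indicator (fun ω => Real.exp (-(v * (X2 ω - Xb ω)))) with hh4
  set h5 : Ω → ℝ := (A12p ∩ A1bp).indicator (fun ω => Real.exp (-(v * (X1 ω - X2 ω)))) with hh5
  set h6 : Ω → ℝ := (A21p ∩ A2bp).indicator (fun ω => Real.exp (-(v * (X2 ω - X1 ω)))) with hh6
  set h7 : Ω → ℝ := Abp.indicator (fun ω => Real.exp (-(v * (2 * Xb ω - X1 ω - X2 ω)))) with hh7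
  set h8 : Ω → ℝ := (A1p ∩ A2p).indicator (fun ω => Real.exp (-(v * (X1 ω - Xb ω)))) with hh8
  set h9 : Ω → ℝ := (A1p ∩ Abp).indicator (fun ω => Real.exp (-(v * (X1 ω - X2 ω)))) with hh9
  set h10 : Ω → ℝ := (A2p ∩ Abp).indicator (fun ω => Real.exp (-(v * (X2 ω - X1 ω)))) with hh10
  set h11 : Ω → ℝ := (A1p ∩ A2p ∩ Abp).indicator (fun _ => (1:ℝ)) with hh11
  -- integrability of each
  have mem12 : ∀ ω, ω ∈ A12p → X2 ω ≤ X1 ω := fun ω hω => by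
    rw [hA12p] at hω
    have h' : X1 ω = Xmax ω := hω.1.1
    rw [h']; exact hle2 ω
  have mem21 : ∀ ω, ω ∈ A21p → X1 ω ≤ X2 ω := fun ω hω => by
    rw [hA21p] at hω
    have h' : X2 ω = Xmax ω := hω.1.1
    rw [h']; exact hle1 ω
  have mem1b : ∀ ω, ω ∈ A1bp → Xb ω ≤ X1 ω := fun ω hω => by
    rw [hA1bp] at hω
    have h' : X1 ω = Xmax ω := hω.1.1
    rw [h']; exact hleb ω
  have mem2b : ∀ ω, ω ∈ A2bp → Xb ω ≤ X2 ω := fun ω hω => by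
    rw [hA2bp] at hω
    have h' : X2 ω = Xmax ω := hω.1.1
    rw [h']; exact hleb ω
  have mem1 : ∀ ω, ω ∈ A1p → X2 ω ≤ X1 ω ∧ Xb ω ≤ X1 ω := fun ω hω => by
    rw [hA1p] at hω
    have h' : X1 ω = Xmax ω := hω.1
    rw [h']; exact ⟨hle2 ω, hleb ω⟩
  have mem2 : ∀ ω, ω ∈ A2p → X1 ω ≤ X2 ω := fun ω hω => by
    rw [hA2p] at hω
    have h' : X2 ω = Xmax ω := hω.1
    rw [h']; exact hle1 ω
  have memb : ∀ ω, ω ∈ Abp → X1 ω ≤ Xb ω ∧ X2 ω ≤ Xb ω := fun ω hω => by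
    rw [hAbp] at hω
    have h' : Xb ω = Xmax ω := hω.1
    rw [h']; exact ⟨hle1 ω, hle2 ω⟩
  have i1 : Integrable h1 μ := by
    rw [hh1]
    exact hInt _ hE1 _ mg12 (fun ω hω => bexp _ _ (mem12 ω hω)) (fun ω => (Real.exp_pos _).le)
  have i2 : Integrable h2 μ := by
    rw [hh2]
    exact hInt _ hE2 _ mg21 (fun ω hω => bexp _ _ (mem21 ω hω)) (fun ω => (Real.exp_pos _).le)
  have i3 : Integrable h3 μ := by
    rw [hh3]
    exact hInt _ hE3 _ mg1b (fun ω hω => bexp _ _ (mem1b ω hω)) (fun ω => (Real.exp_pos _).le)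
  have i4 : Integrable h4 μ := by
    rw [hh4]
    exact hInt _ hE4 _ mg2b (fun ω hω => bexp _ _ (mem2b ω hω)) (fun ω => (Real.exp_pos _).le)
  have i5 : Integrable h5 μ := by
    rw [hh5]
    exact hInt _ (hE1.inter hE3) _ mg12 (fun ω hω => bexp _ _ (mem12 ω hω.1))
      (fun ω => (Real.exp_pos _).le)
  have i6 : Integrable h6 μ := by
    rw [hh6]
    exact hInt _ (hE2.inter hE4) _ mg21 (fun ω hω => bexp _ _ (mem21 ω hω.1))
      (fun ω => (Real.exp_pos _).le)
  have i7 : Integrable h7 μ := by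
    rw [hh7]
    refine hInt _ hAb _ mgb (fun ω hω => ?_) (fun ω => (Real.exp_pos _).le)
    have h' := memb ω hω
    have : (0:ℝ) ≤ 2 * Xb ω - X1 ω - X2 ω := by linarith [h'.1, h'.2]
    exact Real.exp_le_one_iff.mpr (neg_nonpos.mpr (mul_nonneg hv this))
  have i8 : Integrable h8 μ := by
    rw [hh8]
    exact hInt _ (hA1.inter hA2) _ mg1b (fun ω hω => bexp _ _ (mem1 ω hω.1).2)
      (fun ω => (Real.exp_pos _).le)
  have i9 : Integrable h9 μ := by
    rw [hh9]
    exact hInt _ (hA1.inter hAb) _ mg12 (fun ω hω => bexp _ _ (mem1 ω hω.1).1)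
      (fun ω => (Real.exp_pos _).le)
  have i10 : Integrable h10 μ := by
    rw [hh10]
    exact hInt _ (hA2.inter hAb) _ mg21 (fun ω hω => bexp _ _ (mem2 ω hω.1))
      (fun ω => (Real.exp_pos _).le)
  have i11 : Integrable h11 μ := by
    rw [hh11]
    exact hInt _ hE11 _ measurable_const (fun ω _ => le_rfl) (fun ω => zero_le_one)
  -- exchangeability
  have hmT : Measurable fun ω => (X1 ω, X2 ω, Xb ω) := hX1m.prodMk (hX2m.prodMk hXbm)
  have hmT' : Measurable fun ω => (X2 ω, X1 ω, Xb ω) := hX2m.prodMk (hX1m.prodMk hXbm)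
  have hmeasvec : ∀ i, Measurable (![X1, X2, Xb] i) := by
    intro i
    fin_cases i
    · exact hX1m
    · exact hX2m
    · exact hXbm
  have hi23_1 : IndepFun (fun ω => (X2 ω, Xb ω)) X1 μ :=
    hindep.indepFun_prodMk hmeasvec 1 2 0 (by decide) (by decide)
  have hi13_2 : IndepFun (fun ω => (X1 ω, Xb ω)) X2 μ :=
    hindep.indepFun_prodMk hmeasvec 0 2 1 (by decide) (by decide)
  have hi23 : IndepFun X2 Xb μ := hindep.indepFun (show (1:Fin 3) ≠ 2 by decide)
  have hi13 : IndepFun X1 Xb μ := hindep.indepFun (show (0:Fin 3) ≠ 2 by decide)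
  have hmapT : μ.map (fun ω => (X1 ω, X2 ω, Xb ω))
      = (μ.map X1).prod ((μ.map X2).prod (μ.map Xb)) := by
    rw [(indepFun_iff_map_prod_eq_prod_map_map hX1m.aemeasurable
        (hX2m.prodMk hXbm).aemeasurable).mp hi23_1.symm,
      (indepFun_iff_map_prod_eq_prod_map_map hX2m.aemeasurable hXbm.aemeasurable).mp hi23]
  have hmapT' : μ.map (fun ω => (X2 ω, X1 ω, Xb ω))
      = (μ.map X2).prod ((μ.map X1).prod (μ.map Xb)) := by
    rw [(indepFun_iff_map_prod_eq_prod_map_map hX2m.aemeasurable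
        (hX1m.prodMk hXbm).aemeasurable).mp hi13_2.symm,
      (indepFun_iff_map_prod_eq_prod_map_map hX1m.aemeasurable hXbm.aemeasurable).mp hi13]
  have hmapeq : μ.map (fun ω => (X1 ω, X2 ω, Xb ω)) = μ.map (fun ω => (X2 ω, X1 ω, Xb ω)) := by
    rw [hmapT, hmapT', hid.map_eq]
  have hswap : ∀ F : ℝ × ℝ × ℝ → ℝ, Measurable F →
      ∫ ω, F (X1 ω, X2 ω, Xb ω) ∂μ = ∫ ω, F (X2 ω, X1 ω, Xb ω) ∂μ := by
    intro F hF
    have e1 := integral_map (μ := μ) hmT.aemeasurable hF.aestronglyMeasurable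
    have e2 := integral_map (μ := μ) hmT'.aemeasurable hF.aestronglyMeasurable
    simp only [← e1, ← e2, hmapeq]
  -- measurable pieces on ℝ³
  have hMp : Measurable fun p : ℝ × ℝ × ℝ => max (max p.1 p.2.1) p.2.2 :=
    (measurable_fst.max measurable_snd.fst).max measurable_snd.snd
  have hNp : Measurable fun p : ℝ × ℝ × ℝ => min (min p.1 p.2.1) p.2.2 :=
    (measurable_fst.min measurable_snd.fst).min measurable_snd.snd
  -- swaps
  have swap1 : ∫ ω, h2 ω ∂μ = ∫ ω, h1 ω ∂μ := by
    have hPm : MeasurableSet {p : ℝ × ℝ × ℝ |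
        (p.1 = max (max p.1 p.2.1) p.2.2 ∧ p.2.1 = min (min p.1 p.2.1) p.2.2) ∧
          max (max p.1 p.2.1) p.2.2 - min (min p.1 p.2.1) p.2.2 ≤ t'} :=
      ((measurableSet_eq_fun measurable_fst hMp).inter
        (measurableSet_eq_fun measurable_snd.fst hNp)).inter
        (measurableSet_le (hMp.sub hNp) measurable_const)
    have hGm : Measurable fun p : ℝ × ℝ × ℝ => Real.exp (-(v * (p.1 - p.2.1))) :=
      (((measurable_fst.sub measurable_snd.fst).const_mul v).neg).exp
    have l1 : ∀ ω, h1 ω = Set.indicator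
        {p : ℝ × ℝ × ℝ | (p.1 = max (max p.1 p.2.1) p.2.2 ∧ p.2.1 = min (min p.1 p.2.1) p.2.2) ∧
          max (max p.1 p.2.1) p.2.2 - min (min p.1 p.2.1) p.2.2 ≤ t'}
        (fun p => Real.exp (-(v * (p.1 - p.2.1)))) (X1 ω, X2 ω, Xb ω) := by
      rw [hh1]
      refine comp_indicator _ _ _ _ _ (fun ω => ?_) (fun ω => rfl)
      rw [hA12p]
      simp only [Set.mem_inter_iff, Set.mem_setOf_eq, hXmax, hXmin, hS]
    have l2 : ∀ ω, h2 ω = Set.indicator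
        {p : ℝ × ℝ × ℝ | (p.1 = max (max p.1 p.2.1) p.2.2 ∧ p.2.1 = min (min p.1 p.2.1) p.2.2) ∧
          max (max p.1 p.2.1) p.2.2 - min (min p.1 p.2.1) p.2.2 ≤ t'}
        (fun p => Real.exp (-(v * (p.1 - p.2.1)))) (X2 ω, X1 ω, Xb ω) := by
      rw [hh2]
      refine comp_indicator _ _ _ _ _ (fun ω => ?_) (fun ω => rfl)
      rw [hA21p]
      simp only [Set.mem_inter_iff, Set.mem_setOf_eq, hXmax, hXmin, hS]
      rw [max_comm (X2 ω) (X1 ω), min_comm (X2 ω) (X1 ω)]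
    rw [integral_congr_ae (Filter.Eventually.of_forall l2),
      integral_congr_ae (Filter.Eventually.of_forall l1)]
    exact (hswap _ (hGm.indicator hPm)).symm
  have swap2 : ∫ ω, h4 ω ∂μ = ∫ ω, h3 ω ∂μ := by
    have hPm : MeasurableSet {p : ℝ × ℝ × ℝ |
        (p.1 = max (max p.1 p.2.1) p.2.2 ∧ p.2.2 = min (min p.1 p.2.1) p.2.2) ∧
          max (max p.1 p.2.1) p.2.2 - min (min p.1 p.2.1) p.2.2 ≤ t'} :=
      ((measurableSet_eq_fun measurable_fst hMp).inter
        (measurableSet_eq_fun measurable_snd.snd hNp)).inter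
        (measurableSet_le (hMp.sub hNp) measurable_const)
    have hGm : Measurable fun p : ℝ × ℝ × ℝ => Real.exp (-(v * (p.1 - p.2.2))) :=
      (((measurable_fst.sub measurable_snd.snd).const_mul v).neg).exp
    have l1 : ∀ ω, h3 ω = Set.indicator
        {p : ℝ × ℝ × ℝ | (p.1 = max (max p.1 p.2.1) p.2.2 ∧ p.2.2 = min (min p.1 p.2.1) p.2.2) ∧
          max (max p.1 p.2.1) p.2.2 - min (min p.1 p.2.1) p.2.2 ≤ t'}
        (fun p => Real.exp (-(v * (p.1 - p.2.2)))) (X1 ω, X2 ω, Xb ω) := by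
      rw [hh3]
      refine comp_indicator _ _ _ _ _ (fun ω => ?_) (fun ω => rfl)
      rw [hA1bp]
      simp only [Set.mem_inter_iff, Set.mem_setOf_eq, hXmax, hXmin, hS]
    have l2 : ∀ ω, h4 ω = Set.indicator
        {p : ℝ × ℝ × ℝ | (p.1 = max (max p.1 p.2.1) p.2.2 ∧ p.2.2 = min (min p.1 p.2.1) p.2.2) ∧
          max (max p.1 p.2.1) p.2.2 - min (min p.1 p.2.1) p.2.2 ≤ t'}
        (fun p => Real.exp (-(v * (p.1 - p.2.2)))) (X2 ω, X1 ω, Xb ω) := by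
      rw [hh4]
      refine comp_indicator _ _ _ _ _ (fun ω => ?_) (fun ω => rfl)
      rw [hA2bp]
      simp only [Set.mem_inter_iff, Set.mem_setOf_eq, hXmax, hXmin, hS]
      rw [max_comm (X2 ω) (X1 ω), min_comm (X2 ω) (X1 ω)]
    rw [integral_congr_ae (Filter.Eventually.of_forall l2),
      integral_congr_ae (Filter.Eventually.of_forall l1)]
    exact (hswap _ (hGm.indicator hPm)).symm
  have swap3 : ∫ ω, h6 ω ∂μ = ∫ ω, h5 ω ∂μ := by
    have hPm : MeasurableSet {p : ℝ × ℝ × ℝ |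
        ((p.1 = max (max p.1 p.2.1) p.2.2 ∧ p.2.1 = min (min p.1 p.2.1) p.2.2) ∧
          max (max p.1 p.2.1) p.2.2 - min (min p.1 p.2.1) p.2.2 ≤ t') ∧
        (p.1 = max (max p.1 p.2.1) p.2.2 ∧ p.2.2 = min (min p.1 p.2.1) p.2.2) ∧
          max (max p.1 p.2.1) p.2.2 - min (min p.1 p.2.1) p.2.2 ≤ t'} :=
      (((measurableSet_eq_fun measurable_fst hMp).inter
        (measurableSet_eq_fun measurable_snd.fst hNp)).inter
        (measurableSet_le (hMp.sub hNp) measurable_const)).inter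
      (((measurableSet_eq_fun measurable_fst hMp).inter
        (measurableSet_eq_fun measurable_snd.snd hNp)).inter
        (measurableSet_le (hMp.sub hNp) measurable_const))
    have hGm : Measurable fun p : ℝ × ℝ × ℝ => Real.exp (-(v * (p.1 - p.2.1))) :=
      (((measurable_fst.sub measurable_snd.fst).const_mul v).neg).exp
    have l1 : ∀ ω, h5 ω = Set.indicator
        {p : ℝ × ℝ × ℝ | ((p.1 = max (max p.1 p.2.1) p.2.2 ∧ p.2.1 = min (min p.1 p.2.1) p.2.2) ∧
          max (max p.1 p.2.1) p.2.2 - min (min p.1 p.2.1) p.2.2 ≤ t') ∧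
          (p.1 = max (max p.1 p.2.1) p.2.2 ∧ p.2.2 = min (min p.1 p.2.1) p.2.2) ∧
          max (max p.1 p.2.1) p.2.2 - min (min p.1 p.2.1) p.2.2 ≤ t'}
        (fun p => Real.exp (-(v * (p.1 - p.2.1)))) (X1 ω, X2 ω, Xb ω) := by
      rw [hh5]
      refine comp_indicator _ _ _ _ _ (fun ω => ?_) (fun ω => rfl)
      rw [hA12p, hA1bp]
      simp only [Set.mem_inter_iff, Set.mem_setOf_eq, hXmax, hXmin, hS]
    have l2 : ∀ ω, h6 ω = Set.indicator
        {p : ℝ × ℝ × ℝ | ((p.1 = max (max p.1 p.2.1) p.2.2 ∧ p.2.1 = min (min p.1 p.2.1) p.2.2) ∧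
          max (max p.1 p.2.1) p.2.2 - min (min p.1 p.2.1) p.2.2 ≤ t') ∧
          (p.1 = max (max p.1 p.2.1) p.2.2 ∧ p.2.2 = min (min p.1 p.2.1) p.2.2) ∧
          max (max p.1 p.2.1) p.2.2 - min (min p.1 p.2.1) p.2.2 ≤ t'}
        (fun p => Real.exp (-(v * (p.1 - p.2.1)))) (X2 ω, X1 ω, Xb ω) := by
      rw [hh6]
      refine comp_indicator _ _ _ _ _ (fun ω => ?_) (fun ω => rfl)
      rw [hA21p, hA2bp]
      simp only [Set.mem_inter_iff, Set.mem_setOf_eq, hXmax, hXmin, hS]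
      rw [max_comm (X2 ω) (X1 ω), min_comm (X2 ω) (X1 ω)]
    rw [integral_congr_ae (Filter.Eventually.of_forall l2),
      integral_congr_ae (Filter.Eventually.of_forall l1)]
    exact (hswap _ (hGm.indicator hPm)).symm
  have swap4 : ∫ ω, h10 ω ∂μ = ∫ ω, h9 ω ∂μ := by
    have hPm : MeasurableSet {p : ℝ × ℝ × ℝ |
        (p.1 = max (max p.1 p.2.1) p.2.2 ∧
          max (max p.1 p.2.1) p.2.2 - min (min p.1 p.2.1) p.2.2 ≤ t') ∧
        p.2.2 = max (max p.1 p.2.1) p.2.2 ∧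
          max (max p.1 p.2.1) p.2.2 - min (min p.1 p.2.1) p.2.2 ≤ t'} :=
      (((measurableSet_eq_fun measurable_fst hMp)).inter
        (measurableSet_le (hMp.sub hNp) measurable_const)).inter
      (((measurableSet_eq_fun measurable_snd.snd hMp)).inter
        (measurableSet_le (hMp.sub hNp) measurable_const))
    have hGm : Measurable fun p : ℝ × ℝ × ℝ => Real.exp (-(v * (p.1 - p.2.1))) :=
      (((measurable_fst.sub measurable_snd.fst).const_mul v).neg).exp
    have l1 : ∀ ω, h9 ω = Set.indicator
        {p : ℝ × ℝ × ℝ | (p.1 = max (max p.1 p.2.1) p.2.2 ∧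
          max (max p.1 p.2.1) p.2.2 - min (min p.1 p.2.1) p.2.2 ≤ t') ∧
          p.2.2 = max (max p.1 p.2.1) p.2.2 ∧
          max (max p.1 p.2.1) p.2.2 - min (min p.1 p.2.1) p.2.2 ≤ t'}
        (fun p => Real.exp (-(v * (p.1 - p.2.1)))) (X1 ω, X2 ω, Xb ω) := by
      rw [hh9]
      refine comp_indicator _ _ _ _ _ (fun ω => ?_) (fun ω => rfl)
      rw [hA1p, hAbp]
      simp only [Set.mem_inter_iff, Set.mem_setOf_eq, hXmax, hXmin, hS]
    have l2 : ∀ ω, h10 ω = Set.indicator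
        {p : ℝ × ℝ × ℝ | (p.1 = max (max p.1 p.2.1) p.2.2 ∧
          max (max p.1 p.2.1) p.2.2 - min (min p.1 p.2.1) p.2.2 ≤ t') ∧
          p.2.2 = max (max p.1 p.2.1) p.2.2 ∧
          max (max p.1 p.2.1) p.2.2 - min (min p.1 p.2.1) p.2.2 ≤ t'}
        (fun p => Real.exp (-(v * (p.1 - p.2.1)))) (X2 ω, X1 ω, Xb ω) := by
      rw [hh10]
      refine comp_indicator _ _ _ _ _ (fun ω => ?_) (fun ω => rfl)
      rw [hA2p, hAbp]
      simp only [Set.mem_inter_iff, Set.mem_setOf_eq, hXmax, hXmin, hS]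
      rw [max_comm (X2 ω) (X1 ω), min_comm (X2 ω) (X1 ω)]
    rw [integral_congr_ae (Filter.Eventually.of_forall l2),
      integral_congr_ae (Filter.Eventually.of_forall l1)]
    exact (hswap _ (hGm.indicator hPm)).symm
  -- pointwise identity
  have hpt : ∀ ω, S.indicator (fun ω => Real.exp (-(v * D ω))) ω
      = h1 ω + h2 ω + h3 ω + h4 ω - h5 ω - h6 ω + h7 ω - h8 ω - h9 ω - h10 ω + h11 ω := by
    intro ω
    rw [hh1, hh2, hh3, hh4, hh5, hh6, hh7, hh8, hh9, hh10, hh11]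
    exact key_ind X1 X2 Xb v t' Xmax Xmin hXmax hXmin D hD S A1p A2p Abp A12p A1bp A21p A2bp
      hS hA1p hA2p hAbp hA12p hA1bp hA21p hA2bp ω
  -- expand the integral
  have I2' := i1.add i2
  have I3' := I2'.add i3
  have I4' := I3'.add i4
  have I5' := I4'.sub i5
  have I6' := I5'.sub i6
  have I7' := I6'.add i7
  have I8' := I7'.sub i8
  have I9' := I8'.sub i9
  have I10' := I9'.sub i10
  have e11 := integral_add (μ := μ) I10' i11
  have e10 := integral_sub (μ := μ) I9' i10
  have e9 := integral_sub (μ := μ) I8' i9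
  have e8 := integral_sub (μ := μ) I7' i8
  have e7 := integral_add (μ := μ) I6' i7
  have e6 := integral_sub (μ := μ) I5' i6
  have e5 := integral_sub (μ := μ) I4' i5
  have e4 := integral_add (μ := μ) I3' i4
  have e3 := integral_add (μ := μ) I2' i3
  have e2 := integral_add (μ := μ) i1 i2
  simp only [Pi.add_apply, Pi.sub_apply] at e2 e3 e4 e5 e6 e7 e8 e9 e10 e11
  have step : (∫ ω in S, Real.exp (-(v * D ω)) ∂μ)
      = ∫ ω, h1 ω ∂μ + ∫ ω, h2 ω ∂μ + ∫ ω, h3 ω ∂μ + ∫ ω, h4 ω ∂μ - ∫ ω, h5 ω ∂μ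
        - ∫ ω, h6 ω ∂μ + ∫ ω, h7 ω ∂μ - ∫ ω, h8 ω ∂μ - ∫ ω, h9 ω ∂μ - ∫ ω, h10 ω ∂μ
        + ∫ ω, h11 ω ∂μ := by
    rw [← integral_indicator hSm]
    rw [integral_congr_ae (Filter.Eventually.of_forall hpt)]
    rw [e11, e10, e9, e8, e7, e6, e5, e4, e3, e2]
  rw [step, swap1, swap2, swap3, swap4]
  have f1 : ∫ ω, h1 ω ∂μ = ∫ ω in A12p, Real.exp (-(v * (X1 ω - X2 ω))) ∂μ := by
    rw [hh1, integral_indicator hE1]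
  have f3 : ∫ ω, h3 ω ∂μ = ∫ ω in A1bp, Real.exp (-(v * (X1 ω - Xb ω))) ∂μ := by
    rw [hh3, integral_indicator hE3]
  have f5 : ∫ ω, h5 ω ∂μ = ∫ ω in A12p ∩ A1bp, Real.exp (-(v * (X1 ω - X2 ω))) ∂μ := by
    rw [hh5, integral_indicator (hE1.inter hE3)]
  have f7 : ∫ ω, h7 ω ∂μ = ∫ ω in Abp, Real.exp (-(v * (2 * Xb ω - X1 ω - X2 ω))) ∂μ := by
    rw [hh7, integral_indicator hAb]
  have f8 : ∫ ω, h8 ω ∂μ = ∫ ω in A1p ∩ A2p, Real.exp (-(v * (X1 ω - Xb ω))) ∂μ := by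
    rw [hh8, integral_indicator (hA1.inter hA2)]
  have f9 : ∫ ω, h9 ω ∂μ = ∫ ω in A1p ∩ Abp, Real.exp (-(v * (X1 ω - X2 ω))) ∂μ := by
    rw [hh9, integral_indicator (hA1.inter hAb)]
  have f11 : ∫ ω, h11 ω ∂μ = (μ (A1p ∩ A2p ∩ Abp)).toReal := by
    rw [hh11, integral_indicator hE11]
    simp
    rfl
  rw [f1, f3, f5, f7, f8, f9, f11]
  ring
end

section
/- Let X1, X2, Xb be mutually independent nonnegative real-valued random variables on a probability space, with X1 and X2 identically distributed. Fix reals k ≥ 0 and t_cut > 0. Then E[e^{−k·Xmin/2}·1_F] = 2·(E[e^{−k·X2/2}·1_{A_{12}^-}] + E[e^{−k·Xb/2}·1_{A_{1b}^-}] − E[e^{−k·X2/2}·1_{A_{12}^- ∩ A_{1b}^-}]) + 2·E[e^{−k·X1/2}·1_{A_{b1}^-}] − E[e^{−k·X1/2}·1_{A_{b1}^- ∩ A_{b2}^-}] − E[e^{−k·Xb/2}·1_{A_1^- ∩ A_2^-}] − 2·E[e^{−k·X2/2}·1_{A_1^- ∩ A_b^-}]. -/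
open MeasureTheory ProbabilityTheory

namespace Stmt4Aux

noncomputable def mx (p : ℝ × ℝ × ℝ) : ℝ := max (max p.1 p.2.1) p.2.2
noncomputable def mn (p : ℝ × ℝ × ℝ) : ℝ := min (min p.1 p.2.1) p.2.2

lemma mx_meas : Measurable mx :=
  (measurable_fst.max (measurable_fst.comp measurable_snd)).max
    (measurable_snd.comp measurable_snd)

lemma mn_meas : Measurable mn :=
  (measurable_fst.min (measurable_fst.comp measurable_snd)).min
    (measurable_snd.comp measurable_snd)

noncomputable def G1 (k tcut : ℝ) : ℝ × ℝ × ℝ → ℝ :=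
  Set.indicator {q | q.1 = mx q ∧ tcut ≤ mx q - mn q}
    (fun q => Real.exp (-(k * mn q / 2)))

noncomputable def G2 (k tcut : ℝ) : ℝ × ℝ × ℝ → ℝ :=
  Set.indicator {q | q.2.2 = mx q ∧ q.1 = mn q ∧ tcut ≤ mx q - mn q}
    (fun q => Real.exp (-(k * mn q / 2)))

noncomputable def G3 (k tcut : ℝ) : ℝ × ℝ × ℝ → ℝ :=
  Set.indicator {q | (q.1 = mx q ∧ q.2.2 = mx q) ∧ tcut ≤ mx q - mn q}
    (fun q => Real.exp (-(k * mn q / 2)))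

lemma G1_meas (k tcut : ℝ) : Measurable (G1 k tcut) :=
  (Real.measurable_exp.comp ((measurable_const.mul mn_meas).div_const 2).neg).indicator
    ((measurableSet_eq_fun measurable_fst mx_meas).inter
      (measurableSet_le measurable_const (mx_meas.sub mn_meas)))

lemma G2_meas (k tcut : ℝ) : Measurable (G2 k tcut) :=
  (Real.measurable_exp.comp ((measurable_const.mul mn_meas).div_const 2).neg).indicator
    ((measurableSet_eq_fun (measurable_snd.comp measurable_snd) mx_meas).inter
      ((measurableSet_eq_fun measurable_fst mn_meas).inter
        (measurableSet_le measurable_const (mx_meas.sub mn_meas))))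

lemma G3_meas (k tcut : ℝ) : Measurable (G3 k tcut) :=
  (Real.measurable_exp.comp ((measurable_const.mul mn_meas).div_const 2).neg).indicator
    (((measurableSet_eq_fun measurable_fst mx_meas).inter
      (measurableSet_eq_fun (measurable_snd.comp measurable_snd) mx_meas)).inter
      (measurableSet_le measurable_const (mx_meas.sub mn_meas)))

end Stmt4Aux

open Stmt4Aux

/-- Let `X1, X2, Xb` be mutually independent nonnegative real random
variables on a probability space, with `X1` and `X2` identically distributed.  Fix `k ≥ 0`
and `t_cut > 0`.  With failure event `F := {Xmax − Xmin ≥ t_cut}`,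
`A_i^- := {X_i = Xmax} ∩ F` and `A_{ij}^- := {X_i = Xmax} ∩ {X_j = Xmin} ∩ F`, one has
`E[e^{−k·Xmin/2}·1_F] = 2·(E[e^{−k·X2/2}·1_{A₁₂⁻}] + E[e^{−k·Xb/2}·1_{A₁b⁻}]
  − E[e^{−k·X2/2}·1_{A₁₂⁻∩A₁b⁻}]) + 2·E[e^{−k·X1/2}·1_{A_{b1}⁻}]
  − E[e^{−k·X1/2}·1_{A_{b1}⁻∩A_{b2}⁻}] − E[e^{−k·Xb/2}·1_{A₁⁻∩A₂⁻}]
  − 2·E[e^{−k·X2/2}·1_{A₁⁻∩A_b⁻}]`. -/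
theorem stmt4 {Ω : Type*} [MeasurableSpace Ω] (μ : Measure Ω) [IsProbabilityMeasure μ]
    (X1 X2 Xb : Ω → ℝ)
    (hX1m : Measurable X1) (hX2m : Measurable X2) (hXbm : Measurable Xb)
    (hX1nn : ∀ ω, 0 ≤ X1 ω) (hX2nn : ∀ ω, 0 ≤ X2 ω) (hXbnn : ∀ ω, 0 ≤ Xb ω)
    (hindep : iIndepFun ![X1, X2, Xb] μ)
    (hid : IdentDistrib X1 X2 μ μ)
    (k tcut : ℝ) (hk : 0 ≤ k) (htcut : 0 < tcut)
    (Xmax Xmin : Ω → ℝ)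
    (hXmax : Xmax = fun ω => max (max (X1 ω) (X2 ω)) (Xb ω))
    (hXmin : Xmin = fun ω => min (min (X1 ω) (X2 ω)) (Xb ω))
    (F A1m A2m Abm A12m A1bm Ab1m Ab2m : Set Ω)
    (hF : F = {ω | tcut ≤ Xmax ω - Xmin ω})
    (hA1m : A1m = {ω | X1 ω = Xmax ω} ∩ F)
    (hA2m : A2m = {ω | X2 ω = Xmax ω} ∩ F)
    (hAbm : Abm = {ω | Xb ω = Xmax ω} ∩ F)
    (hA12m : A12m = {ω | X1 ω = Xmax ω} ∩ {ω | X2 ω = Xmin ω} ∩ F)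
    (hA1bm : A1bm = {ω | X1 ω = Xmax ω} ∩ {ω | Xb ω = Xmin ω} ∩ F)
    (hAb1m : Ab1m = {ω | Xb ω = Xmax ω} ∩ {ω | X1 ω = Xmin ω} ∩ F)
    (hAb2m : Ab2m = {ω | Xb ω = Xmax ω} ∩ {ω | X2 ω = Xmin ω} ∩ F) :
    ∫ ω in F, Real.exp (-(k * Xmin ω / 2)) ∂μ
      = 2 * (∫ ω in A12m, Real.exp (-(k * X2 ω / 2)) ∂μ
            + ∫ ω in A1bm, Real.exp (-(k * Xb ω / 2)) ∂μ
            - ∫ ω in A12m ∩ A1bm, Real.exp (-(k * X2 ω / 2)) ∂μ)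
        + 2 * ∫ ω in Ab1m, Real.exp (-(k * X1 ω / 2)) ∂μ
        - ∫ ω in Ab1m ∩ Ab2m, Real.exp (-(k * X1 ω / 2)) ∂μ
        - ∫ ω in A1m ∩ A2m, Real.exp (-(k * Xb ω / 2)) ∂μ
        - 2 * ∫ ω in A1m ∩ Abm, Real.exp (-(k * X2 ω / 2)) ∂μ := by
  classical
  -- measurability of everything
  have hMm : Measurable Xmax := by rw [hXmax]; exact (hX1m.max hX2m).max hXbm
  have hmm : Measurable Xmin := by rw [hXmin]; exact (hX1m.min hX2m).min hXbm
  have hFmeas : MeasurableSet F := by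
    rw [hF]; exact measurableSet_le measurable_const (hMm.sub hmm)
  have hA1meas : MeasurableSet A1m := by
    rw [hA1m]; exact (measurableSet_eq_fun hX1m hMm).inter hFmeas
  have hA2meas : MeasurableSet A2m := by
    rw [hA2m]; exact (measurableSet_eq_fun hX2m hMm).inter hFmeas
  have hAbmeas : MeasurableSet Abm := by
    rw [hAbm]; exact (measurableSet_eq_fun hXbm hMm).inter hFmeas
  have hA12meas : MeasurableSet A12m := by
    rw [hA12m]
    exact ((measurableSet_eq_fun hX1m hMm).inter (measurableSet_eq_fun hX2m hmm)).inter hFmeas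
  have hA1bmeas : MeasurableSet A1bm := by
    rw [hA1bm]
    exact ((measurableSet_eq_fun hX1m hMm).inter (measurableSet_eq_fun hXbm hmm)).inter hFmeas
  have hAb1meas : MeasurableSet Ab1m := by
    rw [hAb1m]
    exact ((measurableSet_eq_fun hXbm hMm).inter (measurableSet_eq_fun hX1m hmm)).inter hFmeas
  have hAb2meas : MeasurableSet Ab2m := by
    rw [hAb2m]
    exact ((measurableSet_eq_fun hXbm hMm).inter (measurableSet_eq_fun hX2m hmm)).inter hFmeas
  -- the integrand
  set f : Ω → ℝ := fun ω => Real.exp (-(k * Xmin ω / 2)) with hfdef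
  have hfmeas : Measurable f :=
    Real.measurable_exp.comp ((measurable_const.mul hmm).div_const 2).neg
  have hfint : Integrable f μ := by
    refine (integrable_const (1 : ℝ)).mono' hfmeas.aestronglyMeasurable
      (Filter.Eventually.of_forall fun ω => ?_)
    rw [Real.norm_eq_abs, abs_of_pos (Real.exp_pos _)]
    have hXminnn : 0 ≤ Xmin ω := by
      rw [hXmin]; exact le_min (le_min (hX1nn ω) (hX2nn ω)) (hXbnn ω)
    have : -(k * Xmin ω / 2) ≤ 0 := by nlinarith
    calc Real.exp (-(k * Xmin ω / 2)) ≤ Real.exp 0 := Real.exp_le_exp.2 this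
      _ = 1 := Real.exp_zero
  -- inclusion-exclusion for set integrals of f
  have hIE : ∀ s t : Set Ω, MeasurableSet s → MeasurableSet t →
      ∫ ω in s ∪ t, f ω ∂μ = ∫ ω in s, f ω ∂μ + ∫ ω in t, f ω ∂μ - ∫ ω in s ∩ t, f ω ∂μ := by
    intro s t hs ht
    have h1 : s ∪ t = s ∪ (t \ s) := by rw [Set.union_diff_self]
    have h2 : t = (s ∩ t) ∪ (t \ s) := by
      rw [Set.inter_comm, Set.inter_union_diff]
    have e1 : ∫ ω in s ∪ t, f ω ∂μ = ∫ ω in s, f ω ∂μ + ∫ ω in t \ s, f ω ∂μ := by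
      rw [h1, setIntegral_union disjoint_sdiff_self_right (ht.diff hs)
        hfint.integrableOn hfint.integrableOn]
    have e2 : ∫ ω in t, f ω ∂μ = ∫ ω in s ∩ t, f ω ∂μ + ∫ ω in t \ s, f ω ∂μ := by
      conv_lhs => rw [h2]
      rw [setIntegral_union (Set.disjoint_sdiff_right.mono_left Set.inter_subset_left)
        (ht.diff hs) hfint.integrableOn hfint.integrableOn]
    rw [e1, e2]; ring
  -- swap symmetry
  have hmeas_fun : ∀ i : Fin 3, Measurable (![X1, X2, Xb] i) := by
    intro i; fin_cases i <;> assumption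
  have hpair2b : μ.map (fun ω => (X2 ω, Xb ω)) = (μ.map X2).prod (μ.map Xb) := by
    have h : IndepFun X2 Xb μ := hindep.indepFun (by decide : (1 : Fin 3) ≠ 2)
    exact (indepFun_iff_map_prod_eq_prod_map_map hX2m.aemeasurable hXbm.aemeasurable).1 h
  have hpair1b : μ.map (fun ω => (X1 ω, Xb ω)) = (μ.map X1).prod (μ.map Xb) := by
    have h : IndepFun X1 Xb μ := hindep.indepFun (by decide : (0 : Fin 3) ≠ 2)
    exact (indepFun_iff_map_prod_eq_prod_map_map hX1m.aemeasurable hXbm.aemeasurable).1 h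
  have htrip1 : μ.map (fun ω => (X1 ω, X2 ω, Xb ω))
      = (μ.map X1).prod ((μ.map X2).prod (μ.map Xb)) := by
    have h : IndepFun X1 (fun ω => (X2 ω, Xb ω)) μ :=
      (hindep.indepFun_prodMk hmeas_fun 1 2 0 (by decide) (by decide)).symm
    rw [(indepFun_iff_map_prod_eq_prod_map_map hX1m.aemeasurable
      (hX2m.prodMk hXbm).aemeasurable).1 h, hpair2b]
  have htrip2 : μ.map (fun ω => (X2 ω, X1 ω, Xb ω))
      = (μ.map X2).prod ((μ.map X1).prod (μ.map Xb)) := by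
    have h : IndepFun X2 (fun ω => (X1 ω, Xb ω)) μ :=
      (hindep.indepFun_prodMk hmeas_fun 0 2 1 (by decide) (by decide)).symm
    rw [(indepFun_iff_map_prod_eq_prod_map_map hX2m.aemeasurable
      (hX1m.prodMk hXbm).aemeasurable).1 h, hpair1b]
  have hIdent : IdentDistrib (fun ω => (X1 ω, X2 ω, Xb ω)) (fun ω => (X2 ω, X1 ω, Xb ω)) μ μ :=
    ⟨(hX1m.prodMk (hX2m.prodMk hXbm)).aemeasurable,
     (hX2m.prodMk (hX1m.prodMk hXbm)).aemeasurable,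
     by rw [htrip1, htrip2, hid.map_eq]⟩
  have hswap : ∀ G : ℝ × ℝ × ℝ → ℝ, Measurable G →
      ∫ ω, G (X1 ω, X2 ω, Xb ω) ∂μ = ∫ ω, G (X2 ω, X1 ω, Xb ω) ∂μ := by
    intro G hG
    exact (hIdent.comp hG).integral_eq
  -- max/min case facts
  have hmaxcases : ∀ ω, X1 ω = Xmax ω ∨ X2 ω = Xmax ω ∨ Xb ω = Xmax ω := by
    intro ω
    rw [hXmax]; dsimp only
    rcases max_cases (max (X1 ω) (X2 ω)) (Xb ω) with ⟨h, -⟩ | ⟨h, -⟩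
    · rcases max_cases (X1 ω) (X2 ω) with ⟨h', -⟩ | ⟨h', -⟩
      · exact Or.inl (h.trans h').symm
      · exact Or.inr (Or.inl (h.trans h').symm)
    · exact Or.inr (Or.inr h.symm)
  have hmincases : ∀ ω, X1 ω = Xmin ω ∨ X2 ω = Xmin ω ∨ Xb ω = Xmin ω := by
    intro ω
    rw [hXmin]; dsimp only
    rcases min_cases (min (X1 ω) (X2 ω)) (Xb ω) with ⟨h, -⟩ | ⟨h, -⟩
    · rcases min_cases (X1 ω) (X2 ω) with ⟨h', -⟩ | ⟨h', -⟩
      · exact Or.inl (h.trans h').symm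
      · exact Or.inr (Or.inl (h.trans h').symm)
    · exact Or.inr (Or.inr h.symm)
  have hminlemax : ∀ ω, Xmin ω ≤ Xmax ω := by
    intro ω; rw [hXmax, hXmin]; dsimp only
    exact le_trans (min_le_right _ _) (le_max_right _ _)
  have hX1le : ∀ ω, X1 ω ≤ Xmax ω := by
    intro ω; rw [hXmax]; exact le_trans (le_max_left _ _) (le_max_left _ _)
  have hX2le : ∀ ω, X2 ω ≤ Xmax ω := by
    intro ω; rw [hXmax]; exact le_trans (le_max_right _ _) (le_max_left _ _)
  have hXble : ∀ ω, Xb ω ≤ Xmax ω := by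
    intro ω; rw [hXmax]; exact le_max_right _ _
  have hX1ge : ∀ ω, Xmin ω ≤ X1 ω := by
    intro ω; rw [hXmin]; exact le_trans (min_le_left _ _) (min_le_left _ _)
  have hX2ge : ∀ ω, Xmin ω ≤ X2 ω := by
    intro ω; rw [hXmin]; exact le_trans (min_le_left _ _) (min_le_right _ _)
  have hXbge : ∀ ω, Xmin ω ≤ Xb ω := by
    intro ω; rw [hXmin]; exact min_le_right _ _
  -- on F, no variable is simultaneously max and min
  have hFne : ∀ ω ∈ F, Xmin ω ≠ Xmax ω := by
    intro ω hω heq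
    rw [hF] at hω
    simp only [Set.mem_setOf_eq] at hω
    rw [heq] at hω; linarith
  -- derived min identities
  have hminb : ∀ ω ∈ A1m ∩ A2m, Xb ω = Xmin ω := by
    rintro ω ⟨h1, h2⟩
    rw [hA1m] at h1; rw [hA2m] at h2
    have h1' : X1 ω = Xmax ω := h1.1
    have h2' : X2 ω = Xmax ω := h2.1
    rw [hXmin]; dsimp only
    have hb1 : Xb ω ≤ X1 ω := by rw [h1']; exact hXble ω
    have hb2 : Xb ω ≤ X2 ω := by rw [h2']; exact hXble ω
    exact (min_eq_right (le_min hb1 hb2)).symm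
  have hmin2 : ∀ ω ∈ A1m ∩ Abm, X2 ω = Xmin ω := by
    rintro ω ⟨h1, hb⟩
    rw [hA1m] at h1; rw [hAbm] at hb
    have h1' : X1 ω = Xmax ω := h1.1
    have hb' : Xb ω = Xmax ω := hb.1
    rw [hXmin]; dsimp only
    have h21 : X2 ω ≤ X1 ω := by rw [h1']; exact hX2le ω
    have h2b : X2 ω ≤ Xb ω := by rw [hb']; exact hX2le ω
    rw [min_eq_right h21, min_eq_left h2b]
  -- set decompositions
  have hFdecomp : F = (A1m ∪ A2m) ∪ Abm := by
    apply Set.Subset.antisymm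
    · intro ω hω
      rcases hmaxcases ω with h | h | h
      · exact Or.inl (Or.inl (by rw [hA1m]; exact ⟨h, hω⟩))
      · exact Or.inl (Or.inr (by rw [hA2m]; exact ⟨h, hω⟩))
      · exact Or.inr (by rw [hAbm]; exact ⟨h, hω⟩)
    · rintro ω ((h | h) | h)
      · rw [hA1m] at h; exact h.2
      · rw [hA2m] at h; exact h.2
      · rw [hAbm] at h; exact h.2
  have hA1decomp : A1m = A12m ∪ A1bm := by
    apply Set.Subset.antisymm
    · intro ω hω
      rw [hA1m] at hω
      obtain ⟨h1, hωF⟩ := hω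
      rcases hmincases ω with h | h | h
      · exact absurd (h.symm.trans h1) (hFne ω hωF)
      · exact Or.inl (by rw [hA12m]; exact ⟨⟨h1, h⟩, hωF⟩)
      · exact Or.inr (by rw [hA1bm]; exact ⟨⟨h1, h⟩, hωF⟩)
    · rintro ω (h | h)
      · rw [hA12m] at h; rw [hA1m]; exact ⟨h.1.1, h.2⟩
      · rw [hA1bm] at h; rw [hA1m]; exact ⟨h.1.1, h.2⟩
  have hAbdecomp : Abm = Ab1m ∪ Ab2m := by
    apply Set.Subset.antisymm
    · intro ω hω
      rw [hAbm] at hω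
      obtain ⟨hb, hωF⟩ := hω
      rcases hmincases ω with h | h | h
      · exact Or.inl (by rw [hAb1m]; exact ⟨⟨hb, h⟩, hωF⟩)
      · exact Or.inr (by rw [hAb2m]; exact ⟨⟨hb, h⟩, hωF⟩)
      · exact absurd (h.symm.trans hb) (hFne ω hωF)
    · rintro ω (h | h)
      · rw [hAb1m] at h; rw [hAbm]; exact ⟨h.1.1, h.2⟩
      · rw [hAb2m] at h; rw [hAbm]; exact ⟨h.1.1, h.2⟩
  have htriple : (A1m ∩ Abm) ∩ (A2m ∩ Abm) = ∅ := by
    rw [Set.eq_empty_iff_forall_notMem]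
    rintro ω ⟨⟨h1, hb⟩, h2, -⟩
    rw [hA1m] at h1; rw [hA2m] at h2; rw [hAbm] at hb
    have hωF := h1.2
    have hmm' : Xmin ω = Xmax ω := by
      rw [hXmin]; dsimp only
      rw [show X1 ω = Xmax ω from h1.1, show X2 ω = Xmax ω from h2.1,
        show Xb ω = Xmax ω from hb.1, min_self, min_self]
    exact hFne ω hωF hmm'
  -- rewrite RHS integrals with integrand f
  have r12 : ∫ ω in A12m, Real.exp (-(k * X2 ω / 2)) ∂μ = ∫ ω in A12m, f ω ∂μ := by
    refine setIntegral_congr_fun hA12meas fun ω hω => ?_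
    rw [hA12m] at hω
    simp only [hfdef]; rw [show X2 ω = Xmin ω from hω.1.2]
  have r1b : ∫ ω in A1bm, Real.exp (-(k * Xb ω / 2)) ∂μ = ∫ ω in A1bm, f ω ∂μ := by
    refine setIntegral_congr_fun hA1bmeas fun ω hω => ?_
    rw [hA1bm] at hω
    simp only [hfdef]; rw [show Xb ω = Xmin ω from hω.1.2]
  have r12b : ∫ ω in A12m ∩ A1bm, Real.exp (-(k * X2 ω / 2)) ∂μ
      = ∫ ω in A12m ∩ A1bm, f ω ∂μ := by
    refine setIntegral_congr_fun (hA12meas.inter hA1bmeas) fun ω hω => ?_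
    rw [hA12m] at hω
    simp only [hfdef]; rw [show X2 ω = Xmin ω from hω.1.1.2]
  have rb1 : ∫ ω in Ab1m, Real.exp (-(k * X1 ω / 2)) ∂μ = ∫ ω in Ab1m, f ω ∂μ := by
    refine setIntegral_congr_fun hAb1meas fun ω hω => ?_
    rw [hAb1m] at hω
    simp only [hfdef]; rw [show X1 ω = Xmin ω from hω.1.2]
  have rb12 : ∫ ω in Ab1m ∩ Ab2m, Real.exp (-(k * X1 ω / 2)) ∂μ
      = ∫ ω in Ab1m ∩ Ab2m, f ω ∂μ := by
    refine setIntegral_congr_fun (hAb1meas.inter hAb2meas) fun ω hω => ?_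
    rw [hAb1m] at hω
    simp only [hfdef]; rw [show X1 ω = Xmin ω from hω.1.1.2]
  have rA1A2 : ∫ ω in A1m ∩ A2m, Real.exp (-(k * Xb ω / 2)) ∂μ
      = ∫ ω in A1m ∩ A2m, f ω ∂μ := by
    refine setIntegral_congr_fun (hA1meas.inter hA2meas) fun ω hω => ?_
    simp only [hfdef]; rw [hminb ω hω]
  have rA1Ab : ∫ ω in A1m ∩ Abm, Real.exp (-(k * X2 ω / 2)) ∂μ
      = ∫ ω in A1m ∩ Abm, f ω ∂μ := by
    refine setIntegral_congr_fun (hA1meas.inter hAbmeas) fun ω hω => ?_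
    simp only [hfdef]; rw [hmin2 ω hω]
  -- indicator identities
  have ind1 : ∀ ω, Set.indicator A1m f ω = G1 k tcut (X1 ω, X2 ω, Xb ω) := by
    intro ω
    rw [Set.indicator_apply, G1, Set.indicator_apply]
    refine if_congr ?_ ?_ rfl
    · rw [hA1m, hF]
      simp only [Set.mem_inter_iff, Set.mem_setOf_eq, hXmax, hXmin, mx, mn]
    · simp only [hfdef, mn, hXmin]
  have ind2 : ∀ ω, Set.indicator A2m f ω = G1 k tcut (X2 ω, X1 ω, Xb ω) := by
    intro ω
    rw [Set.indicator_apply, G1, Set.indicator_apply]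
    refine if_congr ?_ ?_ rfl
    · rw [hA2m, hF]
      simp only [Set.mem_inter_iff, Set.mem_setOf_eq, hXmax, hXmin, mx, mn]
      rw [max_comm (X2 ω) (X1 ω), min_comm (X2 ω) (X1 ω)]
    · simp only [hfdef, mn, hXmin]
      rw [min_comm (X2 ω) (X1 ω)]
  have indb1 : ∀ ω, Set.indicator Ab1m f ω = G2 k tcut (X1 ω, X2 ω, Xb ω) := by
    intro ω
    rw [Set.indicator_apply, G2, Set.indicator_apply]
    refine if_congr ?_ ?_ rfl
    · rw [hAb1m, hF]
      simp only [Set.mem_inter_iff, Set.mem_setOf_eq, hXmax, hXmin, mx, mn]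
      tauto
    · simp only [hfdef, mn, hXmin]
  have indb2 : ∀ ω, Set.indicator Ab2m f ω = G2 k tcut (X2 ω, X1 ω, Xb ω) := by
    intro ω
    rw [Set.indicator_apply, G2, Set.indicator_apply]
    refine if_congr ?_ ?_ rfl
    · rw [hAb2m, hF]
      simp only [Set.mem_inter_iff, Set.mem_setOf_eq, hXmax, hXmin, mx, mn]
      rw [max_comm (X2 ω) (X1 ω), min_comm (X2 ω) (X1 ω)]
      tauto
    · simp only [hfdef, mn, hXmin]
      rw [min_comm (X2 ω) (X1 ω)]
  have ind1b : ∀ ω, Set.indicator (A1m ∩ Abm) f ω = G3 k tcut (X1 ω, X2 ω, Xb ω) := by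
    intro ω
    rw [Set.indicator_apply, G3, Set.indicator_apply]
    refine if_congr ?_ ?_ rfl
    · rw [hA1m, hAbm, hF]
      simp only [Set.mem_inter_iff, Set.mem_setOf_eq, hXmax, hXmin, mx, mn]
      tauto
    · simp only [hfdef, mn, hXmin]
  have ind2b : ∀ ω, Set.indicator (A2m ∩ Abm) f ω = G3 k tcut (X2 ω, X1 ω, Xb ω) := by
    intro ω
    rw [Set.indicator_apply, G3, Set.indicator_apply]
    refine if_congr ?_ ?_ rfl
    · rw [hA2m, hAbm, hF]
      simp only [Set.mem_inter_iff, Set.mem_setOf_eq, hXmax, hXmin, mx, mn]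
      rw [max_comm (X2 ω) (X1 ω), min_comm (X2 ω) (X1 ω)]
      tauto
    · simp only [hfdef, mn, hXmin]
      rw [min_comm (X2 ω) (X1 ω)]
  -- symmetry equalities
  have s1 : ∫ ω in A2m, f ω ∂μ = ∫ ω in A1m, f ω ∂μ := by
    rw [← integral_indicator hA2meas, ← integral_indicator hA1meas]
    calc ∫ ω, Set.indicator A2m f ω ∂μ = ∫ ω, G1 k tcut (X2 ω, X1 ω, Xb ω) ∂μ :=
          integral_congr_ae (Filter.Eventually.of_forall ind2)
      _ = ∫ ω, G1 k tcut (X1 ω, X2 ω, Xb ω) ∂μ := (hswap _ (G1_meas k tcut)).symm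
      _ = ∫ ω, Set.indicator A1m f ω ∂μ :=
          integral_congr_ae (Filter.Eventually.of_forall fun ω => (ind1 ω).symm)
  have s2 : ∫ ω in Ab2m, f ω ∂μ = ∫ ω in Ab1m, f ω ∂μ := by
    rw [← integral_indicator hAb2meas, ← integral_indicator hAb1meas]
    calc ∫ ω, Set.indicator Ab2m f ω ∂μ = ∫ ω, G2 k tcut (X2 ω, X1 ω, Xb ω) ∂μ :=
          integral_congr_ae (Filter.Eventually.of_forall indb2)
      _ = ∫ ω, G2 k tcut (X1 ω, X2 ω, Xb ω) ∂μ := (hswap _ (G2_meas k tcut)).symm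
      _ = ∫ ω, Set.indicator Ab1m f ω ∂μ :=
          integral_congr_ae (Filter.Eventually.of_forall fun ω => (indb1 ω).symm)
  have s3 : ∫ ω in A2m ∩ Abm, f ω ∂μ = ∫ ω in A1m ∩ Abm, f ω ∂μ := by
    rw [← integral_indicator (hA2meas.inter hAbmeas),
      ← integral_indicator (hA1meas.inter hAbmeas)]
    calc ∫ ω, Set.indicator (A2m ∩ Abm) f ω ∂μ = ∫ ω, G3 k tcut (X2 ω, X1 ω, Xb ω) ∂μ :=
          integral_congr_ae (Filter.Eventually.of_forall ind2b)
      _ = ∫ ω, G3 k tcut (X1 ω, X2 ω, Xb ω) ∂μ := (hswap _ (G3_meas k tcut)).symm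
      _ = ∫ ω, Set.indicator (A1m ∩ Abm) f ω ∂μ :=
          integral_congr_ae (Filter.Eventually.of_forall fun ω => (ind1b ω).symm)
  -- assemble
  have eqF : ∫ ω in F, f ω ∂μ
      = (∫ ω in A1m, f ω ∂μ + ∫ ω in A2m, f ω ∂μ - ∫ ω in A1m ∩ A2m, f ω ∂μ)
        + ∫ ω in Abm, f ω ∂μ
        - (∫ ω in A1m ∩ Abm, f ω ∂μ + ∫ ω in A2m ∩ Abm, f ω ∂μ
          - ∫ ω in (A1m ∩ Abm) ∩ (A2m ∩ Abm), f ω ∂μ) := by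
    rw [hFdecomp, hIE (A1m ∪ A2m) Abm (hA1meas.union hA2meas) hAbmeas,
      hIE A1m A2m hA1meas hA2meas, Set.union_inter_distrib_right,
      hIE (A1m ∩ Abm) (A2m ∩ Abm) (hA1meas.inter hAbmeas) (hA2meas.inter hAbmeas)]
  have heq0 : ∫ ω in (A1m ∩ Abm) ∩ (A2m ∩ Abm), f ω ∂μ = 0 := by
    rw [htriple, setIntegral_empty]
  have eqA1 : ∫ ω in A1m, f ω ∂μ
      = ∫ ω in A12m, f ω ∂μ + ∫ ω in A1bm, f ω ∂μ - ∫ ω in A12m ∩ A1bm, f ω ∂μ := by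
    rw [hA1decomp]; exact hIE _ _ hA12meas hA1bmeas
  have eqAb : ∫ ω in Abm, f ω ∂μ
      = ∫ ω in Ab1m, f ω ∂μ + ∫ ω in Ab2m, f ω ∂μ - ∫ ω in Ab1m ∩ Ab2m, f ω ∂μ := by
    rw [hAbdecomp]; exact hIE _ _ hAb1meas hAb2meas
  rw [r12, r1b, r12b, rb1, rb12, rA1A2, rA1Ab]
  linarith [eqF, heq0, eqA1, eqAb, s1, s2, s3]
end

section
/- Let ((Y_n, V_n, W_n))_{n≥1} be an i.i.d. sequence of random triples on a probability space, where each Y_n takes values in {0,1}, each V_n takes values in [0,1], and each W_n takes values in [0,∞); let (Y,V,W) have their common joint distribution. Assume p := P(Y = 1) > 0 and let N := min{n ≥ 1 : Y_n = 1}, which is almost surely finite. Then E[V·1_{Y=0}] ≤ 1 − p < 1, and, as an identity in [0,∞], E[W_N · ∏_{i=1}^{N−1} V_i] = E[W·1_{Y=1}] / (1 − E[V·1_{Y=0}]). -/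
open MeasureTheory ProbabilityTheory
open scoped ENNReal NNReal

/-- Auxiliary: the lintegral of a product of independent `ℝ≥0∞`-valued random variables over
`Finset.range n` is the product of the lintegrals. -/
lemma aux_lintegral_prod_range {Ω : Type*} [MeasurableSpace Ω] {μ : Measure Ω}
    [IsProbabilityMeasure μ] (f : ℕ → Ω → ℝ≥0∞) (hfm : ∀ i, Measurable (f i))
    (hind : iIndepFun f μ) (n : ℕ) :
    ∫⁻ ω, ∏ i ∈ Finset.range n, f i ω ∂μ = ∏ i ∈ Finset.range n, ∫⁻ ω, f i ω ∂μ := by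
  induction n with
  | zero => simp
  | succ n ih =>
    have hI : IndepFun (∏ j ∈ Finset.range n, f j) (f n) μ :=
      hind.indepFun_prod_range_succ hfm n
    have hmp : Measurable (∏ j ∈ Finset.range n, f j) := by
      rw [Finset.prod_fn]
      exact Finset.measurable_prod _ fun i _ => hfm i
    have hmul := lintegral_mul_eq_lintegral_mul_lintegral_of_indepFun hmp (hfm n) hI
    simp only [Pi.mul_apply, Finset.prod_apply] at hmul
    simp_rw [Finset.prod_range_succ]
    rw [hmul, ih]

/-- Let `(Yₙ, Vₙ, Wₙ)` be an i.i.d. sequence of random triples, where each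
`Yₙ` takes values in `{0,1}` (encoded as `Bool`), each `Vₙ` takes values in `[0,1]`
(encoded as `ℝ≥0` with `Vₙ ≤ 1`), and each `Wₙ` takes values in `[0,∞)` (encoded as `ℝ≥0`);
`(Y, V, W) := (Y₀, V₀, W₀)` has the common distribution.  Assume `p := P(Y = 1) > 0` and let
`N ω := sInf {n | Yₙ ω = 1}` (the first success, indices starting at `0`, so
`W_N · ∏_{i=1}^{N−1} V_i` becomes `W_N · ∏_{i ∈ range N} V_i`).  Then `N` is almost surely
finite, `E[V·1_{Y=0}] ≤ 1 − p < 1`, and, as an identity in `[0,∞]`,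
`E[W_N · ∏_{i=1}^{N−1} V_i] = E[W·1_{Y=1}] / (1 − E[V·1_{Y=0}])`. -/
theorem stmt5 {Ω : Type*} [MeasurableSpace Ω] (μ : Measure Ω) [IsProbabilityMeasure μ]
    (Y : ℕ → Ω → Bool) (V W : ℕ → Ω → ℝ≥0)
    (hV1 : ∀ n ω, V n ω ≤ 1)
    (hmeas : ∀ n, Measurable (fun ω => (Y n ω, V n ω, W n ω)))
    (hindep : iIndepFun (fun n ω => (Y n ω, V n ω, W n ω)) μ)
    (hident : ∀ n, IdentDistrib (fun ω => (Y n ω, V n ω, W n ω))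
      (fun ω => (Y 0 ω, V 0 ω, W 0 ω)) μ μ)
    (hp : 0 < μ {ω | Y 0 ω = true}) :
    (∀ᵐ ω ∂μ, ∃ n, Y n ω = true) ∧
    ∫⁻ ω, Set.indicator {ω' | Y 0 ω' = false} (fun ω' => (V 0 ω' : ℝ≥0∞)) ω ∂μ
      ≤ 1 - μ {ω | Y 0 ω = true} ∧
    1 - μ {ω | Y 0 ω = true} < 1 ∧
    ∫⁻ ω, (W (sInf {n | Y n ω = true}) ω : ℝ≥0∞)
        * ∏ i ∈ Finset.range (sInf {n | Y n ω = true}), (V i ω : ℝ≥0∞) ∂μ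
      = (∫⁻ ω, Set.indicator {ω' | Y 0 ω' = true} (fun ω' => (W 0 ω' : ℝ≥0∞)) ω ∂μ)
        / (1 - ∫⁻ ω, Set.indicator {ω' | Y 0 ω' = false} (fun ω' => (V 0 ω' : ℝ≥0∞)) ω ∂μ) := by
  classical
  set p := μ {ω | Y 0 ω = true} with hp_def
  -- basic measurability
  have hYm : ∀ n, Measurable (Y n) := fun n => (measurable_fst.comp (hmeas n))
  have hVm : ∀ n, Measurable (V n) := fun n =>
    (measurable_fst.comp (measurable_snd.comp (hmeas n)))
  have hWm : ∀ n, Measurable (W n) := fun n =>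
    (measurable_snd.comp (measurable_snd.comp (hmeas n)))
  -- the basic bricks
  set φf : Bool × ℝ≥0 × ℝ≥0 → ℝ≥0∞ := fun q => if q.1 then 0 else (q.2.1 : ℝ≥0∞) with hφf_def
  set φg : Bool × ℝ≥0 × ℝ≥0 → ℝ≥0∞ := fun q => if q.1 then (q.2.2 : ℝ≥0∞) else 0 with hφg_def
  set φu : Bool × ℝ≥0 × ℝ≥0 → ℝ≥0∞ := fun q => if q.1 then 0 else 1 with hφu_def
  have hb : MeasurableSet {q : Bool × ℝ≥0 × ℝ≥0 | q.1 = true} :=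
    measurable_fst (measurableSet_singleton true)
  have hφfm : Measurable φf :=
    Measurable.ite hb measurable_const
      (measurable_coe_nnreal_ennreal.comp (measurable_fst.comp measurable_snd))
  have hφgm : Measurable φg :=
    Measurable.ite hb
      (measurable_coe_nnreal_ennreal.comp (measurable_snd.comp measurable_snd)) measurable_const
  have hφum : Measurable φu := Measurable.ite hb measurable_const measurable_const
  set f : ℕ → Ω → ℝ≥0∞ := fun n ω => if Y n ω then 0 else (V n ω : ℝ≥0∞) with hf_def
  set g : ℕ → Ω → ℝ≥0∞ := fun n ω => if Y n ω then (W n ω : ℝ≥0∞) else 0 with hg_def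
  set u : ℕ → Ω → ℝ≥0∞ := fun n ω => if Y n ω then 0 else 1 with hu_def
  have hfm : ∀ n, Measurable (f n) := fun n => hφfm.comp (hmeas n)
  have hgm : ∀ n, Measurable (g n) := fun n => hφgm.comp (hmeas n)
  have hum : ∀ n, Measurable (u n) := fun n => hφum.comp (hmeas n)
  have hfind : iIndepFun f μ :=
    hindep.comp (fun _ => φf) (fun _ => hφfm)
  have huind : iIndepFun u μ :=
    hindep.comp (fun _ => φu) (fun _ => hφum)
  -- identical distribution of the bricks
  have hfid : ∀ n, ∫⁻ ω, f n ω ∂μ = ∫⁻ ω, f 0 ω ∂μ := fun n =>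
    ((hident n).comp hφfm).lintegral_eq
  have hgid : ∀ n, ∫⁻ ω, g n ω ∂μ = ∫⁻ ω, g 0 ω ∂μ := fun n =>
    ((hident n).comp hφgm).lintegral_eq
  have huid : ∀ n, ∫⁻ ω, u n ω ∂μ = ∫⁻ ω, u 0 ω ∂μ := fun n =>
    ((hident n).comp hφum).lintegral_eq
  set a := ∫⁻ ω, f 0 ω ∂μ with ha_def
  set b := ∫⁻ ω, g 0 ω ∂μ with hb_def
  -- identify the integrands in the statement
  have hfa : ∀ ω, Set.indicator {ω' | Y 0 ω' = false} (fun ω' => (V 0 ω' : ℝ≥0∞)) ω = f 0 ω := by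
    intro ω
    by_cases h : Y 0 ω <;> simp [Set.indicator, h, hf_def]
  have hgb : ∀ ω, Set.indicator {ω' | Y 0 ω' = true} (fun ω' => (W 0 ω' : ℝ≥0∞)) ω = g 0 ω := by
    intro ω
    by_cases h : Y 0 ω <;> simp [Set.indicator, h, hg_def]
  have hfa' : ∫⁻ ω, Set.indicator {ω' | Y 0 ω' = false} (fun ω' => (V 0 ω' : ℝ≥0∞)) ω ∂μ = a := by
    rw [ha_def]; exact lintegral_congr hfa
  have hgb' : ∫⁻ ω, Set.indicator {ω' | Y 0 ω' = true} (fun ω' => (W 0 ω' : ℝ≥0∞)) ω ∂μ = b := by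
    rw [hb_def]; exact lintegral_congr hgb
  -- the complement probability
  have hYfm : ∀ n, MeasurableSet {ω | Y n ω = false} := fun n =>
    hYm n (measurableSet_singleton false)
  have hcompl : ∀ n, μ {ω | Y n ω = false} = 1 - p := by
    intro n
    have h1 : μ {ω | Y n ω = false} = μ {ω | Y 0 ω = false} :=
      ((hident n).comp measurable_fst).measure_mem_eq (measurableSet_singleton false)
    have h2 : {ω | Y 0 ω = false} = {ω | Y 0 ω = true}ᶜ := by
      ext ω
      simp only [Set.mem_setOf_eq, Set.mem_compl_iff, Bool.not_eq_true]
    have ht : MeasurableSet {ω | Y 0 ω = true} := hYm 0 (measurableSet_singleton true)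
    rw [h1, h2, measure_compl ht (measure_ne_top μ _), measure_univ, hp_def]
  -- ∫ u n = 1 - p
  have hu_int : ∀ n, ∫⁻ ω, u n ω ∂μ = 1 - p := by
    intro n
    have : (fun ω => u n ω) = Set.indicator {ω | Y n ω = false} (1 : Ω → ℝ≥0∞) := by
      funext ω
      by_cases h : Y n ω <;> simp [Set.indicator, h, hu_def]
    rw [this, lintegral_indicator_one (hYfm n), hcompl n]
  -- a ≤ 1 - p
  have ha_le : a ≤ 1 - p := by
    rw [ha_def, ← hu_int 0]
    refine lintegral_mono fun ω => ?_
    by_cases h : Y 0 ω <;> simp [hf_def, hu_def, h]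
    exact_mod_cast hV1 0 ω
  have h1p : (1 : ℝ≥0∞) - p < 1 := ENNReal.sub_lt_self ENNReal.one_ne_top one_ne_zero hp.ne'
  have ha1 : a < 1 := lt_of_le_of_lt ha_le h1p
  -- a.s. finiteness of N
  have hbadle : ∀ n, μ {ω | ¬∃ m, Y m ω = true} ≤ (1 - p) ^ n := by
    intro n
    have hsub : {ω | ¬∃ m, Y m ω = true} ⊆ {ω | ∏ i ∈ Finset.range n, u i ω = 1} := by
      intro ω hω
      push_neg at hω
      have : ∀ i ∈ Finset.range n, u i ω = 1 := by
        intro i _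
        simp only [hu_def]
        rw [if_neg (by simpa using hω i)]
      simpa using Finset.prod_eq_one this
    have hmono : μ {ω | ¬∃ m, Y m ω = true} ≤ ∫⁻ ω, ∏ i ∈ Finset.range n, u i ω ∂μ := by
      calc μ {ω | ¬∃ m, Y m ω = true}
          ≤ μ {ω | ∏ i ∈ Finset.range n, u i ω = 1} := measure_mono hsub
        _ = ∫⁻ ω, Set.indicator {ω' | ∏ i ∈ Finset.range n, u i ω' = 1} (1 : Ω → ℝ≥0∞) ω ∂μ := by
            rw [lintegral_indicator_one]
            exact (Finset.measurable_prod _ fun i _ => hum i) (measurableSet_singleton 1)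
        _ ≤ ∫⁻ ω, ∏ i ∈ Finset.range n, u i ω ∂μ := by
            refine lintegral_mono fun ω => ?_
            by_cases h : ω ∈ {ω' | ∏ i ∈ Finset.range n, u i ω' = 1}
            · have h' : ∏ i ∈ Finset.range n, u i ω = 1 := h
              rw [Set.indicator_of_mem h, Pi.one_apply, h']
            · rw [Set.indicator_of_notMem h]; exact zero_le
    have hprod : ∫⁻ ω, ∏ i ∈ Finset.range n, u i ω ∂μ = (1 - p) ^ n := by
      rw [aux_lintegral_prod_range u hum huind n]
      calc ∏ i ∈ Finset.range n, ∫⁻ ω, u i ω ∂μ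
          = ∏ _i ∈ Finset.range n, (1 - p) := Finset.prod_congr rfl fun i _ => hu_int i
        _ = (1 - p) ^ n := by rw [Finset.prod_const, Finset.card_range]
    exact hmono.trans (le_of_eq hprod)
  have hfin : ∀ᵐ ω ∂μ, ∃ n, Y n ω = true := by
    have htend := ENNReal.tendsto_pow_atTop_nhds_zero_of_lt_one h1p
    have hle0 : μ {ω | ¬∃ m, Y m ω = true} ≤ 0 :=
      ge_of_tendsto' htend fun n => hbadle n
    have : μ {ω | ¬∃ m, Y m ω = true} = 0 := le_antisymm hle0 zero_le
    filter_upwards [measure_eq_zero_iff_ae_notMem.mp this] with ω hω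
    simpa using hω
  refine ⟨hfin, hfa' ▸ ha_le, h1p, ?_⟩
  -- the main identity
  set G : ℕ → Ω → ℝ≥0∞ := fun n ω => (∏ i ∈ Finset.range n, f i ω) * g n ω with hG_def
  have hGm : ∀ n, Measurable (G n) := fun n =>
    (Finset.measurable_prod _ fun i _ => hfm i).mul (hgm n)
  -- pointwise identity on the a.s. event
  have hpt : ∀ ω, (∃ n, Y n ω = true) →
      (W (sInf {n | Y n ω = true}) ω : ℝ≥0∞)
        * ∏ i ∈ Finset.range (sInf {n | Y n ω = true}), (V i ω : ℝ≥0∞)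
      = ∑' n, G n ω := by
    intro ω hω
    set N := sInf {n | Y n ω = true} with hN_def
    have hYN : Y N ω = true := Nat.sInf_mem hω
    have hYlt : ∀ i < N, Y i ω = false := by
      intro i hi
      have h' := Nat.notMem_of_lt_sInf hi
      exact Bool.eq_false_iff.mpr h'
    have hGN : G N ω = (W N ω : ℝ≥0∞) * ∏ i ∈ Finset.range N, (V i ω : ℝ≥0∞) := by
      simp only [hG_def]
      rw [mul_comm]
      congr 1
      · simp only [hg_def]
        rw [if_pos hYN]
      · refine Finset.prod_congr rfl fun i hi => ?_
        simp only [hf_def, hYlt i (Finset.mem_range.mp hi), Bool.false_eq_true, if_false]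
    have hGz : ∀ m, m ≠ N → G m ω = 0 := by
      intro m hm
      by_cases h : Y m ω = true
      · have hNle : N ≤ m := Nat.sInf_le h
        have hNlt : N < m := lt_of_le_of_ne hNle (Ne.symm hm)
        have hfN : f N ω = 0 := by
          simp only [hf_def]
          rw [if_pos hYN]
        simp only [hG_def]
        rw [Finset.prod_eq_zero (Finset.mem_range.mpr hNlt) hfN, zero_mul]
      · have hgm0 : g m ω = 0 := by
          simp only [hg_def]
          rw [if_neg h]
        simp only [hG_def]
        rw [hgm0, mul_zero]
    rw [tsum_eq_single N hGz, hGN]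
  -- integral of G n
  have hGint : ∀ n, ∫⁻ ω, G n ω ∂μ = a ^ n * b := by
    intro n
    set F : ℕ → Ω → ℝ≥0∞ := fun i => if i = n then g i else f i with hF_def
    have hFm : ∀ i, Measurable (F i) := by
      intro i
      simp only [hF_def]
      split <;> [exact hgm i; exact hfm i]
    have hFind : iIndepFun F μ := by
      have : F = fun i => (if i = n then φg else φf) ∘ (fun ω => (Y i ω, V i ω, W i ω)) := by
        funext i
        by_cases h : i = n <;> simp only [hF_def, hφg_def, hφf_def, h, if_pos, if_neg,
          if_true, if_false, Function.comp] <;> rfl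
      rw [this]
      exact hindep.comp _ (fun i => by split <;> [exact hφgm; exact hφfm])
    have hkey := aux_lintegral_prod_range F hFm hFind (n + 1)
    have hFG : ∀ ω, ∏ i ∈ Finset.range (n + 1), F i ω = G n ω := by
      intro ω
      rw [Finset.prod_range_succ]
      congr 1
      · refine Finset.prod_congr rfl fun i hi => ?_
        simp only [hF_def, (Finset.mem_range.mp hi).ne, if_false]
      · simp only [hF_def, if_pos rfl]
    have hFint : ∀ i ∈ Finset.range n, ∫⁻ ω, F i ω ∂μ = a := by
      intro i hi
      simp only [hF_def, (Finset.mem_range.mp hi).ne, if_false]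
      exact hfid i
    calc ∫⁻ ω, G n ω ∂μ = ∫⁻ ω, ∏ i ∈ Finset.range (n + 1), F i ω ∂μ :=
          lintegral_congr fun ω => (hFG ω).symm
      _ = ∏ i ∈ Finset.range (n + 1), ∫⁻ ω, F i ω ∂μ := hkey
      _ = (∏ i ∈ Finset.range n, ∫⁻ ω, F i ω ∂μ) * ∫⁻ ω, F n ω ∂μ := Finset.prod_range_succ _ _
      _ = a ^ n * b := by
          rw [Finset.prod_congr rfl hFint, Finset.prod_const, Finset.card_range]
          congr 1
          simp only [hF_def, if_pos rfl]
          exact hgid n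
  -- putting it together
  have hmain : ∫⁻ ω, (W (sInf {n | Y n ω = true}) ω : ℝ≥0∞)
      * ∏ i ∈ Finset.range (sInf {n | Y n ω = true}), (V i ω : ℝ≥0∞) ∂μ
      = ∑' n, (a ^ n * b) := by
    have hae : (fun ω => (W (sInf {n | Y n ω = true}) ω : ℝ≥0∞)
        * ∏ i ∈ Finset.range (sInf {n | Y n ω = true}), (V i ω : ℝ≥0∞))
        =ᵐ[μ] fun ω => ∑' n, G n ω := by
      filter_upwards [hfin] with ω hω using hpt ω hω
    rw [lintegral_congr_ae hae, lintegral_tsum fun n => (hGm n).aemeasurable]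
    exact tsum_congr fun n => hGint n
  rw [hmain, hgb', hfa']
  rw [ENNReal.tsum_mul_right, ENNReal.tsum_geometric, ENNReal.div_eq_inv_mul, mul_comm]
end

section
/- Let x ∈ [0,1), y ∈ (0,1), q ∈ ℚ with q ≥ 0, α ∈ ℝ, and l ∈ ℕ, and let z* be the least positive integer such that z*·q is an integer. Then the series ∑_{i=l}^{∞} x^i · y^{⌈i·q − α⌉} converges, and ∑_{i=l}^{∞} x^i · y^{⌈i·q − α⌉} = (∑_{i=l}^{l+z*−1} x^i · y^{⌈i·q − α⌉}) / (1 − x^{z*}·y^{z*·q}). -/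
/-- Let `x ∈ [0,1)`, `y ∈ (0,1)`, `q ∈ ℚ` with `q ≥ 0`, `α ∈ ℝ`, `l ∈ ℕ`,
and let `z*` be the least positive integer such that `z*·q` is an integer (say `z*·q = m`
with `m ∈ ℕ`).  Then `∑_{i=l}^{∞} x^i · y^{⌈i·q − α⌉}` converges and equals
`(∑_{i=l}^{l+z*−1} x^i · y^{⌈i·q − α⌉}) / (1 − x^{z*}·y^{z*·q})`. -/
theorem stmt6 (x : ℝ) (hx0 : 0 ≤ x) (hx1 : x < 1)
    (y : ℝ) (hy0 : 0 < y) (hy1 : y < 1)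
    (q : ℚ) (hq : 0 ≤ q) (α : ℝ) (l : ℕ)
    (zs m : ℕ)
    (hzs : IsLeast {z : ℕ | 0 < z ∧ ∃ k : ℤ, (z : ℚ) * q = (k : ℚ)} zs)
    (hm : (zs : ℚ) * q = (m : ℚ)) :
    Summable (fun i : ℕ => x ^ (l + i) * y ^ (⌈((l + i : ℕ) : ℝ) * (q : ℝ) - α⌉ : ℤ)) ∧
    ∑' i : ℕ, x ^ (l + i) * y ^ (⌈((l + i : ℕ) : ℝ) * (q : ℝ) - α⌉ : ℤ)
      = (∑ i ∈ Finset.range zs, x ^ (l + i) * y ^ (⌈((l + i : ℕ) : ℝ) * (q : ℝ) - α⌉ : ℤ))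
        / (1 - x ^ zs * y ^ m) := by
  obtain ⟨⟨hzs0, -⟩, -⟩ := hzs
  haveI : NeZero zs := ⟨hzs0.ne'⟩
  set f : ℕ → ℝ := fun i => x ^ (l + i) * y ^ (⌈((l + i : ℕ) : ℝ) * (q : ℝ) - α⌉ : ℤ) with hf
  set r : ℝ := x ^ zs * y ^ m with hr
  have hy : y ≠ 0 := hy0.ne'
  have hr0 : 0 ≤ r := mul_nonneg (pow_nonneg hx0 _) (pow_nonneg hy0.le _)
  have hr1 : r < 1 := by
    calc r ≤ x ^ zs := mul_le_of_le_one_right (pow_nonneg hx0 _)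
              (pow_le_one₀ hy0.le hy1.le)
    _ < 1 := pow_lt_one₀ hx0 hx1 hzs0.ne'
  have hmq : (zs : ℝ) * (q : ℝ) = (m : ℝ) := by exact_mod_cast hm
  have hfnn : ∀ i, 0 ≤ f i := fun i =>
    mul_nonneg (pow_nonneg hx0 _) (zpow_nonneg hy0.le _)
  have key : ∀ i, f (i + zs) = r * f i := by
    intro i
    have hceil : (⌈((l + (i + zs) : ℕ) : ℝ) * (q : ℝ) - α⌉ : ℤ)
        = ⌈((l + i : ℕ) : ℝ) * (q : ℝ) - α⌉ + (m : ℤ) := by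
      rw [← Int.ceil_add_intCast]
      congr 1
      push_cast
      rw [← hmq]; ring
    simp only [hf, hceil]
    rw [zpow_add₀ hy, ← add_assoc, pow_add, zpow_natCast]
    push_cast
    ring
  have keyk : ∀ k i, f (k * zs + i) = r ^ k * f i := by
    intro k
    induction k with
    | zero => simp
    | succ n ih =>
      intro i
      have : (n + 1) * zs + i = (n * zs + (i + zs)) := by ring
      rw [this, ih, key, pow_succ]
      ring
  have hg : Summable (fun p : ℕ × Fin zs => r ^ p.1 * f p.2) := by
    exact Summable.mul_of_nonneg (f := fun k : ℕ => r ^ k) (g := fun j : Fin zs => f j)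
      (summable_geometric_of_lt_one hr0 hr1) (Summable.of_finite)
      (fun k => pow_nonneg hr0 k) (fun j => hfnn j)
  have hcomp : ∀ p : ℕ × Fin zs, f ((Nat.divModEquiv zs).symm p) = r ^ p.1 * f p.2 := by
    intro p
    simp only [Nat.divModEquiv_symm_apply]
    exact keyk p.1 p.2
  have hsumf : Summable f := by
    rw [← (Nat.divModEquiv zs).symm.summable_iff]
    exact hg.congr fun p => (hcomp p).symm
  refine ⟨hsumf, ?_⟩
  have h1 : ∑' i, f i = ∑' p : ℕ × Fin zs, r ^ p.1 * f p.2 := by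
    rw [← (Nat.divModEquiv zs).symm.tsum_eq f]
    exact tsum_congr hcomp
  have h2 : ∑' p : ℕ × Fin zs, r ^ p.1 * f p.2
      = (∑' k : ℕ, r ^ k) * ∑ j : Fin zs, f j := by
    rw [Summable.tsum_prod hg]
    simp only [tsum_fintype]
    rw [← tsum_mul_right]
    congr 1
    funext k
    rw [Finset.mul_sum]
  have h3 : (∑ j : Fin zs, f (j : ℕ)) = ∑ i ∈ Finset.range zs, f i :=
    Fin.sum_univ_eq_sum_range _ _
  rw [h1, h2, tsum_geometric_of_lt_one hr0 hr1, h3, div_eq_mul_inv]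
  ring
end

section
/- Let x ∈ [0,1), y ∈ (0,1), q ∈ ℚ with q ≥ 0, α ∈ ℝ, and l ∈ ℕ, and let z* be the least positive integer such that z*·q is an integer. Then the series ∑_{i=l}^{∞} i·x^i·y^{⌈i·q − α⌉} converges, and ∑_{i=l}^{∞} i·x^i·y^{⌈i·q − α⌉} = (∑_{i=l}^{l+z*−1} i·x^i·y^{⌈i·q − α⌉})/(1 − x^{z*}·y^{z*·q}) + z*·x^{z*}·y^{z*·q}·(∑_{i=l}^{l+z*−1} x^i·y^{⌈i·q − α⌉})/(1 − x^{z*}·y^{z*·q})². -/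
set_option maxHeartbeats 1000000



/-- Let `x ∈ [0,1)`, `y ∈ (0,1)`, `q ∈ ℚ` with `q ≥ 0`, `α ∈ ℝ`, `l ∈ ℕ`,
and let `z*` be the least positive integer such that `z*·q` is an integer (say `z*·q = m`
with `m ∈ ℕ`).  Then `∑_{i=l}^{∞} i·x^i·y^{⌈i·q − α⌉}` converges and equals
`(∑_{i=l}^{l+z*−1} i·x^i·y^{⌈i·q − α⌉})/(1 − x^{z*}·y^{z*·q})
  + z*·x^{z*}·y^{z*·q}·(∑_{i=l}^{l+z*−1} x^i·y^{⌈i·q − α⌉})/(1 − x^{z*}·y^{z*·q})²`. -/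
theorem stmt7 (x : ℝ) (hx0 : 0 ≤ x) (hx1 : x < 1)
    (y : ℝ) (hy0 : 0 < y) (hy1 : y < 1)
    (q : ℚ) (hq : 0 ≤ q) (α : ℝ) (l : ℕ)
    (zs m : ℕ)
    (hzs : IsLeast {z : ℕ | 0 < z ∧ ∃ k : ℤ, (z : ℚ) * q = (k : ℚ)} zs)
    (hm : (zs : ℚ) * q = (m : ℚ)) :
    Summable (fun i : ℕ =>
      ((l + i : ℕ) : ℝ) * x ^ (l + i) * y ^ (⌈((l + i : ℕ) : ℝ) * (q : ℝ) - α⌉ : ℤ)) ∧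
    ∑' i : ℕ, ((l + i : ℕ) : ℝ) * x ^ (l + i) * y ^ (⌈((l + i : ℕ) : ℝ) * (q : ℝ) - α⌉ : ℤ)
      = (∑ i ∈ Finset.range zs,
            ((l + i : ℕ) : ℝ) * x ^ (l + i) * y ^ (⌈((l + i : ℕ) : ℝ) * (q : ℝ) - α⌉ : ℤ))
          / (1 - x ^ zs * y ^ m)
        + (zs : ℝ) * x ^ zs * y ^ m
          * (∑ i ∈ Finset.range zs, x ^ (l + i) * y ^ (⌈((l + i : ℕ) : ℝ) * (q : ℝ) - α⌉ : ℤ))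
          / (1 - x ^ zs * y ^ m) ^ 2 := by
  obtain ⟨⟨hzs0, k0, hk0⟩, hleast⟩ := hzs
  have hne : NeZero zs := ⟨hzs0.ne'⟩
  set c : ℕ → ℤ := fun i => ⌈((l + i : ℕ) : ℝ) * (q : ℝ) - α⌉ with hc
  set g : ℕ → ℝ := fun i => ((l + i : ℕ) : ℝ) * x ^ (l + i) * y ^ (c i) with hg
  set r : ℝ := x ^ zs * y ^ m with hr
  have hr0 : 0 ≤ r := mul_nonneg (pow_nonneg hx0 _) (pow_nonneg hy0.le _)
  have hr1 : r < 1 :=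
    lt_of_le_of_lt (mul_le_of_le_one_right (pow_nonneg hx0 _) (pow_le_one₀ hy0.le hy1.le))
      (pow_lt_one₀ hx0 hx1 hzs0.ne')
  have hden : (0:ℝ) < 1 - r := by linarith
  have hcadd : ∀ j k : ℕ, c (j + zs * k) = c j + (m * k : ℕ) := by
    intro j k
    have hQ : ((zs * k : ℕ) : ℚ) * q = ((m * k : ℕ) : ℚ) := by
      push_cast
      nlinarith [hm]
    have hR : ((zs * k : ℕ) : ℝ) * (q : ℝ) = ((m * k : ℕ) : ℝ) := by
      exact_mod_cast congrArg (fun a : ℚ => (a : ℝ)) hQ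
    have h2 : ((l + (j + zs * k) : ℕ) : ℝ) * (q : ℝ) - α
        = (((l + j : ℕ) : ℝ) * (q : ℝ) - α) + ((m * k : ℕ) : ℤ) := by
      push_cast at hR ⊢
      nlinarith [hR]
    simp only [hc, h2, Int.ceil_add_intCast]
  have hterm : ∀ j k : ℕ, g (j + zs * k) =
      g j * r ^ k + ((zs : ℝ) * x ^ (l + j) * y ^ (c j)) * ((k : ℝ) * r ^ k) := by
    intro j k
    have hx' : x ^ (l + (j + zs * k)) = x ^ (l + j) * (x ^ zs) ^ k := by
      rw [← pow_mul, ← pow_add]; ring_nf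
    have hy' : y ^ (c (j + zs * k)) = y ^ (c j) * (y ^ m) ^ k := by
      rw [hcadd j k, zpow_add₀ hy0.ne', ← pow_mul, zpow_natCast]
    simp only [hg, hx', hy', hr]
    push_cast
    ring
  have hgnonneg : ∀ i, 0 ≤ g i := fun i =>
    mul_nonneg (mul_nonneg (Nat.cast_nonneg _) (pow_nonneg hx0 _)) (zpow_nonneg hy0.le _)
  have hsummul : Summable (fun k : ℕ => (k : ℝ) * r ^ k) := by
    have := summable_pow_mul_geometric_of_norm_lt_one (R := ℝ) (r := r) 1
      (by rwa [Real.norm_eq_abs, abs_of_nonneg hr0])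
    simpa using this
  have hsumfib : ∀ j : ℕ, Summable (fun k : ℕ => g (j + zs * k)) := by
    intro j
    simp only [hterm]
    exact ((summable_geometric_of_lt_one hr0 hr1).mul_left _).add (hsummul.mul_left _)
  set G : ℕ → ℝ := fun j => g j * (1 - r)⁻¹
      + ((zs : ℝ) * x ^ (l + j) * y ^ (c j)) * (r / (1 - r) ^ 2) with hG
  have htsumfib : ∀ j : ℕ, ∑' k : ℕ, g (j + zs * k) = G j := by
    intro j
    simp only [hterm, hG]
    rw [Summable.tsum_add ((summable_geometric_of_lt_one hr0 hr1).mul_left _) (hsummul.mul_left _),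
      tsum_mul_left, tsum_mul_left, tsum_geometric_of_lt_one hr0 hr1,
      tsum_coe_mul_geometric_of_norm_lt_one (by rwa [Real.norm_eq_abs, abs_of_nonneg hr0])]
  -- the product decomposition
  set e := Nat.divModEquiv zs with he
  set f : ℕ × Fin zs → ℝ := fun p => g (p.1 * zs + (p.2 : ℕ)) with hf
  have hfe : ∀ i : ℕ, f (e i) = g i := by
    intro i
    have h1 : (e i).1 * zs + ((e i).2 : ℕ) = i := by
      simp only [he, Nat.divModEquiv, Equiv.coe_fn_mk]
      rw [Fin.val_ofNat]
      exact Nat.div_add_mod' i zs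
    simp only [hf, h1]
  have hfj : ∀ (k : ℕ) (j : Fin zs), f (k, j) = g ((j : ℕ) + zs * k) := by
    intro k j
    simp only [hf]
    congr 1
    ring
  have hfink : ∀ k : ℕ, Summable (fun j : Fin zs => f (k, j)) := fun k => Summable.of_finite
  have hfjk : ∀ j : Fin zs, Summable (fun k : ℕ => f (k, j)) := by
    intro j
    exact (hsumfib (j : ℕ)).congr fun k => (hfj k j).symm
  have hfsum : Summable f := by
    rw [summable_prod_of_nonneg (fun p => hgnonneg _)]
    refine ⟨hfink, ?_⟩
    have h1 : Summable fun k : ℕ => ∑ j : Fin zs, g ((j : ℕ) + zs * k) :=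
      summable_sum (fun j _ => hsumfib (j : ℕ))
    apply h1.congr
    intro k
    rw [tsum_fintype]
    exact Finset.sum_congr rfl fun j _ => (hfj k j).symm
  have hgsum : Summable g := ((e.summable_iff (f := f)).mpr hfsum).congr hfe
  refine ⟨hgsum, ?_⟩
  have key : ∑' i : ℕ, g i = ∑ j ∈ Finset.range zs, G j := by
    calc ∑' i : ℕ, g i = ∑' i : ℕ, f (e i) := tsum_congr fun i => (hfe i).symm
      _ = ∑' p, f p := e.tsum_eq f
      _ = ∑' (k : ℕ) (j : Fin zs), f (k, j) := Summable.tsum_prod' hfsum hfink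
      _ = ∑' (j : Fin zs) (k : ℕ), f (k, j) := by
          have huc : Summable (Function.uncurry fun (k : ℕ) (j : Fin zs) => f (k, j)) := hfsum
          exact (Summable.tsum_comm' huc hfink hfjk).symm
      _ = ∑ j : Fin zs, ∑' k : ℕ, f (k, j) := tsum_fintype _
      _ = ∑ j : Fin zs, G (j : ℕ) := by
          refine Finset.sum_congr rfl fun j _ => ?_
          rw [tsum_congr (fun k => hfj k j), htsumfib]
      _ = ∑ j ∈ Finset.range zs, G j := Fin.sum_univ_eq_sum_range G zs
  rw [key]
  simp only [hG]
  rw [Finset.sum_add_distrib, ← Finset.sum_mul, ← Finset.sum_mul]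
  have hfac : ∑ j ∈ Finset.range zs, (zs : ℝ) * x ^ (l + j) * y ^ (c j)
      = (zs : ℝ) * ∑ j ∈ Finset.range zs, x ^ (l + j) * y ^ (c j) := by
    rw [Finset.mul_sum]
    exact Finset.sum_congr rfl fun j _ => by ring
  rw [hfac]
  have hxy : (zs : ℝ) * x ^ zs * y ^ m
      * (∑ j ∈ Finset.range zs, x ^ (l + j) * y ^ (c j))
      = (zs : ℝ) * r * ∑ j ∈ Finset.range zs, x ^ (l + j) * y ^ (c j) := by
    rw [hr]; ring
  rw [hxy]
  field_simp
end

section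
/- Let x ∈ [0,1), y, s ∈ (0,1), q ∈ ℚ with q ≥ 0, α ∈ ℝ, and l ∈ ℕ, and let z* be the least positive integer such that z*·q is an integer. Then the series ∑_{i=l}^{∞} x^i · y^{⌊i·q⌋} · s^{⌊i·q − α⌋} converges, and ∑_{i=l}^{∞} x^i · y^{⌊i·q⌋} · s^{⌊i·q − α⌋} = (∑_{i=l}^{l+z*−1} x^i · y^{⌊i·q⌋} · s^{⌊i·q − α⌋}) / (1 − x^{z*}·y^{z*·q}·s^{z*·q}). -/
lemma geom_periodic (g : ℕ → ℝ) (r : ℝ) (hr0 : 0 ≤ r) (hr1 : r < 1)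
    (z : ℕ) (hz : z ≠ 0) (hg0 : ∀ n, 0 ≤ g n)
    (hstep : ∀ n, g (n + z) = r * g n) :
    Summable g ∧ ∑' n, g n = (∑ i ∈ Finset.range z, g i) / (1 - r) := by
  haveI : NeZero z := ⟨hz⟩
  have key : ∀ k j, g (k * z + j) = r ^ k * g j := by
    intro k
    induction k with
    | zero => intro j; simp
    | succ k ih =>
      intro j
      have : (k + 1) * z + j = (k * z + j) + z := by ring
      rw [this, hstep, ih, pow_succ]; ring
  set F : ℕ × Fin z → ℝ := fun p => r ^ p.1 * g p.2 with hF
  have hF0 : 0 ≤ F := fun p => mul_nonneg (pow_nonneg hr0 _) (hg0 _)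
  have hgeom : Summable (fun k : ℕ => r ^ k) := summable_geometric_of_lt_one hr0 hr1
  have hFsum : Summable F := by
    rw [summable_prod_of_nonneg hF0]
    constructor
    · intro k; exact Summable.of_finite
    · apply Summable.congr (hgeom.mul_right (∑' j : Fin z, g j))
      intro k
      rw [← tsum_mul_left]
  have hcomp : g = F ∘ (Nat.divModEquiv z) := by
    funext n
    simp only [Function.comp, Nat.divModEquiv, Equiv.coe_fn_mk, hF, Fin.val_natCast]
    conv_lhs => rw [← Nat.div_add_mod' n z]
    exact key _ _
  have hsum : Summable g := by
    rw [hcomp]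
    exact hFsum.comp_injective (Nat.divModEquiv z).injective
  refine ⟨hsum, ?_⟩
  have : ∑' n, g n = ∑' p : ℕ × Fin z, F p := by
    rw [hcomp]; exact ((Nat.divModEquiv z)).tsum_eq F
  rw [this, Summable.tsum_prod hFsum]
  have : ∀ k : ℕ, ∑' j : Fin z, F (k, j) = r ^ k * ∑ i ∈ Finset.range z, g i := by
    intro k
    rw [tsum_fintype]
    simp only [hF]
    rw [← Finset.mul_sum, Fin.sum_univ_eq_sum_range]
  rw [tsum_congr this, tsum_mul_right, tsum_geometric_of_lt_one hr0 hr1]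
  rw [div_eq_mul_inv, mul_comm]


/-- Let `x ∈ [0,1)`, `y, s ∈ (0,1)`, `q ∈ ℚ` with `q ≥ 0`, `α ∈ ℝ`,
`l ∈ ℕ`, and let `z*` be the least positive integer such that `z*·q` is an integer (say
`z*·q = m` with `m ∈ ℕ`).  Then `∑_{i=l}^{∞} x^i · y^{⌊i·q⌋} · s^{⌊i·q − α⌋}` converges and
equals `(∑_{i=l}^{l+z*−1} x^i · y^{⌊i·q⌋} · s^{⌊i·q − α⌋}) / (1 − x^{z*}·y^{z*·q}·s^{z*·q})`. -/
theorem stmt8 (x : ℝ) (hx0 : 0 ≤ x) (hx1 : x < 1)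
    (y : ℝ) (hy0 : 0 < y) (hy1 : y < 1)
    (s : ℝ) (hs0 : 0 < s) (hs1 : s < 1)
    (q : ℚ) (hq : 0 ≤ q) (α : ℝ) (l : ℕ)
    (zs m : ℕ)
    (hzs : IsLeast {z : ℕ | 0 < z ∧ ∃ k : ℤ, (z : ℚ) * q = (k : ℚ)} zs)
    (hm : (zs : ℚ) * q = (m : ℚ)) :
    Summable (fun i : ℕ => x ^ (l + i) * y ^ (⌊((l + i : ℕ) : ℝ) * (q : ℝ)⌋ : ℤ)
      * s ^ (⌊((l + i : ℕ) : ℝ) * (q : ℝ) - α⌋ : ℤ)) ∧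
    ∑' i : ℕ, x ^ (l + i) * y ^ (⌊((l + i : ℕ) : ℝ) * (q : ℝ)⌋ : ℤ)
        * s ^ (⌊((l + i : ℕ) : ℝ) * (q : ℝ) - α⌋ : ℤ)
      = (∑ i ∈ Finset.range zs, x ^ (l + i) * y ^ (⌊((l + i : ℕ) : ℝ) * (q : ℝ)⌋ : ℤ)
            * s ^ (⌊((l + i : ℕ) : ℝ) * (q : ℝ) - α⌋ : ℤ))
        / (1 - x ^ zs * y ^ m * s ^ m) := by
  have hz : zs ≠ 0 := hzs.1.1.ne'
  have hmr : (zs : ℝ) * (q : ℝ) = (m : ℝ) := by exact_mod_cast hm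
  set g : ℕ → ℝ := fun n => x ^ n * y ^ (⌊(n : ℝ) * (q : ℝ)⌋ : ℤ)
      * s ^ (⌊(n : ℝ) * (q : ℝ) - α⌋ : ℤ) with hgdef
  set r : ℝ := x ^ zs * y ^ m * s ^ m with hrdef
  have hr0 : 0 ≤ r := by positivity
  have hr1 : r < 1 := by
    have h1 : y ^ m ≤ 1 := pow_le_one₀ hy0.le hy1.le
    have h2 : s ^ m ≤ 1 := pow_le_one₀ hs0.le hs1.le
    have h3 : x ^ zs < 1 := pow_lt_one₀ hx0 hx1 hz
    have h4 : 0 ≤ x ^ zs := pow_nonneg hx0 _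
    have h5 : 0 < y ^ m := pow_pos hy0 _
    have h6 : 0 < s ^ m := pow_pos hs0 _
    have h7 : y ^ m * s ^ m ≤ 1 := mul_le_one₀ h1 h6.le h2
    have h8 : 0 ≤ y ^ m * s ^ m := le_of_lt (mul_pos h5 h6)
    calc r = x ^ zs * (y ^ m * s ^ m) := by rw [hrdef, mul_assoc]
    _ ≤ x ^ zs * 1 := mul_le_mul_of_nonneg_left h7 h4
    _ = x ^ zs := mul_one _
    _ < 1 := h3

  have hstep : ∀ n : ℕ, g (n + zs) = r * g n := by
    intro n
    have h1 : ((n + zs : ℕ) : ℝ) * q = (n : ℝ) * q + (m : ℕ) := by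
      push_cast
      rw [add_mul, hmr]
    have h2 : (⌊((n + zs : ℕ) : ℝ) * q⌋ : ℤ) = ⌊(n : ℝ) * q⌋ + (m : ℤ) := by
      rw [h1, Int.floor_add_natCast]
    have h3 : (⌊((n + zs : ℕ) : ℝ) * q - α⌋ : ℤ) = ⌊(n : ℝ) * q - α⌋ + (m : ℤ) := by
      rw [h1, show (n : ℝ) * q + (m : ℕ) - α = (n : ℝ) * q - α + (m : ℕ) by ring,
        Int.floor_add_natCast]
    simp only [hgdef, h2, h3, pow_add, zpow_add₀ hy0.ne', zpow_add₀ hs0.ne',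
      zpow_natCast, hrdef]
    ring
  have hg0 : ∀ n : ℕ, 0 ≤ g (l + n) := by
    intro n
    simp only [hgdef]
    positivity
  obtain ⟨hsum, heq⟩ := geom_periodic (fun i => g (l + i)) r hr0 hr1 zs hz hg0
    (fun n => by
      show g (l + (n + zs)) = r * g (l + n)
      rw [show l + (n + zs) = (l + n) + zs from by ring]; exact hstep _)
  exact ⟨hsum, heq⟩
end

section
/- Let x ∈ [0,1), y, s ∈ (0,1), r, q ∈ ℚ with r ≥ 0 and q ≥ 0, κ ∈ ℝ, and l ∈ ℕ, and let z̄ be the least positive integer such that both z̄·r and z̄·r·q are integers. Then the series ∑_{i=l}^{∞} x^i · (∑_{j=⌈i·r−κ⌉}^{⌊i·r⌋} y^j · s^{⌈j·q⌉}) converges, and it equals (∑_{i=l}^{l+z̄−1} x^i · ∑_{j=⌈i·r−κ⌉}^{⌊i·r⌋} y^j · s^{⌈j·q⌉}) / (1 − x^{z̄}·y^{z̄·r}·s^{z̄·r·q}), where the inner sum runs over integers j and is defined to be 0 when ⌈i·r−κ⌉ > ⌊i·r⌋. -/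
noncomputable def aux9 (x y s : ℝ) (r q : ℚ) (κ : ℝ) (n : ℕ) : ℝ :=
  x ^ n * ∑ j ∈ Finset.Icc (⌈(n : ℝ) * (r : ℝ) - κ⌉ : ℤ) (⌊(n : ℝ) * (r : ℝ)⌋ : ℤ),
    y ^ j * s ^ (⌈(j : ℝ) * (q : ℝ)⌉ : ℤ)

/-- Let `x ∈ [0,1)`, `y, s ∈ (0,1)`, `r, q ∈ ℚ` with `r ≥ 0`, `q ≥ 0`,
`κ ∈ ℝ`, `l ∈ ℕ`, and let `z̄` be the least positive integer such that `z̄·r` and `z̄·r·q`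
are both integers (say `z̄·r = mr` and `z̄·r·q = mq` with `mr, mq ∈ ℕ`).  Then the series
`∑_{i=l}^{∞} x^i · (∑_{j=⌈i·r−κ⌉}^{⌊i·r⌋} y^j · s^{⌈j·q⌉})` converges and equals
`(∑_{i=l}^{l+z̄−1} x^i · ∑_{j=⌈i·r−κ⌉}^{⌊i·r⌋} y^j · s^{⌈j·q⌉}) / (1 − x^{z̄}·y^{z̄·r}·s^{z̄·r·q})`,
the inner sum (over integers `j`) being `0` when `⌈i·r−κ⌉ > ⌊i·r⌋`. -/
theorem stmt9 (x : ℝ) (hx0 : 0 ≤ x) (hx1 : x < 1)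
    (y : ℝ) (hy0 : 0 < y) (hy1 : y < 1)
    (s : ℝ) (hs0 : 0 < s) (hs1 : s < 1)
    (r q : ℚ) (hr : 0 ≤ r) (hq : 0 ≤ q) (κ : ℝ) (l : ℕ)
    (zb mr mq : ℕ)
    (hzb : IsLeast {z : ℕ | 0 < z ∧ (∃ a : ℤ, (z : ℚ) * r = (a : ℚ))
      ∧ (∃ b : ℤ, (z : ℚ) * r * q = (b : ℚ))} zb)
    (hmr : (zb : ℚ) * r = (mr : ℚ)) (hmq : (zb : ℚ) * r * q = (mq : ℚ)) :
    Summable (fun i : ℕ => x ^ (l + i)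
      * ∑ j ∈ Finset.Icc (⌈((l + i : ℕ) : ℝ) * (r : ℝ) - κ⌉ : ℤ) (⌊((l + i : ℕ) : ℝ) * (r : ℝ)⌋ : ℤ),
          y ^ j * s ^ (⌈(j : ℝ) * (q : ℝ)⌉ : ℤ)) ∧
    ∑' i : ℕ, x ^ (l + i)
        * ∑ j ∈ Finset.Icc (⌈((l + i : ℕ) : ℝ) * (r : ℝ) - κ⌉ : ℤ) (⌊((l + i : ℕ) : ℝ) * (r : ℝ)⌋ : ℤ),
            y ^ j * s ^ (⌈(j : ℝ) * (q : ℝ)⌉ : ℤ)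
      = (∑ i ∈ Finset.range zb, x ^ (l + i)
            * ∑ j ∈ Finset.Icc (⌈((l + i : ℕ) : ℝ) * (r : ℝ) - κ⌉ : ℤ) (⌊((l + i : ℕ) : ℝ) * (r : ℝ)⌋ : ℤ),
                y ^ j * s ^ (⌈(j : ℝ) * (q : ℝ)⌉ : ℤ))
        / (1 - x ^ zb * y ^ mr * s ^ mq) := by
  have hzb0 : 0 < zb := hzb.1.1
  have hy0' : y ≠ 0 := ne_of_gt hy0
  have hs0' : s ≠ 0 := ne_of_gt hs0
  set ρ : ℝ := x ^ zb * y ^ mr * s ^ mq with hρ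
  have hzr : (zb : ℝ) * (r : ℝ) = (mr : ℝ) := by exact_mod_cast hmr
  have hmrq : (mr : ℝ) * (q : ℝ) = (mq : ℝ) := by
    have h1 : (mr : ℚ) * q = (mq : ℚ) := by rw [← hmr]; exact hmq
    exact_mod_cast h1
  -- key periodicity
  have key : ∀ n : ℕ, aux9 x y s r q κ (n + zb) = ρ * aux9 x y s r q κ n := by
    intro n
    unfold aux9
    have hc : (⌈((n + zb : ℕ) : ℝ) * (r : ℝ) - κ⌉ : ℤ) = ⌈(n : ℝ) * (r : ℝ) - κ⌉ + (mr : ℤ) := by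
      have h : ((n + zb : ℕ) : ℝ) * (r : ℝ) - κ = ((n : ℝ) * (r : ℝ) - κ) + ((mr : ℤ) : ℝ) := by
        push_cast; linear_combination hzr
      rw [h, Int.ceil_add_intCast]
    have hf : (⌊((n + zb : ℕ) : ℝ) * (r : ℝ)⌋ : ℤ) = ⌊(n : ℝ) * (r : ℝ)⌋ + (mr : ℤ) := by
      have h : ((n + zb : ℕ) : ℝ) * (r : ℝ) = ((n : ℝ) * (r : ℝ)) + ((mr : ℤ) : ℝ) := by
        push_cast; linear_combination hzr
      rw [h, Int.floor_add_intCast]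
    rw [hc, hf, ← Finset.map_add_right_Icc, Finset.sum_map]
    have hterm : ∀ j : ℤ,
        y ^ (addRightEmbedding (mr : ℤ) j) * s ^ (⌈((addRightEmbedding (mr : ℤ) j : ℤ) : ℝ) * (q : ℝ)⌉ : ℤ)
        = (y ^ mr * s ^ mq) * (y ^ j * s ^ (⌈(j : ℝ) * (q : ℝ)⌉ : ℤ)) := by
      intro j
      have he : addRightEmbedding (mr : ℤ) j = j + (mr : ℤ) := rfl
      have hcq : (⌈((j + (mr : ℤ) : ℤ) : ℝ) * (q : ℝ)⌉ : ℤ) = ⌈(j : ℝ) * (q : ℝ)⌉ + (mq : ℤ) := by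
        have h : ((j + (mr : ℤ) : ℤ) : ℝ) * (q : ℝ) = (j : ℝ) * (q : ℝ) + ((mq : ℤ) : ℝ) := by
          push_cast; linear_combination hmrq
        rw [h, Int.ceil_add_intCast]
      rw [he, hcq, zpow_add₀ hy0', zpow_add₀ hs0', zpow_natCast, zpow_natCast]
      ring
    calc x ^ (n + zb) * ∑ j ∈ Finset.Icc (⌈(n : ℝ) * (r : ℝ) - κ⌉ : ℤ) (⌊(n : ℝ) * (r : ℝ)⌋ : ℤ),
          y ^ (addRightEmbedding (mr : ℤ) j) * s ^ (⌈((addRightEmbedding (mr : ℤ) j : ℤ) : ℝ) * (q : ℝ)⌉ : ℤ)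
        = x ^ (n + zb) * ∑ j ∈ Finset.Icc (⌈(n : ℝ) * (r : ℝ) - κ⌉ : ℤ) (⌊(n : ℝ) * (r : ℝ)⌋ : ℤ),
          (y ^ mr * s ^ mq) * (y ^ j * s ^ (⌈(j : ℝ) * (q : ℝ)⌉ : ℤ)) := by
          congr 1; exact Finset.sum_congr rfl fun j _ => hterm j
      _ = ρ * (x ^ n * ∑ j ∈ Finset.Icc (⌈(n : ℝ) * (r : ℝ) - κ⌉ : ℤ) (⌊(n : ℝ) * (r : ℝ)⌋ : ℤ),
          y ^ j * s ^ (⌈(j : ℝ) * (q : ℝ)⌉ : ℤ)) := by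
          rw [← Finset.mul_sum, hρ, pow_add]; ring
  set G : ℕ → ℝ := fun i => aux9 x y s r q κ (l + i) with hGdef
  have keyG : ∀ i : ℕ, G (i + zb) = ρ * G i := by
    intro i
    show aux9 x y s r q κ (l + (i + zb)) = ρ * aux9 x y s r q κ (l + i)
    rw [← add_assoc]; exact key (l + i)
  have iter : ∀ (a b : ℕ), G (a * zb + b) = ρ ^ a * G b := by
    intro a
    induction a with
    | zero => intro b; simp
    | succ a ih =>
      intro b
      have h1 : (a + 1) * zb + b = (a * zb + b) + zb := by ring
      rw [h1, keyG, ih, pow_succ]; ring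
  have hGnn : ∀ i, 0 ≤ G i := by
    intro i
    apply mul_nonneg (pow_nonneg hx0 _)
    exact Finset.sum_nonneg fun j _ => mul_nonneg (zpow_nonneg hy0.le _) (zpow_nonneg hs0.le _)
  have hρ0 : 0 ≤ ρ := by positivity
  have hρ1 : ρ < 1 := by
    rw [hρ]
    have h1 : x ^ zb < 1 := pow_lt_one₀ hx0 hx1 hzb0.ne'
    have h2 : y ^ mr ≤ 1 := pow_le_one₀ hy0.le hy1.le
    have h3 : s ^ mq ≤ 1 := pow_le_one₀ hs0.le hs1.le
    have h4 : y ^ mr * s ^ mq ≤ 1 := by nlinarith [pow_nonneg hy0.le mr, pow_nonneg hs0.le mq]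
    nlinarith [pow_nonneg hx0 zb, mul_nonneg (pow_nonneg hy0.le mr) (pow_nonneg hs0.le mq)]
  haveI : NeZero zb := ⟨hzb0.ne'⟩
  have hHsum : Summable (fun p : ℕ × Fin zb => ρ ^ p.1 * G (p.2 : ℕ)) :=
    Summable.mul_of_nonneg (f := fun a : ℕ => ρ ^ a) (g := fun b : Fin zb => G (b : ℕ))
      (summable_geometric_of_lt_one hρ0 hρ1) (Summable.of_finite)
      (fun i => pow_nonneg hρ0 i) (fun b => hGnn _)
  have hG : ∀ i : ℕ, G i = ρ ^ (i / zb) * G (i % zb) := by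
    intro i
    conv_lhs => rw [← Nat.div_add_mod' i zb]
    exact iter _ _
  have hcomp : ∀ i : ℕ, (fun p : ℕ × Fin zb => ρ ^ p.1 * G (p.2 : ℕ)) (Nat.divModEquiv zb i) = G i := by
    intro i
    simp only [Nat.divModEquiv_apply]
    rw [Fin.val_ofNat, ← hG]
  have hGsum : Summable G := by
    have h := hHsum.comp_injective (Nat.divModEquiv zb).injective
    exact h.congr hcomp
  have htsum : ∑' i : ℕ, G i = (∑ i ∈ Finset.range zb, G i) / (1 - ρ) := by
    have h1 : ∑' i : ℕ, G i = ∑' p : ℕ × Fin zb, ρ ^ p.1 * G (p.2 : ℕ) := by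
      rw [← (Nat.divModEquiv zb).tsum_eq]
      exact tsum_congr fun i => (hcomp i).symm
    rw [h1, Summable.tsum_prod hHsum]
    have h2 : ∀ a : ℕ, (∑' b : Fin zb, ρ ^ a * G (b : ℕ)) = ρ ^ a * ∑ i ∈ Finset.range zb, G i := by
      intro a
      rw [tsum_fintype, ← Finset.mul_sum]
      congr 1
      exact Fin.sum_univ_eq_sum_range (fun i => G i) zb
    calc (∑' (a : ℕ) (b : Fin zb), ρ ^ a * G (b : ℕ))
        = ∑' a : ℕ, ρ ^ a * ∑ i ∈ Finset.range zb, G i := tsum_congr h2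
      _ = (∑' a : ℕ, ρ ^ a) * ∑ i ∈ Finset.range zb, G i := tsum_mul_right
      _ = (∑ i ∈ Finset.range zb, G i) / (1 - ρ) := by
          rw [tsum_geometric_of_lt_one hρ0 hρ1, div_eq_mul_inv, mul_comm]
  have hfun : (fun i : ℕ => x ^ (l + i)
      * ∑ j ∈ Finset.Icc (⌈((l + i : ℕ) : ℝ) * (r : ℝ) - κ⌉ : ℤ) (⌊((l + i : ℕ) : ℝ) * (r : ℝ)⌋ : ℤ),
          y ^ j * s ^ (⌈(j : ℝ) * (q : ℝ)⌉ : ℤ)) = G := by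
    funext i; rfl
  rw [hfun]
  exact ⟨hGsum, htsum⟩
end

section
/- Let p_m, p_b ∈ (0,1), let t_m, t_b be positive integers, and let t_msg ≥ 0 be real. With q_m, q_b, g, m*, δ, β as in the context, the triple series ∑_{m_1,m_2,m_b ≥ 1} (m_1·t_m + t_msg)·p_m²·p_b·q_m^{m_1+m_2−2}·q_b^{m_b−1}·1[m_1 = m_2 and m_1·t_m = m_b·t_b] converges and equals δ·β/(1−β) · (m*·t_m/(1−β) + t_msg). -/
set_option maxHeartbeats 1000000 in
/-- Let `p_m, p_b ∈ (0,1)`, `t_m, t_b` positive integers, `t_msg ≥ 0` real.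
With `q_m := 1 − p_m`, `q_b := 1 − p_b`, `g := gcd(t_m,t_b)`, `m* := t_b/g`,
`δ := p_m²·p_b/(q_m²·q_b)` and `β := q_m^{2m*}·q_b^{t_m/g}`, the triple series
`∑_{m₁,m₂,m_b ≥ 1} (m₁·t_m + t_msg)·p_m²·p_b·q_m^{m₁+m₂−2}·q_b^{m_b−1}·1[m₁ = m₂ ∧ m₁·t_m = m_b·t_b]`
(indexed here by `(a,b,c) ∈ ℕ³` with `m₁ = a+1`, `m₂ = b+1`, `m_b = c+1`) converges and
equals `δ·β/(1−β)·(m*·t_m/(1−β) + t_msg)`. -/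
theorem stmt11 (pm pb : ℝ) (hpm0 : 0 < pm) (hpm1 : pm < 1) (hpb0 : 0 < pb) (hpb1 : pb < 1)
    (tm tb : ℕ) (htm : 0 < tm) (htb : 0 < tb) (tmsg : ℝ) (htmsg : 0 ≤ tmsg)
    (qm qb : ℝ) (hqm : qm = 1 - pm) (hqb : qb = 1 - pb)
    (g mstar : ℕ) (hg : g = Nat.gcd tm tb) (hmstar : mstar = tb / g)
    (δ β : ℝ) (hδ : δ = pm ^ 2 * pb / (qm ^ 2 * qb)) (hβ : β = qm ^ (2 * mstar) * qb ^ (tm / g)) :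
    Summable (fun p : ℕ × ℕ × ℕ =>
      ((((p.1 + 1) * tm : ℕ) : ℝ) + tmsg) * pm ^ 2 * pb * qm ^ (p.1 + p.2.1) * qb ^ p.2.2
        * (if p.1 + 1 = p.2.1 + 1 ∧ (p.1 + 1) * tm = (p.2.2 + 1) * tb then 1 else 0)) ∧
    ∑' p : ℕ × ℕ × ℕ,
        ((((p.1 + 1) * tm : ℕ) : ℝ) + tmsg) * pm ^ 2 * pb * qm ^ (p.1 + p.2.1) * qb ^ p.2.2
          * (if p.1 + 1 = p.2.1 + 1 ∧ (p.1 + 1) * tm = (p.2.2 + 1) * tb then 1 else 0)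
      = δ * β / (1 - β) * ((mstar : ℝ) * (tm : ℝ) / (1 - β) + tmsg) := by
  -- basic positivity facts
  have hqm0 : 0 < qm := by rw [hqm]; linarith
  have hqm1 : qm < 1 := by rw [hqm]; linarith
  have hqb0 : 0 < qb := by rw [hqb]; linarith
  have hqb1 : qb < 1 := by rw [hqb]; linarith
  have hqmne : qm ≠ 0 := ne_of_gt hqm0
  have hqbne : qb ≠ 0 := ne_of_gt hqb0
  set u : ℕ := tm / g with hu
  have hg0 : 0 < g := by
    rw [hg]; exact Nat.gcd_pos_of_pos_left _ htm
  have hgd_m : g ∣ tm := by rw [hg]; exact Nat.gcd_dvd_left _ _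
  have hgd_b : g ∣ tb := by rw [hg]; exact Nat.gcd_dvd_right _ _
  have hug : u * g = tm := Nat.div_mul_cancel hgd_m
  have hvg : mstar * g = tb := by rw [hmstar]; exact Nat.div_mul_cancel hgd_b
  have hu0 : 0 < u := Nat.div_pos (Nat.le_of_dvd htm hgd_m) hg0
  have hv0 : 0 < mstar := by
    rw [hmstar]; exact Nat.div_pos (Nat.le_of_dvd htb hgd_b) hg0
  have cop : Nat.Coprime u mstar := by
    rw [hu, hmstar, hg]; exact Nat.coprime_div_gcd_div_gcd (hg ▸ hg0)
  -- β bounds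
  have hβ0 : 0 < β := by rw [hβ]; positivity
  have hβ1 : β < 1 := by
    rw [hβ]
    calc qm ^ (2 * mstar) * qb ^ u ≤ qm ^ (2 * mstar) * 1 := by
          have : qb ^ u ≤ 1 := pow_le_one₀ (le_of_lt hqb0) (le_of_lt hqb1)
          nlinarith [pow_pos hqm0 (2 * mstar)]
      _ < 1 := by
          rw [mul_one]
          exact pow_lt_one₀ (le_of_lt hqm0) hqm1 (by omega)
  have h1β : (0:ℝ) < 1 - β := by linarith
  have h1βne : (1:ℝ) - β ≠ 0 := ne_of_gt h1β
  -- the function and the parametrization of its support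
  set F : ℕ × ℕ × ℕ → ℝ := fun p =>
      ((((p.1 + 1) * tm : ℕ) : ℝ) + tmsg) * pm ^ 2 * pb * qm ^ (p.1 + p.2.1) * qb ^ p.2.2
        * (if p.1 + 1 = p.2.1 + 1 ∧ (p.1 + 1) * tm = (p.2.2 + 1) * tb then 1 else 0) with hF
  set e : ℕ → ℕ × ℕ × ℕ := fun n =>
      ((n + 1) * mstar - 1, (n + 1) * mstar - 1, (n + 1) * u - 1) with he
  have he_inj : Function.Injective e := by
    intro a b hab
    have h1 : (a + 1) * mstar - 1 = (b + 1) * mstar - 1 := congrArg Prod.fst hab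
    have : (a + 1) * mstar = (b + 1) * mstar := by
      have ha1 : 1 ≤ (a + 1) * mstar := Nat.one_le_iff_ne_zero.2 (by positivity)
      have hb1 : 1 ≤ (b + 1) * mstar := Nat.one_le_iff_ne_zero.2 (by positivity)
      omega
    have := Nat.eq_of_mul_eq_mul_right hv0 this
    omega
  have hsupp : Function.support F ⊆ Set.range e := by
    intro p hp
    have hind : p.1 + 1 = p.2.1 + 1 ∧ (p.1 + 1) * tm = (p.2.2 + 1) * tb := by
      by_contra hc
      apply hp
      simp only [hF, if_neg hc, mul_zero]
    obtain ⟨h12, hmb⟩ := hind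
    -- (p.1+1) * u = (p.2.2+1) * mstar
    have hkey : (p.1 + 1) * u = (p.2.2 + 1) * mstar := by
      have : (p.1 + 1) * u * g = (p.2.2 + 1) * mstar * g := by
        rw [mul_assoc, hug, mul_assoc, hvg]; exact hmb
      exact Nat.eq_of_mul_eq_mul_right hg0 this
    have hdvd : mstar ∣ (p.1 + 1) := by
      have : mstar ∣ (p.1 + 1) * u := ⟨p.2.2 + 1, by rw [hkey]; ring⟩
      exact (Nat.Coprime.dvd_of_dvd_mul_right cop.symm this)
    obtain ⟨k, hk⟩ := hdvd
    have hk0 : 0 < k := by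
      rcases Nat.eq_zero_or_pos k with h | h
      · exfalso; rw [h, mul_zero] at hk; omega
      · exact h
    have hc : p.2.2 + 1 = k * u := by
      have : mstar * (k * u) = mstar * ((p.2.2 + 1)) := by
        calc mstar * (k * u) = (mstar * k) * u := by ring
          _ = (p.1 + 1) * u := by rw [← hk]
          _ = (p.2.2 + 1) * mstar := hkey
          _ = mstar * (p.2.2 + 1) := by ring
      exact (Nat.eq_of_mul_eq_mul_left hv0 this).symm
    refine ⟨k - 1, ?_⟩
    have hkk : k - 1 + 1 = k := by omega
    have h1 : (k - 1 + 1) * mstar - 1 = p.1 := by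
      rw [hkk]; have : p.1 + 1 = k * mstar := by rw [hk]; ring
      omega
    have h3 : (k - 1 + 1) * u - 1 = p.2.2 := by
      rw [hkk]; omega
    have h2 : (k - 1 + 1) * mstar - 1 = p.2.1 := by rw [h1]; omega
    simp only [he]
    exact Prod.ext h1 (Prod.ext h2 h3)
  -- value of F on the range
  have hFe : ∀ n : ℕ, F (e n) =
      (δ * β * ((mstar : ℝ) * (tm : ℝ))) * ((n + 1 : ℝ) * β ^ n) + (δ * β * tmsg) * β ^ n := by
    intro n
    have hv1 : 1 ≤ (n + 1) * mstar := Nat.one_le_iff_ne_zero.2 (by positivity)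
    have hu1 : 1 ≤ (n + 1) * u := Nat.one_le_iff_ne_zero.2 (by positivity)
    have ha1 : (n + 1) * mstar - 1 + 1 = (n + 1) * mstar := by omega
    have hb1 : (n + 1) * u - 1 + 1 = (n + 1) * u := by omega
    have hq : pm ^ 2 * pb * qm ^ (2 * ((n + 1) * mstar) - 2) * qb ^ ((n + 1) * u - 1)
        = δ * β ^ (n + 1) := by
      have h2 : 2 ≤ 2 * ((n + 1) * mstar) := by omega
      rw [pow_sub₀ _ hqmne h2, pow_sub₀ _ hqbne hu1, pow_one,
        show 2 * ((n + 1) * mstar) = (2 * mstar) * (n + 1) from by ring,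
        show (n + 1) * u = u * (n + 1) from by ring, pow_mul, pow_mul, hδ, hβ, mul_pow]
      field_simp
      ring
    have hC : ((n + 1) * mstar - 1) + 1 = ((n + 1) * mstar - 1) + 1 ∧
        (((n + 1) * mstar - 1) + 1) * tm = (((n + 1) * u - 1) + 1) * tb :=
      ⟨rfl, by rw [ha1, hb1, ← hug, ← hvg]; ring⟩
    show ((((((n + 1) * mstar - 1) + 1) * tm : ℕ) : ℝ) + tmsg) * pm ^ 2 * pb
        * qm ^ (((n + 1) * mstar - 1) + ((n + 1) * mstar - 1)) * qb ^ ((n + 1) * u - 1)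
        * (if (((n + 1) * mstar - 1) + 1 = ((n + 1) * mstar - 1) + 1 ∧
            (((n + 1) * mstar - 1) + 1) * tm = (((n + 1) * u - 1) + 1) * tb) then (1:ℝ) else 0) = _
    rw [if_pos hC, mul_one,
      show ((n + 1) * mstar - 1) + ((n + 1) * mstar - 1) = 2 * ((n + 1) * mstar) - 2 from by omega,
      ha1]
    calc ((((n + 1) * mstar * tm : ℕ) : ℝ) + tmsg) * pm ^ 2 * pb
          * qm ^ (2 * ((n + 1) * mstar) - 2) * qb ^ ((n + 1) * u - 1)
        = (((n : ℝ) + 1) * (mstar : ℝ) * (tm : ℝ) + tmsg)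
            * (pm ^ 2 * pb * qm ^ (2 * ((n + 1) * mstar) - 2) * qb ^ ((n + 1) * u - 1)) := by
          push_cast; ring
      _ = (((n : ℝ) + 1) * (mstar : ℝ) * (tm : ℝ) + tmsg) * (δ * β ^ (n + 1)) := by rw [hq]
      _ = (δ * β * ((mstar : ℝ) * (tm : ℝ))) * ((n + 1 : ℝ) * β ^ n) + (δ * β * tmsg) * β ^ n := by
          ring
  -- the sum over the parametrization
  have hS : HasSum (F ∘ e)
      (δ * β / (1 - β) * ((mstar : ℝ) * (tm : ℝ) / (1 - β) + tmsg)) := by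
    have hβnorm : ‖β‖ < 1 := by rw [Real.norm_eq_abs, abs_of_pos hβ0]; exact hβ1
    have h1 : HasSum (fun n : ℕ => (n : ℝ) * β ^ n) (β / (1 - β) ^ 2) :=
      hasSum_coe_mul_geometric_of_norm_lt_one hβnorm
    have h2 : HasSum (fun n : ℕ => β ^ n) (1 / (1 - β)) := by
      simpa using hasSum_geometric_of_lt_one (le_of_lt hβ0) hβ1
    have h3 : HasSum (fun n : ℕ => ((n : ℝ) + 1) * β ^ n) (β / (1 - β) ^ 2 + 1 / (1 - β)) := by
      have := h1.add h2
      convert this using 2 with n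
      ring
    have h4 := ((h3.mul_left (δ * β * ((mstar : ℝ) * (tm : ℝ)))).add
      (h2.mul_left (δ * β * tmsg)))
    have heq : (fun n : ℕ =>
        (δ * β * ((mstar : ℝ) * (tm : ℝ))) * (((n : ℝ) + 1) * β ^ n)
          + (δ * β * tmsg) * β ^ n) = F ∘ e := by
      funext n
      rw [Function.comp_apply, hFe n]
    rw [heq] at h4
    convert h4 using 1
    · rfl
    rw [div_add_div _ _ (pow_ne_zero 2 h1βne) h1βne, div_add' _ _ _ h1βne, div_mul_div_comm,
      mul_div_assoc', mul_one_div, div_add_div _ _ (by positivity) h1βne, div_eq_div_iff (by positivity) (by positivity)]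
    ring
  have hFsum : HasSum F (δ * β / (1 - β) * ((mstar : ℝ) * (tm : ℝ) / (1 - β) + tmsg)) :=
    (he_inj.hasSum_iff (fun x hx => by
      by_contra hF0
      exact hx (hsupp hF0))).1 hS
  exact ⟨hFsum.summable, hFsum.tsum_eq⟩
end

section
/- Let p_m, p_b ∈ (0,1), let t_m, t_b be positive integers, let t_msg ≥ 0 be real, and let t' ≥ 0 be an integer. With q_m, q_b, g, m*, δ, β as in the context, and setting γ := q_m^{m*}·q_b^{t_m/g} and ξ := ⌊(t_m + t')/(m*·t_m)⌋, the triple series ∑_{m_1,m_2,m_b ≥ 1} (m_1·t_m + t_msg)·p_m²·p_b·q_m^{m_1+m_2−2}·q_b^{m_b−1}·1[m_1·t_m = m_b·t_b and m_2 ≤ m_1 and (m_1 − m_2)·t_m ≤ t'] converges and equals (δ·q_m·m*·t_m/p_m)·( γ·(1 − (ξ+1)·γ^ξ + ξ·γ^{ξ+1})/(1−γ)² − β·(1 − (ξ+1)·β^ξ + ξ·β^{ξ+1})/(1−β)² ) + (δ·q_m·t_msg/p_m)·( γ·(1 − γ^ξ)/(1−γ) − β·(1 − β^ξ)/(1−β)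 ) + (δ·(q_m^{−⌊t'/t_m⌋} − q_m)·β^{ξ+1}/(p_m·(1−β)))·( m*·t_m·(ξ + 1 − ξ·β)/(1−β) + t_msg ). -/
open Finset

private lemma geom_range (x : ℝ) (hx : x ≠ 1) (n : ℕ) :
    ∑ j ∈ Finset.range n, x ^ (j + 1) = x * (1 - x ^ n) / (1 - x) := by
  have h : ∑ j ∈ Finset.range n, x ^ (j + 1) = x * ∑ j ∈ Finset.range n, x ^ j := by
    rw [Finset.mul_sum]; exact Finset.sum_congr rfl (fun i _ => by ring)
  have hx' : x - 1 ≠ 0 := sub_ne_zero.mpr hx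
  have h1x : (1:ℝ) - x ≠ 0 := sub_ne_zero.mpr (Ne.symm hx)
  rw [h, geom_sum_eq hx]
  field_simp
  ring

private lemma geom_range_mul (x : ℝ) (hx : x ≠ 1) (n : ℕ) :
    ∑ j ∈ Finset.range n, ((j : ℝ) + 1) * x ^ (j + 1)
      = x * (1 - ((n : ℝ) + 1) * x ^ n + (n : ℝ) * x ^ (n + 1)) / (1 - x) ^ 2 := by
  have hx' : (1 : ℝ) - x ≠ 0 := sub_ne_zero.mpr (Ne.symm hx)
  induction n with
  | zero => norm_num
  | succ n ih =>
    rw [Finset.sum_range_succ, ih]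
    push_cast
    field_simp
    ring

private lemma tsum_ite_geom (x : ℝ) (hx1 : x < 1) (L N : ℕ) (hLN : L ≤ N) :
    (∑' b : ℕ, if L ≤ b ∧ b < N then x ^ b else 0) = (x ^ L - x ^ N) / (1 - x) := by
  have hxne : x ≠ 1 := ne_of_lt hx1
  have hx' : x - 1 ≠ 0 := sub_ne_zero.mpr hxne
  have h1x : (1:ℝ) - x ≠ 0 := sub_ne_zero.mpr (Ne.symm hxne)
  rw [tsum_eq_sum (s := Finset.Ico L N) (fun b hb => by
    rw [if_neg]; simpa [Finset.mem_Ico] using hb)]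
  rw [Finset.sum_congr rfl (fun b hb => if_pos (Finset.mem_Ico.mp hb)), geom_sum_Ico hxne hLN]
  field_simp
  ring

private lemma summable_add_one_mul_geom (x : ℝ) (h0 : 0 ≤ x) (h1 : x < 1) :
    Summable (fun n : ℕ => ((n : ℝ) + 1) * x ^ n) := by
  have h := summable_pow_mul_geometric_of_norm_lt_one 1 (r := x)
    (by rwa [Real.norm_eq_abs, abs_of_nonneg h0])
  simp only [pow_one] at h
  have h2 := summable_geometric_of_lt_one h0 h1
  simpa [add_mul] using h.add h2

set_option maxHeartbeats 4000000 in
/-- Let `p_m, p_b ∈ (0,1)`, `t_m, t_b` positive integers, `t_msg ≥ 0` real,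
`t' ≥ 0` an integer.  With `q_m := 1 − p_m`, `q_b := 1 − p_b`, `g := gcd(t_m,t_b)`,
`m* := t_b/g`, `δ := p_m²·p_b/(q_m²·q_b)`, `β := q_m^{2m*}·q_b^{t_m/g}`,
`γ := q_m^{m*}·q_b^{t_m/g}` and `ξ := ⌊(t_m + t')/(m*·t_m)⌋`, the triple series
`∑_{m₁,m₂,m_b ≥ 1} (m₁·t_m + t_msg)·p_m²·p_b·q_m^{m₁+m₂−2}·q_b^{m_b−1}·
  1[m₁·t_m = m_b·t_b ∧ m₂ ≤ m₁ ∧ (m₁−m₂)·t_m ≤ t']`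
(indexed by `(a,b,c) ∈ ℕ³` with `m₁ = a+1`, `m₂ = b+1`, `m_b = c+1`) converges and equals
`(δ·q_m·m*·t_m/p_m)·(γ·(1−(ξ+1)γ^ξ+ξγ^{ξ+1})/(1−γ)² − β·(1−(ξ+1)β^ξ+ξβ^{ξ+1})/(1−β)²)
 + (δ·q_m·t_msg/p_m)·(γ·(1−γ^ξ)/(1−γ) − β·(1−β^ξ)/(1−β))
 + (δ·(q_m^{−⌊t'/t_m⌋} − q_m)·β^{ξ+1}/(p_m·(1−β)))·(m*·t_m·(ξ+1−ξ·β)/(1−β) + t_msg)`. -/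
theorem stmt12 (pm pb : ℝ) (hpm0 : 0 < pm) (hpm1 : pm < 1) (hpb0 : 0 < pb) (hpb1 : pb < 1)
    (tm tb : ℕ) (htm : 0 < tm) (htb : 0 < tb) (tmsg : ℝ) (htmsg : 0 ≤ tmsg) (t' : ℕ)
    (qm qb : ℝ) (hqm : qm = 1 - pm) (hqb : qb = 1 - pb)
    (g mstar : ℕ) (hg : g = Nat.gcd tm tb) (hmstar : mstar = tb / g)
    (δ β γ : ℝ) (hδ : δ = pm ^ 2 * pb / (qm ^ 2 * qb))
    (hβ : β = qm ^ (2 * mstar) * qb ^ (tm / g)) (hγ : γ = qm ^ mstar * qb ^ (tm / g))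
    (ξ : ℕ) (hξ : ξ = (tm + t') / (mstar * tm)) :
    Summable (fun p : ℕ × ℕ × ℕ =>
      ((((p.1 + 1) * tm : ℕ) : ℝ) + tmsg) * pm ^ 2 * pb * qm ^ (p.1 + p.2.1) * qb ^ p.2.2
        * (if (p.1 + 1) * tm = (p.2.2 + 1) * tb ∧ p.2.1 + 1 ≤ p.1 + 1
              ∧ ((p.1 + 1) - (p.2.1 + 1)) * tm ≤ t' then 1 else 0)) ∧
    ∑' p : ℕ × ℕ × ℕ,
        ((((p.1 + 1) * tm : ℕ) : ℝ) + tmsg) * pm ^ 2 * pb * qm ^ (p.1 + p.2.1) * qb ^ p.2.2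
          * (if (p.1 + 1) * tm = (p.2.2 + 1) * tb ∧ p.2.1 + 1 ≤ p.1 + 1
                ∧ ((p.1 + 1) - (p.2.1 + 1)) * tm ≤ t' then 1 else 0)
      = (δ * qm * (mstar : ℝ) * (tm : ℝ) / pm)
          * (γ * (1 - ((ξ : ℝ) + 1) * γ ^ ξ + (ξ : ℝ) * γ ^ (ξ + 1)) / (1 - γ) ^ 2
             - β * (1 - ((ξ : ℝ) + 1) * β ^ ξ + (ξ : ℝ) * β ^ (ξ + 1)) / (1 - β) ^ 2)
        + (δ * qm * tmsg / pm) * (γ * (1 - γ ^ ξ) / (1 - γ) - β * (1 - β ^ ξ) / (1 - β))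
        + (δ * (qm ^ (-((t' / tm : ℕ) : ℤ)) - qm) * β ^ (ξ + 1) / (pm * (1 - β)))
          * ((mstar : ℝ) * (tm : ℝ) * ((ξ : ℝ) + 1 - (ξ : ℝ) * β) / (1 - β) + tmsg) := by
  have hqm0 : 0 < qm := by rw [hqm]; linarith
  have hqm1 : qm < 1 := by rw [hqm]; linarith
  have hqb0 : 0 < qb := by rw [hqb]; linarith
  have hqb1 : qb < 1 := by rw [hqb]; linarith
  have hg0 : 0 < g := by rw [hg]; exact Nat.gcd_pos_of_pos_left tb htm
  set s : ℕ := tm / g with hs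
  set u : ℕ := t' / tm with hu
  have hgs : g * s = tm := by rw [hs, hg]; exact Nat.mul_div_cancel' (Nat.gcd_dvd_left tm tb)
  have hgm : g * mstar = tb := by
    rw [hmstar, hg]; exact Nat.mul_div_cancel' (Nat.gcd_dvd_right tm tb)
  have hs0 : 0 < s := by
    rcases Nat.eq_zero_or_pos s with h | h
    · rw [h, mul_zero] at hgs; omega
    · exact h
  have hm0 : 0 < mstar := by
    rcases Nat.eq_zero_or_pos mstar with h | h
    · rw [h, mul_zero] at hgm; omega
    · exact h
  have hcop : Nat.Coprime s mstar := by
    rw [hs, hmstar, hg]; exact Nat.coprime_div_gcd_div_gcd (hg ▸ hg0)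
  have hξu : ξ = (u + 1) / mstar := by
    rw [hξ, hu, mul_comm mstar tm, ← Nat.div_div_eq_div_mul, add_comm tm t',
      Nat.add_div_right t' htm]
  -- basic facts on γ, β
  have hγ0 : 0 < γ := by rw [hγ]; positivity
  have hγ1 : γ < 1 := by
    rw [hγ]
    have h1 : qm ^ mstar < 1 := pow_lt_one₀ hqm0.le hqm1 hm0.ne'
    have h2 : qb ^ s ≤ 1 := pow_le_one₀ hqb0.le hqb1.le
    have h3 : 0 < qb ^ s := pow_pos hqb0 s
    nlinarith
  have hβ0 : 0 < β := by rw [hβ]; positivity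
  have hβ1 : β < 1 := by
    rw [hβ]
    have h1 : qm ^ (2 * mstar) < 1 := pow_lt_one₀ hqm0.le hqm1 (by omega)
    have h2 : qb ^ s ≤ 1 := pow_le_one₀ hqb0.le hqb1.le
    have h3 : 0 < qb ^ s := pow_pos hqb0 s
    nlinarith
  have hγne : γ ≠ 1 := ne_of_lt hγ1
  have hβne : β ≠ 1 := ne_of_lt hβ1
  have h1γ : (1:ℝ) - γ ≠ 0 := sub_ne_zero.mpr (Ne.symm hγne)
  have h1β : (1:ℝ) - β ≠ 0 := sub_ne_zero.mpr (Ne.symm hβne)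
  have hγpow : ∀ j : ℕ, γ ^ (j+1) = qm ^ ((j+1) * mstar) * qb ^ ((j+1) * s) := by
    intro j
    rw [hγ, mul_pow, ← pow_mul, ← pow_mul, mul_comm mstar (j+1), mul_comm s (j+1)]
  have hβγ : β = qm ^ mstar * γ := by
    rw [hβ, hγ, two_mul, pow_add]; ring
  have hβpow : ∀ j : ℕ, β ^ (j+1) = qm ^ ((j+1) * mstar) * γ ^ (j+1) := by
    intro j
    rw [hβγ, mul_pow, ← pow_mul, mul_comm mstar (j+1)]
  -- Summability of the main series
  have hK : Summable (fun p : ℕ × ℕ × ℕ =>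
      (((tm:ℝ) + tmsg) * pm ^ 2 * pb) * ((((p.1:ℝ) + 1) * qm ^ p.1) * (qm ^ p.2.1 * qb ^ p.2.2))) := by
    have hbase : Summable (fun p : ℕ × ℕ × ℕ => (((p.1:ℝ) + 1) * qm ^ p.1) * (qm ^ p.2.1 * qb ^ p.2.2)) := by
      refine Summable.mul_of_nonneg (f := fun n : ℕ => ((n:ℝ) + 1) * qm ^ n)
        (g := fun q : ℕ × ℕ => qm ^ q.1 * qb ^ q.2) (summable_add_one_mul_geom qm hqm0.le hqm1) ?_ ?_ ?_
      · exact Summable.mul_of_nonneg (f := fun n : ℕ => qm ^ n) (g := fun n : ℕ => qb ^ n)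
          (summable_geometric_of_lt_one hqm0.le hqm1)
          (summable_geometric_of_lt_one hqb0.le hqb1)
          (fun n => by positivity) (fun n => by positivity)
      · intro n; positivity
      · intro q; positivity
    exact hbase.mul_left (((tm:ℝ) + tmsg) * pm ^ 2 * pb)
  have hsum : Summable (fun p : ℕ × ℕ × ℕ =>
      ((((p.1 + 1) * tm : ℕ) : ℝ) + tmsg) * pm ^ 2 * pb * qm ^ (p.1 + p.2.1) * qb ^ p.2.2
        * (if (p.1 + 1) * tm = (p.2.2 + 1) * tb ∧ p.2.1 + 1 ≤ p.1 + 1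
              ∧ ((p.1 + 1) - (p.2.1 + 1)) * tm ≤ t' then 1 else 0)) := by
    refine Summable.of_nonneg_of_le (fun p => ?_) (fun p => ?_) hK
    · have h1 : (0:ℝ) ≤ (((p.1 + 1) * tm : ℕ) : ℝ) + tmsg := add_nonneg (Nat.cast_nonneg _) htmsg
      refine mul_nonneg (mul_nonneg (mul_nonneg (mul_nonneg (mul_nonneg h1 (by positivity))
        hpb0.le) (by positivity)) (by positivity)) ?_
      split_ifs <;> norm_num
    · have h1 : (((p.1 + 1) * tm : ℕ) : ℝ) + tmsg ≤ ((p.1:ℝ) + 1) * ((tm:ℝ) + tmsg) := by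
        push_cast
        nlinarith [mul_nonneg (Nat.cast_nonneg (α := ℝ) p.1) htmsg]
      have h5 : (0:ℝ) ≤ (((p.1 + 1) * tm : ℕ) : ℝ) + tmsg := add_nonneg (Nat.cast_nonneg _) htmsg
      have hi : (if (p.1 + 1) * tm = (p.2.2 + 1) * tb ∧ p.2.1 + 1 ≤ p.1 + 1
              ∧ ((p.1 + 1) - (p.2.1 + 1)) * tm ≤ t' then (1:ℝ) else 0) ≤ 1 := by
        split_ifs <;> norm_num
      calc ((((p.1 + 1) * tm : ℕ) : ℝ) + tmsg) * pm ^ 2 * pb * qm ^ (p.1 + p.2.1) * qb ^ p.2.2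
            * (if (p.1 + 1) * tm = (p.2.2 + 1) * tb ∧ p.2.1 + 1 ≤ p.1 + 1
              ∧ ((p.1 + 1) - (p.2.1 + 1)) * tm ≤ t' then 1 else 0)
          ≤ ((((p.1 + 1) * tm : ℕ) : ℝ) + tmsg) * pm ^ 2 * pb * qm ^ (p.1 + p.2.1) * qb ^ p.2.2
            * 1 := by
            refine mul_le_mul_of_nonneg_left hi ?_
            refine mul_nonneg (mul_nonneg (mul_nonneg (mul_nonneg h5 (by positivity)) hpb0.le)
              (by positivity)) (by positivity)
        _ = ((((p.1 + 1) * tm : ℕ) : ℝ) + tmsg) * (pm ^ 2 * pb * qm ^ (p.1 + p.2.1) * qb ^ p.2.2) := by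
            ring
        _ ≤ (((p.1:ℝ) + 1) * ((tm:ℝ) + tmsg)) * (pm ^ 2 * pb * qm ^ (p.1 + p.2.1) * qb ^ p.2.2) := by
            refine mul_le_mul_of_nonneg_right h1 (by positivity)
        _ = (((tm:ℝ) + tmsg) * pm ^ 2 * pb) * ((((p.1:ℝ) + 1) * qm ^ p.1) * (qm ^ p.2.1 * qb ^ p.2.2)) := by
            rw [pow_add]; ring
  refine ⟨hsum, ?_⟩
  -- the reduced two-index function
  set C : ℕ → ℝ := fun j => ((((j+1) * mstar * tm : ℕ) : ℝ) + tmsg) * pm ^ 2 * pb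
      * qb ^ ((j+1) * s - 1) * qm ^ ((j+1) * mstar - 1) with hC
  set F : ℕ × ℕ → ℝ := fun q => C q.1
      * (if (q.1+1) * mstar - (u+1) ≤ q.2 ∧ q.2 < (q.1+1) * mstar then qm ^ q.2 else 0) with hF
  have hCpos : ∀ j, 0 < C j := by
    intro j
    simp only [hC]
    have h1 : (1:ℕ) ≤ (j+1) * mstar * tm := Nat.mul_pos (Nat.mul_pos j.succ_pos hm0) htm
    have h2 : (1:ℝ) ≤ (((j+1) * mstar * tm : ℕ) : ℝ) := by exact_mod_cast h1
    have h3 : (0:ℝ) < (((j+1) * mstar * tm : ℕ) : ℝ) + tmsg := by linarith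
    refine mul_pos (mul_pos (mul_pos (mul_pos h3 (by positivity)) hpb0) (by positivity))
      (by positivity)
  have hC0 : ∀ j, 0 ≤ C j := fun j => (hCpos j).le
  have hF0 : ∀ q : ℕ × ℕ, 0 ≤ F q := by
    intro q; simp only [hF]
    refine mul_nonneg (hC0 _) ?_
    split_ifs <;> positivity
  have hFs : Summable F := by
    have hqmqb1 : qm * qb < 1 := by nlinarith
    have hb2 : Summable (fun q : ℕ × ℕ => ((((q.1:ℝ) + 1) * (qm*qb) ^ q.1) * qm ^ q.2)) :=
      Summable.mul_of_nonneg (f := fun n : ℕ => ((n:ℝ)+1) * (qm*qb) ^ n) (g := fun n : ℕ => qm ^ n)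
        (summable_add_one_mul_geom (qm*qb) (by positivity) hqmqb1)
        (summable_geometric_of_lt_one hqm0.le hqm1) (fun n => by positivity) (fun n => by positivity)
    refine Summable.of_nonneg_of_le hF0 (fun q => ?_)
      (hb2.mul_left (((mstar:ℝ) * (tm:ℝ) + tmsg) * pm ^ 2 * pb))
    obtain ⟨j, b⟩ := q
    simp only [hF, hC]
    have hj1 : j ≤ (j+1) * mstar - 1 := by
      have h := Nat.mul_le_mul_left (j+1) hm0
      omega
    have hj2 : j ≤ (j+1) * s - 1 := by
      have h := Nat.mul_le_mul_left (j+1) hs0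
      omega
    have e1 : qm ^ ((j+1) * mstar - 1) ≤ qm ^ j := pow_le_pow_of_le_one hqm0.le hqm1.le hj1
    have e2 : qb ^ ((j+1) * s - 1) ≤ qb ^ j := pow_le_pow_of_le_one hqb0.le hqb1.le hj2
    have e3 : (((j+1) * mstar * tm : ℕ) : ℝ) + tmsg ≤ ((j:ℝ)+1) * ((mstar:ℝ)*(tm:ℝ) + tmsg) := by
      push_cast; nlinarith [mul_nonneg (Nat.cast_nonneg (α := ℝ) j) htmsg]
    have e0 : (0:ℝ) ≤ (((j+1) * mstar * tm : ℕ) : ℝ) + tmsg := add_nonneg (Nat.cast_nonneg _) htmsg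
    have e4 : (if (j+1) * mstar - (u+1) ≤ b ∧ b < (j+1) * mstar then qm ^ b else 0) ≤ qm ^ b := by
      split_ifs
      exacts [le_refl _, by positivity]
    have hmt : (0:ℝ) ≤ (mstar:ℝ)*(tm:ℝ) + tmsg := by
      have h0 : (0:ℝ) ≤ (mstar:ℝ)*(tm:ℝ) := by positivity
      linarith
    have hY1 : (0:ℝ) ≤ ((j:ℝ)+1) * ((mstar:ℝ)*(tm:ℝ) + tmsg) := by
      have h0 : (0:ℝ) ≤ (j:ℝ)+1 := by positivity
      exact mul_nonneg h0 hmt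
    have h45 : qb ^ ((j+1) * s - 1) * qm ^ ((j+1) * mstar - 1) ≤ qb ^ j * qm ^ j :=
      mul_le_mul e2 e1 (by positivity) (by positivity)
    have hA : ((((j+1) * mstar * tm : ℕ) : ℝ) + tmsg) * pm ^ 2 * pb
        ≤ (((j:ℝ)+1) * ((mstar:ℝ)*(tm:ℝ) + tmsg)) * pm ^ 2 * pb :=
      mul_le_mul_of_nonneg_right (mul_le_mul_of_nonneg_right e3 (by positivity)) hpb0.le
    have hXY : ((((j+1) * mstar * tm : ℕ) : ℝ) + tmsg) * pm ^ 2 * pb * qb ^ ((j+1) * s - 1)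
        * qm ^ ((j+1) * mstar - 1)
        ≤ (((j:ℝ)+1) * ((mstar:ℝ)*(tm:ℝ) + tmsg)) * pm ^ 2 * pb * qb ^ j * qm ^ j := by
      calc ((((j+1) * mstar * tm : ℕ) : ℝ) + tmsg) * pm ^ 2 * pb * qb ^ ((j+1) * s - 1)
            * qm ^ ((j+1) * mstar - 1)
          = (((((j+1) * mstar * tm : ℕ) : ℝ) + tmsg) * pm ^ 2 * pb)
            * (qb ^ ((j+1) * s - 1) * qm ^ ((j+1) * mstar - 1)) := by ring
        _ ≤ ((((j:ℝ)+1) * ((mstar:ℝ)*(tm:ℝ) + tmsg)) * pm ^ 2 * pb) * (qb ^ j * qm ^ j) :=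
            mul_le_mul hA h45 (by positivity)
              (mul_nonneg (mul_nonneg hY1 (by positivity)) hpb0.le)
        _ = (((j:ℝ)+1) * ((mstar:ℝ)*(tm:ℝ) + tmsg)) * pm ^ 2 * pb * qb ^ j * qm ^ j := by ring
    calc ((((j+1) * mstar * tm : ℕ) : ℝ) + tmsg) * pm ^ 2 * pb * qb ^ ((j+1) * s - 1)
          * qm ^ ((j+1) * mstar - 1)
          * (if (j+1) * mstar - (u+1) ≤ b ∧ b < (j+1) * mstar then qm ^ b else 0)
        ≤ ((((j+1) * mstar * tm : ℕ) : ℝ) + tmsg) * pm ^ 2 * pb * qb ^ ((j+1) * s - 1)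
          * qm ^ ((j+1) * mstar - 1) * qm ^ b := by
          refine mul_le_mul_of_nonneg_left e4 ?_
          refine mul_nonneg (mul_nonneg (mul_nonneg (mul_nonneg e0 (by positivity)) hpb0.le)
            (by positivity)) (by positivity)
      _ ≤ (((j:ℝ)+1) * ((mstar:ℝ)*(tm:ℝ) + tmsg)) * pm ^ 2 * pb * qb ^ j * qm ^ j * qm ^ b :=
          mul_le_mul_of_nonneg_right hXY (by positivity)
      _ = (((mstar:ℝ) * (tm:ℝ) + tmsg) * pm ^ 2 * pb) * ((((j:ℝ) + 1) * (qm*qb) ^ j) * qm ^ b) := by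
          rw [mul_pow]; ring
  -- reindexing bijection
  have hNpos : ∀ j : ℕ, 1 ≤ (j+1) * mstar := fun j => Nat.mul_pos j.succ_pos hm0
  have hMpos : ∀ j : ℕ, 1 ≤ (j+1) * s := fun j => Nat.mul_pos j.succ_pos hs0
  have hdiv : ∀ n : ℕ, n * tm ≤ t' ↔ n ≤ u := fun n => (Nat.le_div_iff_mul_le htm).symm
  have hbij : (∑' p : ℕ × ℕ × ℕ,
      ((((p.1 + 1) * tm : ℕ) : ℝ) + tmsg) * pm ^ 2 * pb * qm ^ (p.1 + p.2.1) * qb ^ p.2.2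
        * (if (p.1 + 1) * tm = (p.2.2 + 1) * tb ∧ p.2.1 + 1 ≤ p.1 + 1
              ∧ ((p.1 + 1) - (p.2.1 + 1)) * tm ≤ t' then 1 else 0)) = ∑' q : ℕ × ℕ, F q := by
    apply tsum_eq_tsum_of_ne_zero_bij
      (i := fun x => ((x.1.1 + 1) * mstar - 1, x.1.2, (x.1.1 + 1) * s - 1))
    · -- injectivity
      rintro ⟨⟨j1, b1⟩, h1⟩ ⟨⟨j2, b2⟩, h2⟩ h
      simp only [Prod.mk.injEq, Subtype.mk.injEq] at h ⊢
      obtain ⟨ha, hb, _⟩ := h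
      refine ⟨?_, hb⟩
      have e1 := hNpos j1
      have e2 := hNpos j2
      have e3 : (j1+1) * mstar = (j2+1) * mstar := by omega
      have e4 := Nat.eq_of_mul_eq_mul_right hm0 e3
      omega
    · -- support ⊆ range
      rintro ⟨a, b, c⟩ hp
      simp only [Function.mem_support] at hp
      by_cases hcond : (a + 1) * tm = (c + 1) * tb ∧ b + 1 ≤ a + 1 ∧ ((a + 1) - (b + 1)) * tm ≤ t'
      swap
      · exfalso; apply hp; rw [if_neg hcond, mul_zero]
      obtain ⟨h1, h2, h3⟩ := hcond
      have h1' : (a + 1) * s = (c + 1) * mstar := by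
        have h1'' : g * ((a+1) * s) = g * ((c+1) * mstar) := by
          calc g * ((a+1) * s) = (a+1) * (g * s) := by ring
            _ = (c+1) * (g * mstar) := by rw [hgs, hgm]; exact h1
            _ = g * ((c+1) * mstar) := by ring
        exact Nat.eq_of_mul_eq_mul_left hg0 h1''
      have hdvd : mstar ∣ (a + 1) := by
        refine (Nat.Coprime.dvd_of_dvd_mul_right hcop.symm) ?_
        exact ⟨c + 1, by rw [h1']; ring⟩
      obtain ⟨k, hk⟩ := hdvd
      have hk0 : 1 ≤ k := by
        rcases Nat.eq_zero_or_pos k with h | h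
        · rw [h, mul_zero] at hk; omega
        · exact h
      have hck : c + 1 = k * s := by
        have e : (k * s) * mstar = (c+1) * mstar := by
          rw [← h1', hk]; ring
        exact (Nat.eq_of_mul_eq_mul_right hm0 e).symm
      have hNk : (k - 1 + 1) * mstar = a + 1 := by
        have hkk : k - 1 + 1 = k := by omega
        rw [hkk, mul_comm]
        omega
      have hMk : (k - 1 + 1) * s = c + 1 := by
        have hkk : k - 1 + 1 = k := by omega
        rw [hkk]
        exact hck.symm
      have hsupp : F (k - 1, b) ≠ 0 := by
        simp only [hF]
        have hc2 : (k-1+1) * mstar - (u+1) ≤ b ∧ b < (k-1+1) * mstar := by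
          have h3' : (a+1) - (b+1) ≤ u := (hdiv _).mp h3
          constructor
          · omega
          · omega
        rw [if_pos hc2]
        exact ne_of_gt (mul_pos (hCpos _) (pow_pos hqm0 b))
      exact ⟨⟨(k - 1, b), hsupp⟩, by simp only [Prod.mk.injEq]; exact ⟨by omega, trivial, by omega⟩⟩
    · -- values agree
      rintro ⟨⟨j, b⟩, hx⟩
      have hN1 := hNpos j
      have hM1 := hMpos j
      have hNe : (j+1) * mstar - 1 + 1 = (j+1) * mstar := by omega
      have hMe : (j+1) * s - 1 + 1 = (j+1) * s := by omega
      simp only [hF, hNe, hMe]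
      have hcond1 : ((j+1) * mstar) * tm = ((j+1) * s) * tb := by
        rw [← hgs, ← hgm]; ring
      by_cases hc2 : (j+1) * mstar - (u+1) ≤ b ∧ b < (j+1) * mstar
      · rw [if_pos hc2, if_pos ⟨hcond1, by omega, (hdiv _).mpr (by omega)⟩]
        simp only [hC]
        rw [pow_add]
        ring
      · rw [if_neg ?negf, if_neg hc2, mul_zero, mul_zero]
        case negf =>
          rintro ⟨_, c2, c3⟩
          exact hc2 ⟨by have := (hdiv _).mp c3; omega, by omega⟩
  rw [hbij]
  set G : ℕ → ℝ := fun j => C j * ((qm ^ ((j+1) * mstar - (u+1)) - qm ^ ((j+1) * mstar)) / pm)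
    with hG
  have hinner : ∀ j : ℕ, (∑' b : ℕ, F (j, b)) = G j := by
    intro j
    simp only [hF, hG]
    rw [tsum_mul_left, tsum_ite_geom qm hqm1 _ _ (Nat.sub_le _ _)]
    rw [show (1:ℝ) - qm = pm by rw [hqm]; ring]
  have hslices := (summable_prod_of_nonneg (fun q => hF0 q)).mp hFs
  have hGsum : Summable G := (hslices.2).congr hinner
  rw [Summable.tsum_prod' hFs hslices.1, tsum_congr hinner]
  rw [← hGsum.sum_add_tsum_nat_add ξ]
  set P : ℝ := pm * pb / (qm * qb) with hP
  set A : ℝ := (mstar : ℝ) * (tm : ℝ) with hA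
  have hq1e : ∀ j : ℕ, qm * qm ^ ((j+1) * mstar - 1) = qm ^ ((j+1) * mstar) := by
    intro j
    rw [← pow_succ']
    congr 1
    have := hNpos j
    omega
  have hqb1e : ∀ j : ℕ, qb * qb ^ ((j+1) * s - 1) = qb ^ ((j+1) * s) := by
    intro j
    rw [← pow_succ']
    congr 1
    have := hMpos j
    omega
  have hγ' : ∀ j : ℕ, γ ^ (j+1) = (qm * qb) * (qm ^ ((j+1) * mstar - 1) * qb ^ ((j+1) * s - 1)) := by
    intro j
    rw [hγpow j, ← hq1e j, ← hqb1e j]; ring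
  have hβ' : ∀ j : ℕ, β ^ (j+1)
      = (qm * qb) * (qm ^ ((j+1) * mstar) * qm ^ ((j+1) * mstar - 1) * qb ^ ((j+1) * s - 1)) := by
    intro j
    rw [hβpow j, hγ' j]; ring
  have hXj : ∀ j : ℕ, (((j+1) * mstar * tm : ℕ) : ℝ) = ((j:ℝ) + 1) * A := by
    intro j; rw [hA]; push_cast; ring
  -- the head part: j < ξ
  have hpart1 : ∀ j ∈ Finset.range ξ, G j
      = ((P * A) * (((j:ℝ)+1) * γ ^ (j+1)) + (P * tmsg) * γ ^ (j+1))
        - ((P * A) * (((j:ℝ)+1) * β ^ (j+1)) + (P * tmsg) * β ^ (j+1)) := by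
    intro j hj
    have hjξ : (j+1) * mstar ≤ u + 1 := by
      have h1 : j + 1 ≤ ξ := Finset.mem_range.mp hj
      rw [hξu] at h1
      exact (Nat.le_div_iff_mul_le hm0).mp h1
    have hL : (j+1) * mstar - (u+1) = 0 := by omega
    simp only [hG, hC, hL, pow_zero]
    rw [hXj j, hγ' j, hβ' j, hP, hA]
    field_simp
  -- the tail part: j ≥ ξ
  have hGj : ∀ j : ℕ, u + 1 < (j+1) * mstar →
      G j = (P * ((qm ^ (u+1))⁻¹ - 1)) * ((((j:ℝ)+1) * A + tmsg) * β ^ (j+1)) := by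
    intro j hjg
    have hqsub : qm ^ ((j + 1) * mstar - (u+1)) = qm ^ ((j + 1) * mstar) / qm ^ (u+1) := by
      rw [eq_div_iff (by positivity), ← pow_add]
      congr 1
      omega
    simp only [hG, hC, hqsub]
    rw [hXj j, hβ' j, hP, hA]
    field_simp
  have hpart2 : ∀ i : ℕ, G (i + ξ)
      = ((P * ((qm ^ (u+1))⁻¹ - 1) * β ^ (ξ+1) * A)) * ((i:ℝ) * β ^ i)
        + ((P * ((qm ^ (u+1))⁻¹ - 1) * β ^ (ξ+1)) * (A * ((ξ:ℝ) + 1) + tmsg)) * β ^ i := by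
    intro i
    have hjg : u + 1 < (i + ξ + 1) * mstar := by
      have h1 : (u + 1) / mstar < i + ξ + 1 := by
        rw [← hξu]; omega
      exact (Nat.div_lt_iff_lt_mul hm0).mp h1
    have hβsplit : β ^ (i + ξ + 1) = β ^ i * β ^ (ξ + 1) := by
      rw [show i + ξ + 1 = i + (ξ + 1) from by omega, pow_add]
    rw [hGj (i + ξ) hjg, hβsplit]
    push_cast
    ring
  -- summing the tail
  have hβnorm : ‖β‖ < 1 := by rw [Real.norm_eq_abs, abs_of_pos hβ0]; exact hβ1
  have hs1 : Summable (fun i : ℕ => (i:ℝ) * β ^ i) := by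
    have h := summable_pow_mul_geometric_of_norm_lt_one 1 hβnorm
    simpa using h
  have hs2 : Summable (fun i : ℕ => β ^ i) := summable_geometric_of_lt_one hβ0.le hβ1
  have ht2 : (∑' i : ℕ, G (i + ξ))
      = ((P * ((qm ^ (u+1))⁻¹ - 1) * β ^ (ξ+1) * A)) * (β / (1 - β) ^ 2)
        + ((P * ((qm ^ (u+1))⁻¹ - 1) * β ^ (ξ+1)) * (A * ((ξ:ℝ) + 1) + tmsg)) * (1 - β)⁻¹ := by
    rw [tsum_congr hpart2,
      Summable.tsum_add (hs1.mul_left _) (hs2.mul_left _), tsum_mul_left, tsum_mul_left,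
      tsum_coe_mul_geometric_of_norm_lt_one hβnorm, tsum_geometric_of_lt_one hβ0.le hβ1]
  rw [Finset.sum_congr rfl hpart1, ht2]
  rw [Finset.sum_sub_distrib, Finset.sum_add_distrib, Finset.sum_add_distrib,
    ← Finset.mul_sum, ← Finset.mul_sum, ← Finset.mul_sum, ← Finset.mul_sum,
    geom_range γ hγne ξ, geom_range_mul γ hγne ξ, geom_range β hβne ξ, geom_range_mul β hβne ξ]
  rw [hδ, hP, hA, zpow_neg, zpow_natCast]
  have hqmu : qm ^ u ≠ 0 := by positivity
  have hqmu1 : qm ^ (u+1) ≠ 0 := by positivity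
  field_simp
  ring
end

section
/- Let p_m, p_b ∈ (0,1), let t_m, t_b be positive integers, and let t_cut ≥ 1 be an integer. With q_m, q_b, g, m*, δ, β as in the context, the triple series ∑_{m_1,m_2,m_b ≥ 1} (m_2·t_m + t_cut)·p_m²·p_b·q_m^{m_1+m_2−2}·q_b^{m_b−1}·1[m_2·t_m = m_b·t_b and m_1·t_m ≥ m_2·t_m + t_cut] converges and equals δ·q_m^{⌈t_cut/t_m⌉}·β/(p_m·(1−β)) · (m*·t_m/(1−β) + t_cut). -/
set_option maxHeartbeats 1000000 in
/-- Let `p_m, p_b ∈ (0,1)`, `t_m, t_b` positive integers, `t_cut ≥ 1` an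
integer.  With `q_m := 1 − p_m`, `q_b := 1 − p_b`, `g := gcd(t_m,t_b)`, `m* := t_b/g`,
`δ := p_m²·p_b/(q_m²·q_b)` and `β := q_m^{2m*}·q_b^{t_m/g}`, the triple series
`∑_{m₁,m₂,m_b ≥ 1} (m₂·t_m + t_cut)·p_m²·p_b·q_m^{m₁+m₂−2}·q_b^{m_b−1}·
  1[m₂·t_m = m_b·t_b ∧ m₁·t_m ≥ m₂·t_m + t_cut]`
(indexed by `(a,b,c) ∈ ℕ³` with `m₁ = a+1`, `m₂ = b+1`, `m_b = c+1`) converges and equals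
`δ·q_m^{⌈t_cut/t_m⌉}·β/(p_m·(1−β))·(m*·t_m/(1−β) + t_cut)`. -/
theorem stmt13 (pm pb : ℝ) (hpm0 : 0 < pm) (hpm1 : pm < 1) (hpb0 : 0 < pb) (hpb1 : pb < 1)
    (tm tb : ℕ) (htm : 0 < tm) (htb : 0 < tb) (tcut : ℕ) (htcut : 1 ≤ tcut)
    (qm qb : ℝ) (hqm : qm = 1 - pm) (hqb : qb = 1 - pb)
    (g mstar : ℕ) (hg : g = Nat.gcd tm tb) (hmstar : mstar = tb / g)
    (δ β : ℝ) (hδ : δ = pm ^ 2 * pb / (qm ^ 2 * qb))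
    (hβ : β = qm ^ (2 * mstar) * qb ^ (tm / g)) :
    Summable (fun p : ℕ × ℕ × ℕ =>
      ((((p.2.1 + 1) * tm : ℕ) : ℝ) + (tcut : ℝ)) * pm ^ 2 * pb
        * qm ^ (p.1 + p.2.1) * qb ^ p.2.2
        * (if (p.2.1 + 1) * tm = (p.2.2 + 1) * tb
              ∧ (p.2.1 + 1) * tm + tcut ≤ (p.1 + 1) * tm then 1 else 0)) ∧
    ∑' p : ℕ × ℕ × ℕ,
        ((((p.2.1 + 1) * tm : ℕ) : ℝ) + (tcut : ℝ)) * pm ^ 2 * pb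
          * qm ^ (p.1 + p.2.1) * qb ^ p.2.2
          * (if (p.2.1 + 1) * tm = (p.2.2 + 1) * tb
                ∧ (p.2.1 + 1) * tm + tcut ≤ (p.1 + 1) * tm then 1 else 0)
      = δ * qm ^ (⌈(tcut : ℝ) / (tm : ℝ)⌉ : ℤ) * β / (pm * (1 - β))
          * ((mstar : ℝ) * (tm : ℝ) / (1 - β) + (tcut : ℝ)) := by
  -- basic positivity
  have hqm0 : 0 < qm := by rw [hqm]; linarith
  have hqm1 : qm < 1 := by rw [hqm]; linarith
  have hqb0 : 0 < qb := by rw [hqb]; linarith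
  have hqb1 : qb < 1 := by rw [hqb]; linarith
  have hpm_eq : 1 - qm = pm := by rw [hqm]; ring
  set t := tm / g with ht
  set s := mstar with hs
  clear_value t s
  have hg0 : 0 < g := by rw [hg]; exact Nat.gcd_pos_of_pos_left _ htm
  have hdvd1 : g ∣ tm := hg ▸ Nat.gcd_dvd_left tm tb
  have hdvd2 : g ∣ tb := hg ▸ Nat.gcd_dvd_right tm tb
  have htm_eq : tm = g * t := by rw [ht]; exact (Nat.mul_div_cancel' hdvd1).symm
  have htb_eq : tb = g * s := by rw [hmstar]; exact (Nat.mul_div_cancel' hdvd2).symm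
  have hcop : Nat.Coprime t s := by
    rw [ht, hmstar, hg]
    exact Nat.coprime_div_gcd_div_gcd (hg ▸ hg0)
  have ht1 : 1 ≤ t := by rw [ht]; exact Nat.div_pos (Nat.le_of_dvd htm hdvd1) hg0
  have hs1 : 1 ≤ s := by
    rw [hmstar]; exact Nat.div_pos (Nat.le_of_dvd htb hdvd2) hg0
  -- the ceiling
  have htmR : (0 : ℝ) < tm := by exact_mod_cast htm
  have hceil_pos : 0 < ⌈(tcut : ℝ) / (tm : ℝ)⌉ := by
    apply Int.ceil_pos.mpr
    positivity
  set r : ℕ := (⌈(tcut : ℝ) / (tm : ℝ)⌉).toNat with hrdef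
  have hr_cast : (⌈(tcut : ℝ) / (tm : ℝ)⌉ : ℤ) = (r : ℤ) := by
    rw [hrdef, Int.toNat_of_nonneg hceil_pos.le]
  have hr1 : 1 ≤ r := by omega
  have hkey : ∀ m : ℕ, tcut ≤ m * tm ↔ r ≤ m := by
    intro m
    constructor
    · intro h
      have h1 : (tcut : ℝ) / tm ≤ (m : ℝ) := by
        rw [div_le_iff₀ htmR]; exact_mod_cast h
      have h2 : ⌈(tcut : ℝ) / tm⌉ ≤ (m : ℤ) := Int.ceil_le.mpr (by exact_mod_cast h1)
      rw [hr_cast] at h2; exact_mod_cast h2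
    · intro h
      have h2 : ⌈(tcut : ℝ) / tm⌉ ≤ (m : ℤ) := by rw [hr_cast]; exact_mod_cast h
      have h1 : (tcut : ℝ) / tm ≤ (m : ℝ) := le_trans (Int.le_ceil _) (by exact_mod_cast h2)
      rw [div_le_iff₀ htmR] at h1
      exact_mod_cast h1
  have htcut_le : tcut ≤ r * tm := (hkey r).mpr le_rfl
  -- β facts
  have hβ' : β = qm ^ (2 * s) * qb ^ t := hβ
  have hβ0 : 0 < β := by rw [hβ']; positivity
  have hβlt1 : β < 1 := by
    rw [hβ']
    have h1 : qm ^ (2 * s) < 1 := pow_lt_one₀ hqm0.le hqm1 (by omega)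
    have h2 : qb ^ t ≤ 1 := pow_le_one₀ hqb0.le hqb1.le
    nlinarith [pow_pos hqb0 t]
  have h1β : 0 < 1 - β := by linarith
  -- abbreviations
  set f : ℕ × ℕ × ℕ → ℝ := fun p =>
      ((((p.2.1 + 1) * tm : ℕ) : ℝ) + (tcut : ℝ)) * pm ^ 2 * pb
        * qm ^ (p.1 + p.2.1) * qb ^ p.2.2
        * (if (p.2.1 + 1) * tm = (p.2.2 + 1) * tb
              ∧ (p.2.1 + 1) * tm + tcut ≤ (p.1 + 1) * tm then 1 else 0) with hf
  set e : ℕ × ℕ → ℕ × ℕ × ℕ := fun q =>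
      (s * (q.2 + 1) + r - 1 + q.1, (s * (q.2 + 1) - 1, t * (q.2 + 1) - 1)) with he
  have hsk1 : ∀ κ : ℕ, 1 ≤ s * (κ + 1) := fun κ => Nat.one_le_iff_ne_zero.mpr (by positivity)
  have htk1 : ∀ κ : ℕ, 1 ≤ t * (κ + 1) := fun κ => Nat.one_le_iff_ne_zero.mpr (by positivity)
  have he_inj : Function.Injective e := by
    intro q1 q2 hq
    simp only [he, Prod.mk.injEq] at hq
    obtain ⟨h1, h2, _⟩ := hq
    have hk1 := hsk1 q1.2
    have hk2 := hsk1 q2.2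
    have hs0 : 0 < s := hs1
    have hκ : q1.2 = q2.2 := by
      have : s * (q1.2 + 1) = s * (q2.2 + 1) := by omega
      have := Nat.eq_of_mul_eq_mul_left hs0 this
      omega
    rw [hκ] at h1
    have hj : q1.1 = q2.1 := by omega
    exact Prod.ext hj hκ
  -- support of f is contained in the range of e
  have hsupp : Function.support f ⊆ Set.range e := by
    intro p hp
    obtain ⟨a, b, c⟩ := p
    simp only [hf, Function.mem_support, ne_eq] at hp
    by_cases hcond : (b + 1) * tm = (c + 1) * tb ∧ (b + 1) * tm + tcut ≤ (a + 1) * tm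
    swap
    · simp [hcond] at hp
    obtain ⟨h1, h2⟩ := hcond
    -- decompose h1
    have h1' : (b + 1) * t = (c + 1) * s := by
      have hx : g * ((b + 1) * t) = g * ((c + 1) * s) := by
        have := h1
        rw [htm_eq, htb_eq] at this
        ring_nf at this ⊢
        linarith [this]
      exact Nat.eq_of_mul_eq_mul_left hg0 hx
    have hdvd : s ∣ (b + 1) * t := ⟨c + 1, by rw [h1']; ring⟩
    obtain ⟨k', hk'⟩ := (Nat.Coprime.dvd_of_dvd_mul_right hcop.symm hdvd)
    have hk'1 : 1 ≤ k' := by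
      rcases Nat.eq_zero_or_pos k' with h | h
      · rw [h, Nat.mul_zero] at hk'; omega
      · exact h
    have hc : c + 1 = t * k' := by
      have hx : s * (k' * t) = s * (c + 1) := by
        rw [show s * (k' * t) = (s * k') * t from by ring, ← hk', h1']; ring
      have hy := Nat.eq_of_mul_eq_mul_left (by omega : 0 < s) hx
      rw [← hy]; ring
    -- decompose h2
    have hba : b + 1 < a + 1 := by
      have : (b + 1) * tm < (a + 1) * tm := by omega
      exact Nat.lt_of_mul_lt_mul_right this
    have hd : tcut ≤ (a - b) * tm := by
      have hsplit : (a + 1) * tm = (b + 1) * tm + (a - b) * tm := by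
        have : a + 1 = (b + 1) + (a - b) := by omega
        rw [this, Nat.add_mul]
      omega
    have hra : b + r ≤ a := by
      have := (hkey (a - b)).mp hd
      omega
    refine ⟨(a - (b + r), k' - 1), ?_⟩
    simp only [he, Prod.mk.injEq]
    have hbk : b + 1 = s * k' := hk'
    have hck : c + 1 = t * k' := hc
    have hsk' : s * (k' - 1 + 1) = s * k' := by congr 1; omega
    have htk' : t * (k' - 1 + 1) = t * k' := by congr 1; omega
    rw [hsk', htk']
    exact ⟨by omega, by omega, by omega⟩
  -- the two one-dimensional series
  set C : ℝ := pm ^ 2 * pb * qm ^ (2 * s + r - 2) * qb ^ (t - 1) with hC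
  set u : ℕ → ℝ := fun j => qm ^ j with hu
  set v : ℕ → ℝ := fun κ => ((s : ℝ) * (κ + 1) * tm + tcut) * C * β ^ κ with hv
  have hC0 : 0 < C := by rw [hC]; positivity
  have hcomp : ∀ q : ℕ × ℕ, f (e q) = u q.1 * v q.2 := by
    rintro ⟨j, κ⟩
    have hsk := hsk1 κ
    have htk := htk1 κ
    have hskκ : s * (κ + 1) = s * κ + s := by ring
    have htkκ : t * (κ + 1) = t * κ + t := by ring
    have hcond : (s * (κ + 1) - 1 + 1) * tm = (t * (κ + 1) - 1 + 1) * tb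
        ∧ (s * (κ + 1) - 1 + 1) * tm + tcut ≤ (s * (κ + 1) + r - 1 + j + 1) * tm := by
      constructor
      · have h1 : s * (κ + 1) - 1 + 1 = s * (κ + 1) := by omega
        have h2 : t * (κ + 1) - 1 + 1 = t * (κ + 1) := by omega
        rw [h1, h2, htm_eq, htb_eq]; ring
      · have h1 : s * (κ + 1) - 1 + 1 = s * (κ + 1) := by omega
        have h2 : s * (κ + 1) + r - 1 + j + 1 = s * (κ + 1) + (r + j) := by omega
        rw [h1, h2, Nat.add_mul]
        have : tcut ≤ (r + j) * tm := (hkey (r + j)).mpr (by omega)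
        omega
    simp only [hf, he, hu, hv]
    rw [if_pos hcond]
    have h2sk : 2 * s * κ = 2 * (s * κ) := by ring
    have hA : s * (κ + 1) + r - 1 + j + (s * (κ + 1) - 1) = j + 2 * s * κ + (2 * s + r - 2) := by
      omega
    have hB : t * (κ + 1) - 1 = t * κ + (t - 1) := by omega
    have hcast : ((s * (κ + 1) - 1 + 1) * tm : ℕ) = s * (κ + 1) * tm := by
      congr 1; omega
    rw [hA, hB, hcast]
    have hqmA : qm ^ (j + 2 * s * κ + (2 * s + r - 2))
        = qm ^ j * (qm ^ (2 * s)) ^ κ * qm ^ (2 * s + r - 2) := by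
      rw [pow_add, pow_add, ← pow_mul]
    have hqbB : qb ^ (t * κ + (t - 1)) = (qb ^ t) ^ κ * qb ^ (t - 1) := by
      rw [pow_add, ← pow_mul]
    rw [hqmA, hqbB, hβ', hC]
    push_cast
    ring
  -- summability and sums of u and v
  have hu_sum : Summable u := summable_geometric_of_lt_one hqm0.le hqm1
  have hu_tsum : ∑' j, u j = pm⁻¹ := by
    rw [hu, tsum_geometric_of_lt_one hqm0.le hqm1, hpm_eq]
  have hβn : ‖β‖ < 1 := by rw [Real.norm_eq_abs, abs_of_pos hβ0]; exact hβlt1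
  have hv_eq : v = fun κ : ℕ => (C * ((s : ℝ) * tm)) * ((κ : ℝ) * β ^ κ)
      + (C * ((s : ℝ) * tm + tcut)) * β ^ κ := by
    funext κ
    rw [hv]
    ring
  have hsum1 : Summable (fun κ : ℕ => (κ : ℝ) * β ^ κ) := by
    have := summable_pow_mul_geometric_of_norm_lt_one 1 hβn (R := ℝ)
    simpa using this
  have hsum2 : Summable (fun κ : ℕ => β ^ κ) := summable_geometric_of_lt_one hβ0.le hβlt1
  have hv_sum : Summable v := by
    rw [hv_eq]
    exact (hsum1.mul_left _).add (hsum2.mul_left _)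
  have hv_tsum : ∑' κ, v κ = (C * ((s : ℝ) * tm)) * (β / (1 - β) ^ 2)
      + (C * ((s : ℝ) * tm + tcut)) * (1 - β)⁻¹ := by
    rw [hv_eq, Summable.tsum_add (hsum1.mul_left _) (hsum2.mul_left _), tsum_mul_left, tsum_mul_left,
      tsum_coe_mul_geometric_of_norm_lt_one hβn, tsum_geometric_of_lt_one hβ0.le hβlt1]
  -- summability of the product
  have hv_nonneg : ∀ κ, 0 ≤ v κ := by
    intro κ
    rw [hv]
    have : (0:ℝ) ≤ (s : ℝ) * (κ + 1) * tm + tcut := by positivity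
    positivity
  have hu_nonneg : ∀ j, 0 ≤ u j := fun j => by rw [hu]; positivity
  have hprod_sum : Summable (fun q : ℕ × ℕ => u q.1 * v q.2) :=
    hu_sum.mul_of_nonneg hv_sum hu_nonneg hv_nonneg
  have hfe_sum : Summable (f ∘ e) := by
    apply hprod_sum.congr
    intro q
    exact (hcomp q).symm
  have hzero : ∀ x ∉ Set.range e, f x = 0 := by
    intro x hx
    by_contra hne
    exact hx (hsupp hne)
  have hf_sum : Summable f := (he_inj.summable_iff hzero).mp hfe_sum
  constructor
  · exact hf_sum
  -- now compute the sum
  have htsum1 : ∑' p, f p = ∑' q, f (e q) := (he_inj.tsum_eq hsupp).symm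
  have htsum2 : ∑' q : ℕ × ℕ, f (e q) = (∑' j, u j) * (∑' κ, v κ) := by
    rw [tsum_congr hcomp]
    exact (Summable.tsum_mul_tsum hu_sum hv_sum hprod_sum).symm
  have hA : qm ^ (2 * s + r - 2) * qm ^ 2 = qm ^ (2 * s) * qm ^ r := by
    rw [← pow_add, ← pow_add]
    congr 1
    omega
  have hB : qb ^ (t - 1) * qb ^ 1 = qb ^ t := by
    rw [← pow_add]
    congr 1
    omega
  have hmain : C * (qm ^ 2 * qb) = pm ^ 2 * pb * qm ^ r * (qm ^ (2 * s) * qb ^ t) := by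
    rw [hC]
    calc pm ^ 2 * pb * qm ^ (2 * s + r - 2) * qb ^ (t - 1) * (qm ^ 2 * qb)
        = pm ^ 2 * pb * (qm ^ (2 * s + r - 2) * qm ^ 2) * (qb ^ (t - 1) * qb ^ 1) := by ring
      _ = pm ^ 2 * pb * (qm ^ (2 * s) * qm ^ r) * qb ^ t := by rw [hA, hB]
      _ = _ := by ring
  have hne : qm ^ 2 * qb ≠ 0 := by positivity
  have hCval : δ * qm ^ (r : ℕ) * β = C := by
    apply mul_right_cancel₀ hne
    rw [hδ, hβ']
    field_simp
    linear_combination -hmain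
  rw [htsum1, htsum2, hu_tsum, hv_tsum, hr_cast, zpow_natCast, hCval]
  have hpm' : pm ≠ 0 := ne_of_gt hpm0
  have h1β' : (1 : ℝ) - β ≠ 0 := ne_of_gt h1β
  field_simp
  ring
end

section
/- Let p_m, p_b ∈ (0,1), let t_m, t_b be positive integers, let t' ≥ 0 be an integer, and let v ≥ 0 and α ≥ 2 be reals. With q_m, q_b, g, m*, δ, β as in the context, and setting d_s := e^{−v·(α−1)·t_m}·q_m and D := e^{−v·(α−2)·m*·t_m}·β, the triple series ∑_{m_1,m_2,m_b ≥ 1} e^{−v·((α−1)·m_1·t_m − m_2·t_m)}·p_m²·p_b·q_m^{m_1+m_2−2}·q_b^{m_b−1}·1[m_2·t_m = m_b·t_b and m_2 ≤ m_1 and (m_1 − m_2)·t_m ≤ t'] converges and equals δ·(1 − d_s^{⌊t'/t_m⌋+1})/(1 − d_s) · D/(1 − D). -/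
set_option maxHeartbeats 1000000 in
/-- Let `p_m, p_b ∈ (0,1)`, `t_m, t_b` positive integers, `t' ≥ 0` an
integer, and `v ≥ 0`, `α ≥ 2` reals.  With `q_m := 1 − p_m`, `q_b := 1 − p_b`,
`g := gcd(t_m,t_b)`, `m* := t_b/g`, `δ := p_m²·p_b/(q_m²·q_b)`, `β := q_m^{2m*}·q_b^{t_m/g}`,
`d_s := e^{−v(α−1)t_m}·q_m` and `D := e^{−v(α−2)·m*·t_m}·β`, the triple series
`∑_{m₁,m₂,m_b ≥ 1} e^{−v((α−1)m₁t_m − m₂t_m)}·p_m²·p_b·q_m^{m₁+m₂−2}·q_b^{m_b−1}·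
  1[m₂·t_m = m_b·t_b ∧ m₂ ≤ m₁ ∧ (m₁−m₂)·t_m ≤ t']`
(indexed by `(a,b,c) ∈ ℕ³` with `m₁ = a+1`, `m₂ = b+1`, `m_b = c+1`) converges and equals
`δ·(1 − d_s^{⌊t'/t_m⌋+1})/(1 − d_s)·D/(1 − D)`. -/
theorem stmt14 (pm pb : ℝ) (hpm0 : 0 < pm) (hpm1 : pm < 1) (hpb0 : 0 < pb) (hpb1 : pb < 1)
    (tm tb : ℕ) (htm : 0 < tm) (htb : 0 < tb) (t' : ℕ)
    (v α : ℝ) (hv : 0 ≤ v) (hα : 2 ≤ α)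
    (qm qb : ℝ) (hqm : qm = 1 - pm) (hqb : qb = 1 - pb)
    (g mstar : ℕ) (hg : g = Nat.gcd tm tb) (hmstar : mstar = tb / g)
    (δ β : ℝ) (hδ : δ = pm ^ 2 * pb / (qm ^ 2 * qb))
    (hβ : β = qm ^ (2 * mstar) * qb ^ (tm / g))
    (ds D : ℝ) (hds : ds = Real.exp (-(v * (α - 1) * (tm : ℝ))) * qm)
    (hD : D = Real.exp (-(v * (α - 2) * (mstar : ℝ) * (tm : ℝ))) * β) :
    Summable (fun p : ℕ × ℕ × ℕ =>
      Real.exp (-(v * ((α - 1) * (((p.1 + 1) * tm : ℕ) : ℝ) - (((p.2.1 + 1) * tm : ℕ) : ℝ))))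
        * pm ^ 2 * pb * qm ^ (p.1 + p.2.1) * qb ^ p.2.2
        * (if (p.2.1 + 1) * tm = (p.2.2 + 1) * tb ∧ p.2.1 + 1 ≤ p.1 + 1
              ∧ ((p.1 + 1) - (p.2.1 + 1)) * tm ≤ t' then 1 else 0)) ∧
    ∑' p : ℕ × ℕ × ℕ,
        Real.exp (-(v * ((α - 1) * (((p.1 + 1) * tm : ℕ) : ℝ) - (((p.2.1 + 1) * tm : ℕ) : ℝ))))
          * pm ^ 2 * pb * qm ^ (p.1 + p.2.1) * qb ^ p.2.2
          * (if (p.2.1 + 1) * tm = (p.2.2 + 1) * tb ∧ p.2.1 + 1 ≤ p.1 + 1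
                ∧ ((p.1 + 1) - (p.2.1 + 1)) * tm ≤ t' then 1 else 0)
      = δ * (1 - ds ^ (t' / tm + 1)) / (1 - ds) * D / (1 - D) := by
  classical
  have hqm0 : (0:ℝ) < qm := by rw [hqm]; linarith
  have hqm1 : qm < 1 := by rw [hqm]; linarith
  have hqb0 : (0:ℝ) < qb := by rw [hqb]; linarith
  have hqb1 : qb < 1 := by rw [hqb]; linarith
  have hg0 : 0 < g := by rw [hg]; exact Nat.gcd_pos_of_pos_left _ htm
  set u : ℕ := tm / g with hu
  have htmgu : tm = g * u := by
    rw [hu, hg]; exact (Nat.mul_div_cancel' (Nat.gcd_dvd_left tm tb)).symm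
  have htbgw : tb = g * mstar := by
    rw [hmstar, hg]; exact (Nat.mul_div_cancel' (Nat.gcd_dvd_right tm tb)).symm
  have hu1 : 0 < u := by
    rcases Nat.eq_zero_or_pos u with h | h
    · rw [h, Nat.mul_zero] at htmgu; omega
    · exact h
  have hw1 : 0 < mstar := by
    rcases Nat.eq_zero_or_pos mstar with h | h
    · rw [h, Nat.mul_zero] at htbgw; omega
    · exact h
  have hcop : Nat.Coprime u mstar := by
    rw [hu, hmstar, hg]
    exact Nat.coprime_div_gcd_div_gcd (hg ▸ hg0)
  have hwu : mstar * tm = u * tb := by rw [htmgu, htbgw]; ring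
  set N : ℕ := t' / tm with hN
  -- the reindexing map
  set e : ℕ × ℕ → ℕ × ℕ × ℕ := fun jk =>
    ((jk.2 + 1) * mstar + jk.1 - 1, ((jk.2 + 1) * mstar - 1, (jk.2 + 1) * u - 1)) with he
  set F : ℕ × ℕ × ℕ → ℝ := fun p =>
    Real.exp (-(v * ((α - 1) * (((p.1 + 1) * tm : ℕ) : ℝ) - (((p.2.1 + 1) * tm : ℕ) : ℝ))))
      * pm ^ 2 * pb * qm ^ (p.1 + p.2.1) * qb ^ p.2.2
      * (if (p.2.1 + 1) * tm = (p.2.2 + 1) * tb ∧ p.2.1 + 1 ≤ p.1 + 1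
            ∧ ((p.1 + 1) - (p.2.1 + 1)) * tm ≤ t' then 1 else 0) with hF
  have hi : Function.Injective e := by
    rintro ⟨j, k⟩ ⟨j', k'⟩ h
    simp only [he, Prod.mk.injEq] at h
    obtain ⟨h1, h2, _⟩ := h
    have a1 : 1 ≤ (k + 1) * mstar := Nat.mul_pos (Nat.succ_pos k) hw1
    have a2 : 1 ≤ (k' + 1) * mstar := Nat.mul_pos (Nat.succ_pos k') hw1
    have hk : (k + 1) * mstar = (k' + 1) * mstar := by omega
    have hkk : k = k' := by
      have := Nat.eq_of_mul_eq_mul_right hw1 hk; omega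
    subst hkk
    have : j = j' := by omega
    subst this; rfl
  have hrange : ∀ p : ℕ × ℕ × ℕ,
      ((p.2.1 + 1) * tm = (p.2.2 + 1) * tb ∧ p.2.1 + 1 ≤ p.1 + 1
        ∧ ((p.1 + 1) - (p.2.1 + 1)) * tm ≤ t') → p ∈ Set.range e := by
    rintro ⟨a, b, c⟩ ⟨h1, h2, _⟩
    have h2' : b + 1 ≤ a + 1 := h2
    have h1' : (b + 1) * u = (c + 1) * mstar := by
      apply Nat.eq_of_mul_eq_mul_left hg0
      have : (b + 1) * (g * u) = (c + 1) * (g * mstar) := by rw [← htmgu, ← htbgw]; exact h1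
      calc g * ((b + 1) * u) = (b + 1) * (g * u) := by ring
        _ = (c + 1) * (g * mstar) := this
        _ = g * ((c + 1) * mstar) := by ring
    have hdvd : mstar ∣ (b + 1) := by
      refine (Nat.Coprime.dvd_of_dvd_mul_right hcop.symm) ⟨c + 1, ?_⟩
      rw [h1', mul_comm]
    obtain ⟨K, hK⟩ := hdvd
    have hK1 : 1 ≤ K := by
      rcases K with _ | K
      · simp at hK
      · omega
    have hc : K * u = c + 1 := by
      apply Nat.eq_of_mul_eq_mul_left hw1
      calc mstar * (K * u) = (b + 1) * u := by rw [hK]; ring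
        _ = (c + 1) * mstar := h1'
        _ = mstar * (c + 1) := by ring
    refine ⟨(a - b, K - 1), ?_⟩
    have hKK : K - 1 + 1 = K := by omega
    simp only [he, hKK]
    have e2 : K * mstar = b + 1 := by rw [mul_comm]; exact hK.symm
    rw [e2, hc]
    simp only [Prod.mk.injEq]
    omega
  have hzero : ∀ p ∉ Set.range e, F p = 0 := by
    intro p hp
    by_cases hc : (p.2.1 + 1) * tm = (p.2.2 + 1) * tb ∧ p.2.1 + 1 ≤ p.1 + 1
        ∧ ((p.1 + 1) - (p.2.1 + 1)) * tm ≤ t'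
    · exact absurd (hrange p hc) hp
    · simp only [hF, if_neg hc, mul_zero]
  -- good values
  have hds0 : 0 < ds := by rw [hds]; positivity
  have hds1 : ds < 1 := by
    rw [hds]
    have h1 : Real.exp (-(v * (α - 1) * (tm : ℝ))) ≤ 1 := by
      rw [Real.exp_le_one_iff]
      have : (0:ℝ) ≤ v * (α - 1) * tm := by
        apply mul_nonneg (mul_nonneg hv (by linarith)); positivity
      linarith
    nlinarith
  have hD0 : 0 < D := by
    rw [hD, hβ]; positivity
  have hD1 : D < 1 := by
    rw [hD, hβ]
    have h1 : Real.exp (-(v * (α - 2) * (mstar : ℝ) * (tm : ℝ))) ≤ 1 := by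
      rw [Real.exp_le_one_iff]
      have : (0:ℝ) ≤ v * (α - 2) * mstar * tm := by
        apply mul_nonneg (mul_nonneg (mul_nonneg hv (by linarith)) (by positivity)); positivity
      linarith
    have h2 : qm ^ (2 * mstar) ≤ qm ^ 1 := pow_le_pow_of_le_one hqm0.le hqm1.le (by omega)
    have h3 : qb ^ u ≤ qb ^ 1 := pow_le_pow_of_le_one hqb0.le hqb1.le (by omega)
    simp only [pow_one] at h2 h3
    have hqm2 : 0 < qm ^ (2 * mstar) := by positivity
    have hqb2 : 0 < qb ^ u := by positivity
    have hXle : qm ^ (2 * mstar) * qb ^ u ≤ qm * qb := mul_le_mul h2 h3 hqb2.le hqm0.le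
    have hX : qm ^ (2 * mstar) * qb ^ u < 1 := by nlinarith
    calc Real.exp (-(v * (α - 2) * (mstar : ℝ) * (tm : ℝ))) * (qm ^ (2 * mstar) * qb ^ u)
        ≤ 1 * (qm ^ (2 * mstar) * qb ^ u) :=
          mul_le_mul_of_nonneg_right h1 (by positivity)
      _ = qm ^ (2 * mstar) * qb ^ u := one_mul _
      _ < 1 := hX
  -- the reindexed function
  set f : ℕ → ℝ := fun j => if j ≤ N then ds ^ j else 0 with hf
  set gk : ℕ → ℝ := fun k => δ * D ^ (k + 1) with hgk
  have hδ0 : 0 < δ := by rw [hδ]; positivity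
  have hFe : ∀ jk : ℕ × ℕ, F (e jk) = f jk.1 * gk jk.2 := by
    rintro ⟨j, k⟩
    obtain ⟨m, hM⟩ : ∃ m, (k + 1) * mstar = m + 1 :=
      ⟨(k + 1) * mstar - 1, by have : 0 < (k + 1) * mstar := Nat.mul_pos (by omega) hw1; omega⟩
    obtain ⟨l, hL⟩ : ∃ l, (k + 1) * u = l + 1 :=
      ⟨(k + 1) * u - 1, by have : 0 < (k + 1) * u := Nat.mul_pos (by omega) hu1; omega⟩
    have c1 : (k + 1) * mstar + j - 1 = m + j := by omega
    have c2 : (k + 1) * mstar - 1 = m := by omega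
    have c3 : (k + 1) * u - 1 = l := by omega
    simp only [he, hF, c1, c2, c3]
    have hcond1 : (m + 1) * tm = (l + 1) * tb := by
      calc (m + 1) * tm = (k + 1) * mstar * tm := by rw [hM]
        _ = (k + 1) * (mstar * tm) := by ring
        _ = (k + 1) * (u * tb) := by rw [hwu]
        _ = (k + 1) * u * tb := by ring
        _ = (l + 1) * tb := by rw [hL]
    have hsub : (m + j + 1) - (m + 1) = j := by omega
    by_cases hj : j ≤ N
    · rw [if_pos]
      swap
      · exact ⟨hcond1, by omega, by rw [hsub]; rw [hN] at hj; exact (Nat.le_div_iff_mul_le htm).mp hj⟩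
      rw [mul_one]
      simp only [hf, hgk, if_pos hj]
      -- the real identity
      have hMc : ((k:ℝ) + 1) * (mstar : ℝ) = (m : ℝ) + 1 := by exact_mod_cast hM
      have e1 : Real.exp (-(v * ((α - 1) * (((m + j + 1) * tm : ℕ) : ℝ) - (((m + 1) * tm : ℕ) : ℝ))))
          = Real.exp (-(v * (α - 1) * (tm : ℝ))) ^ j
            * Real.exp (-(v * (α - 2) * (mstar : ℝ) * (tm : ℝ))) ^ (k + 1) := by
        rw [← Real.exp_nat_mul, ← Real.exp_nat_mul, ← Real.exp_add]
        congr 1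
        push_cast
        linear_combination (v * (α - 2) * (tm : ℝ)) * hMc
      have e2 : D ^ (k + 1) = Real.exp (-(v * (α - 2) * (mstar : ℝ) * (tm : ℝ))) ^ (k + 1)
          * (qm ^ (2 * m + 2) * qb ^ (l + 1)) := by
        rw [hD, hβ, mul_pow, mul_pow, ← pow_mul, ← pow_mul]
        have g1 : 2 * mstar * (k + 1) = 2 * m + 2 := by
          calc 2 * mstar * (k + 1) = 2 * ((k + 1) * mstar) := by ring
            _ = 2 * (m + 1) := by rw [hM]
            _ = 2 * m + 2 := by ring
        have g2 : u * (k + 1) = l + 1 := by rw [mul_comm]; exact hL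
        rw [g1, g2, mul_assoc]
      rw [e1, hds, hδ, e2, mul_pow]
      have hqmne : qm ≠ 0 := ne_of_gt hqm0
      have hqbne : qb ≠ 0 := ne_of_gt hqb0
      field_simp
      ring
    · rw [if_neg, mul_zero]
      swap
      · rintro ⟨-, -, h3⟩
        rw [hsub] at h3
        exact hj (by rw [hN]; exact (Nat.le_div_iff_mul_le htm).mpr h3)
      simp only [hf, if_neg hj, zero_mul]
  -- summability of the reindexed function
  have hfs : Summable f := by
    apply summable_of_ne_finset_zero (s := Finset.range (N + 1))
    intro j hj
    simp only [Finset.mem_range] at hj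
    simp only [hf, if_neg (by omega : ¬ j ≤ N)]
  have hgeo : Summable fun k : ℕ => D ^ k := summable_geometric_of_lt_one hD0.le hD1
  have hgs : Summable gk := by
    have : Summable fun k : ℕ => δ * D * D ^ k := (hgeo.mul_left (δ * D))
    apply this.congr
    intro k
    simp only [hgk, pow_succ]
    ring
  have hf0 : 0 ≤ f := by
    intro j
    by_cases h : j ≤ N
    · simp only [hf, Pi.zero_apply, if_pos h]; positivity
    · simp only [hf, Pi.zero_apply, if_neg h]; exact le_rfl
  have hg0' : 0 ≤ gk := by
    intro k; simp only [hgk, Pi.zero_apply]; positivity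
  have hG : Summable fun jk : ℕ × ℕ => f jk.1 * gk jk.2 :=
    hfs.mul_of_nonneg hgs hf0 hg0'
  have hFeS : Summable (F ∘ e) := hG.congr fun jk => (hFe jk).symm
  have hsumF : Summable F := (hi.summable_iff hzero).mp hFeS
  have hsupp : Function.support F ⊆ Set.range e := by
    intro p hp
    by_contra hc
    exact hp (hzero p hc)
  have htsum : ∑' p, F p = (∑' j, f j) * (∑' k, gk k) := by
    rw [← hi.tsum_eq hsupp]
    rw [show (fun jk : ℕ × ℕ => F (e jk)) = fun jk => f jk.1 * gk jk.2 from funext hFe]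
    rw [Summable.tsum_prod hG]
    simp_rw [tsum_mul_left, tsum_mul_right]
  have htf : ∑' j, f j = (1 - ds ^ (N + 1)) / (1 - ds) := by
    rw [tsum_eq_sum (s := Finset.range (N + 1))
      (by intro j hj; simp only [Finset.mem_range] at hj; simp only [hf, if_neg (by omega : ¬ j ≤ N)])]
    have : ∀ j ∈ Finset.range (N + 1), f j = ds ^ j := by
      intro j hj; simp only [Finset.mem_range] at hj
      simp only [hf, if_pos (by omega : j ≤ N)]
    rw [Finset.sum_congr rfl this, geom_sum_eq (by linarith : ds ≠ 1)]
    have h1 : ds - 1 ≠ 0 := by intro h; exact absurd (by linarith : ds = 1) (by linarith)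
    have h2 : (1:ℝ) - ds ≠ 0 := by intro h; nlinarith [h]
    field_simp
    ring
  have htg : ∑' k, gk k = δ * D / (1 - D) := by
    have step : ∑' k, gk k = ∑' k : ℕ, δ * D * D ^ k := by
      apply tsum_congr; intro k; simp only [hgk, pow_succ]; ring
    rw [step, tsum_mul_left, tsum_geometric_of_lt_one hD0.le hD1]
    field_simp
  refine ⟨hsumF, ?_⟩
  rw [htsum, htf, htg]
  have hD1' : (1:ℝ) - D ≠ 0 := by intro h; nlinarith
  have hds1' : (1:ℝ) - ds ≠ 0 := by intro h; nlinarith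
  field_simp
end

section
/- Let p_m, p_b ∈ (0,1), let t_m, t_b be positive integers, and let v ≥ 0 and α ≥ 2 be reals. With q_m, q_b, g, m*, δ, β as in the context, and setting D := e^{−v·(α−2)·m*·t_m}·β, the triple series ∑_{m_1,m_2,m_b ≥ 1} e^{−v·(α−2)·m_1·t_m}·p_m²·p_b·q_m^{m_1+m_2−2}·q_b^{m_b−1}·1[m_1 = m_2 and m_1·t_m = m_b·t_b] converges and equals δ·D/(1 − D). -/
/-- Let `p_m, p_b ∈ (0,1)`, `t_m, t_b` positive integers, and `v ≥ 0`,
`α ≥ 2` reals.  With `q_m := 1 − p_m`, `q_b := 1 − p_b`, `g := gcd(t_m,t_b)`, `m* := t_b/g`,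
`δ := p_m²·p_b/(q_m²·q_b)`, `β := q_m^{2m*}·q_b^{t_m/g}` and `D := e^{−v(α−2)·m*·t_m}·β`,
the triple series
`∑_{m₁,m₂,m_b ≥ 1} e^{−v(α−2)m₁t_m}·p_m²·p_b·q_m^{m₁+m₂−2}·q_b^{m_b−1}·
  1[m₁ = m₂ ∧ m₁·t_m = m_b·t_b]`
(indexed by `(a,b,c) ∈ ℕ³` with `m₁ = a+1`, `m₂ = b+1`, `m_b = c+1`) converges and equals
`δ·D/(1 − D)`. -/
theorem stmt15 (pm pb : ℝ) (hpm0 : 0 < pm) (hpm1 : pm < 1) (hpb0 : 0 < pb) (hpb1 : pb < 1)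
    (tm tb : ℕ) (htm : 0 < tm) (htb : 0 < tb)
    (v α : ℝ) (hv : 0 ≤ v) (hα : 2 ≤ α)
    (qm qb : ℝ) (hqm : qm = 1 - pm) (hqb : qb = 1 - pb)
    (g mstar : ℕ) (hg : g = Nat.gcd tm tb) (hmstar : mstar = tb / g)
    (δ β : ℝ) (hδ : δ = pm ^ 2 * pb / (qm ^ 2 * qb))
    (hβ : β = qm ^ (2 * mstar) * qb ^ (tm / g))
    (D : ℝ) (hD : D = Real.exp (-(v * (α - 2) * (mstar : ℝ) * (tm : ℝ))) * β) :
    Summable (fun p : ℕ × ℕ × ℕ =>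
      Real.exp (-(v * (α - 2) * (((p.1 + 1) * tm : ℕ) : ℝ)))
        * pm ^ 2 * pb * qm ^ (p.1 + p.2.1) * qb ^ p.2.2
        * (if p.1 + 1 = p.2.1 + 1 ∧ (p.1 + 1) * tm = (p.2.2 + 1) * tb then 1 else 0)) ∧
    ∑' p : ℕ × ℕ × ℕ,
        Real.exp (-(v * (α - 2) * (((p.1 + 1) * tm : ℕ) : ℝ)))
          * pm ^ 2 * pb * qm ^ (p.1 + p.2.1) * qb ^ p.2.2
          * (if p.1 + 1 = p.2.1 + 1 ∧ (p.1 + 1) * tm = (p.2.2 + 1) * tb then 1 else 0)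
      = δ * D / (1 - D) := by
  have hqm0 : 0 < qm := by rw [hqm]; linarith
  have hqm1 : qm < 1 := by rw [hqm]; linarith
  have hqb0 : 0 < qb := by rw [hqb]; linarith
  have hqb1 : qb < 1 := by rw [hqb]; linarith
  set u := tm / g with hu
  have hGpos : 0 < g := by rw [hg]; exact Nat.gcd_pos_of_pos_left _ htm
  have htm2 : g * u = tm := by
    rw [hu, hg]; exact Nat.mul_div_cancel' (Nat.gcd_dvd_left tm tb)
  have htb2 : g * mstar = tb := by
    rw [hmstar, hg]; exact Nat.mul_div_cancel' (Nat.gcd_dvd_right tm tb)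
  have hcop : Nat.Coprime u mstar := by
    rw [hu, hmstar, hg]
    exact Nat.coprime_div_gcd_div_gcd (by rw [← hg]; exact hGpos)
  have hupos : 0 < u := by
    rcases Nat.eq_zero_or_pos u with h | h
    · exfalso; rw [h, Nat.mul_zero] at htm2; omega
    · exact h
  have hmpos : 0 < mstar := by
    rcases Nat.eq_zero_or_pos mstar with h | h
    · exfalso; rw [h, Nat.mul_zero] at htb2; omega
    · exact h
  -- characterize the indicator set
  have key : ∀ a c : ℕ, (a + 1) * tm = (c + 1) * tb ↔
      ∃ k : ℕ, a + 1 = (k + 1) * mstar ∧ c + 1 = (k + 1) * u := by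
    intro a c
    constructor
    · intro h
      have h' : (a + 1) * u = (c + 1) * mstar := by
        apply Nat.eq_of_mul_eq_mul_left hGpos
        calc g * ((a + 1) * u) = (a + 1) * (g * u) := by ring
          _ = (c + 1) * (g * mstar) := by rw [htm2, htb2]; exact h
          _ = g * ((c + 1) * mstar) := by ring
      have hdvd : mstar ∣ (a + 1) * u := ⟨c + 1, by rw [h']; ring⟩
      have hdvd2 : mstar ∣ a + 1 := (Nat.Coprime.symm hcop).dvd_of_dvd_mul_right hdvd
      obtain ⟨k, hk⟩ := hdvd2
      have hkpos : 0 < k := by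
        rcases Nat.eq_zero_or_pos k with h0 | h0
        · exfalso; rw [h0, Nat.mul_zero] at hk; omega
        · exact h0
      refine ⟨k - 1, by rw [Nat.sub_add_cancel hkpos, hk]; ring, ?_⟩
      rw [Nat.sub_add_cancel hkpos]
      apply Nat.eq_of_mul_eq_mul_left hmpos
      calc mstar * (c + 1) = (c + 1) * mstar := by ring
        _ = (a + 1) * u := h'.symm
        _ = (mstar * k) * u := by rw [hk]
        _ = mstar * (k * u) := by ring
    · rintro ⟨k, h1, h2⟩
      calc (a + 1) * tm = (k + 1) * mstar * (g * u) := by rw [h1, htm2]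
        _ = (k + 1) * u * (g * mstar) := by ring
        _ = (c + 1) * tb := by rw [h2, htb2]
  -- injection from ℕ
  set f : ℕ × ℕ × ℕ → ℝ := fun p =>
      Real.exp (-(v * (α - 2) * (((p.1 + 1) * tm : ℕ) : ℝ)))
        * pm ^ 2 * pb * qm ^ (p.1 + p.2.1) * qb ^ p.2.2
        * (if p.1 + 1 = p.2.1 + 1 ∧ (p.1 + 1) * tm = (p.2.2 + 1) * tb then 1 else 0)
    with hf
  set i : ℕ → ℕ × ℕ × ℕ := fun k => ((k + 1) * mstar - 1, (k + 1) * mstar - 1, (k + 1) * u - 1)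
    with hi
  have hMpos : ∀ k : ℕ, 1 ≤ (k + 1) * mstar := fun k => Nat.one_le_iff_ne_zero.2
    (Nat.mul_ne_zero (Nat.succ_ne_zero k) (Nat.pos_iff_ne_zero.1 hmpos))
  have hUpos : ∀ k : ℕ, 1 ≤ (k + 1) * u := fun k => Nat.one_le_iff_ne_zero.2
    (Nat.mul_ne_zero (Nat.succ_ne_zero k) (Nat.pos_iff_ne_zero.1 hupos))
  have hinj : Function.Injective i := by
    intro k k' h
    have h1 : (k + 1) * mstar - 1 = (k' + 1) * mstar - 1 := congrArg (·.1) h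
    have h2 : (k + 1) * mstar - 1 + 1 = (k' + 1) * mstar - 1 + 1 := by rw [h1]
    rw [Nat.sub_add_cancel (hMpos k), Nat.sub_add_cancel (hMpos k')] at h2
    have := Nat.eq_of_mul_eq_mul_right hmpos h2
    omega
  have hsupp : Function.support f ⊆ Set.range i := by
    intro x hx
    rcases x with ⟨a, b, c⟩
    by_contra hxr
    apply hx
    by_cases hcond : a + 1 = b + 1 ∧ (a + 1) * tm = (c + 1) * tb
    · exfalso
      obtain ⟨hab, hac⟩ := hcond
      obtain ⟨k, hk1, hk2⟩ := (key a c).1 hac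
      exact hxr ⟨k, by
        simp only [hi]
        refine Prod.ext ?_ (Prod.ext ?_ ?_) <;> simp <;> omega⟩
    · simp only [hf, if_neg hcond, mul_zero]
  -- value of f on the range
  set E : ℝ := Real.exp (-(v * (α - 2) * (mstar : ℝ) * (tm : ℝ))) with hE
  have hterm : ∀ k : ℕ, f (i k) = (δ * D) * D ^ k := by
    intro k
    have hM := hMpos k
    have hU := hUpos k
    have hcond : ((k + 1) * mstar - 1) + 1 = ((k + 1) * mstar - 1) + 1 ∧
        (((k + 1) * mstar - 1) + 1) * tm = (((k + 1) * u - 1) + 1) * tb := by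
      refine ⟨rfl, ?_⟩
      rw [Nat.sub_add_cancel hM, Nat.sub_add_cancel hU]
      calc (k + 1) * mstar * tm = (k + 1) * mstar * (g * u) := by rw [htm2]
        _ = (k + 1) * u * (g * mstar) := by ring
        _ = (k + 1) * u * tb := by rw [htb2]
    have hexp : Real.exp (-(v * (α - 2) * (((((k + 1) * mstar - 1) + 1) * tm : ℕ) : ℝ)))
        = E ^ (k + 1) := by
      rw [hE, ← Real.exp_nat_mul]
      congr 1
      rw [Nat.sub_add_cancel hM]
      push_cast
      ring
    have hqmpow : qm ^ (2 * mstar * (k + 1)) =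
        qm ^ (((k + 1) * mstar - 1) + ((k + 1) * mstar - 1)) * qm ^ 2 := by
      rw [← pow_add]
      congr 1
      have : 2 * mstar * (k + 1) = 2 * ((k + 1) * mstar) := by ring
      omega
    have hqbpow : qb ^ (u * (k + 1)) = qb ^ ((k + 1) * u - 1) * qb ^ 1 := by
      rw [← pow_add]
      congr 1
      have : u * (k + 1) = (k + 1) * u := by ring
      omega
    have hDpow : D ^ (k + 1) = E ^ (k + 1) *
        (qm ^ (((k + 1) * mstar - 1) + ((k + 1) * mstar - 1)) * qm ^ 2)
        * (qb ^ ((k + 1) * u - 1) * qb ^ 1) := by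
      rw [hD, hβ, mul_pow, mul_pow, ← pow_mul, ← pow_mul, hqmpow, hqbpow]
      ring
    have hcalc : f (i k) = δ * D ^ (k + 1) := by
      simp only [hf, hi]
      rw [if_pos (show True ∧ ((k + 1) * mstar - 1 + 1) * tm = ((k + 1) * u - 1 + 1) * tb from
        ⟨trivial, hcond.2⟩), mul_one, hexp, hDpow, hδ]
      have hqm' : qm ≠ 0 := ne_of_gt hqm0
      have hqb' : qb ≠ 0 := ne_of_gt hqb0
      field_simp
    rw [hcalc, pow_succ']
    ring
  -- bounds on D
  have hE0 : 0 < E := Real.exp_pos _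
  have hE1 : E ≤ 1 := by
    rw [hE, Real.exp_le_one_iff]
    have h1 : (0 : ℝ) ≤ v * (α - 2) := mul_nonneg hv (by linarith)
    have h2 : (0 : ℝ) ≤ (mstar : ℝ) * (tm : ℝ) := by positivity
    nlinarith
  have hβ0 : 0 < β := by
    rw [hβ]; positivity
  have hβ1 : β < 1 := by
    rw [hβ]
    have h1 : qm ^ (2 * mstar) < 1 :=
      pow_lt_one₀ (le_of_lt hqm0) hqm1 (by omega)
    have h2 : qb ^ (tm / g) ≤ 1 :=
      pow_le_one₀ (le_of_lt hqb0) (le_of_lt hqb1)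
    have h3 : 0 < qb ^ (tm / g) := by positivity
    nlinarith
  have hD0 : 0 < D := by rw [hD]; exact mul_pos hE0 hβ0
  have hD1 : D < 1 := by
    rw [hD]
    nlinarith
  -- geometric summation
  have hgeo : Summable (fun k : ℕ => (δ * D) * D ^ k) :=
    (summable_geometric_of_lt_one (le_of_lt hD0) hD1).mul_left _
  have hcomp : Summable (f ∘ i) := by
    apply hgeo.congr
    intro k
    exact (hterm k).symm
  have hsum : Summable f := by
    rw [← hinj.summable_iff (fun x hx => Function.notMem_support.mp (fun hs => hx (hsupp hs)))]
    exact hcomp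
  refine ⟨hsum, ?_⟩
  have htsum : ∑' x, f x = ∑' k : ℕ, f (i k) := (hinj.tsum_eq hsupp).symm
  rw [htsum]
  calc ∑' k : ℕ, f (i k) = ∑' k : ℕ, (δ * D) * D ^ k := by
        exact tsum_congr hterm
    _ = (δ * D) * ∑' k : ℕ, D ^ k := tsum_mul_left
    _ = (δ * D) * (1 - D)⁻¹ := by
        rw [tsum_geometric_of_lt_one (le_of_lt hD0) hD1]
    _ = δ * D / (1 - D) := by rw [div_eq_mul_inv]
end
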